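/- arXiv:2302.02311 — 6 statements merged into one kernel-verified Lean document; each statement's English description precedes it below -/
import Mathlib

section
/- Let T be a finite tree on n vertices and let 2 ≤ k ≤ n. A vertex v of T belongs to the set M_k(T) of Steiner k-centroids if and only if v is k-satisfactory. -/
open SimpleGraph Finset

set_option linter.unusedSectionVars false

/-- The Steiner distance of a finite set `S` of vertices in `G`: the number of edges of the
smallest connected subgraph of `G` containing `S`. -/
noncomputable def steinerDist {V : Type*} [Fintype V] [DecidableEq V]
    (G : SimpleGraph V) (S : Finset V) : ℕ :=
  sInf {m : ℕ | ∃ W : Finset V, S ⊆ W ∧ (G.induce (W : Set V)).Connected ∧ W.card = m + 1}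

/-- The Steiner `k`-distance of a vertex `v`. -/
noncomputable def steinerKDist {V : Type*} [Fintype V] [DecidableEq V]
    (G : SimpleGraph V) (k : ℕ) (v : V) : ℕ :=
  ∑ S ∈ (Finset.powersetCard (k - 1) (Finset.univ : Finset V)).filter (fun S => v ∉ S),
    steinerDist G (insert v S)

/-- The set of Steiner `k`-centroids: vertices minimizing the Steiner `k`-distance. -/
noncomputable def steinerKMedian {V : Type*} [Fintype V] [DecidableEq V]
    (G : SimpleGraph V) (k : ℕ) : Set V :=
  {u : V | ∀ w : V, steinerKDist G k u ≤ steinerKDist G k w}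

/-- `nNear G x y` is the number of vertices `u` with `d(u, x) < d(u, y)`. -/
noncomputable def nNear {V : Type*} (G : SimpleGraph V) (x y : V) : ℕ :=
  {u : V | G.dist u x < G.dist u y}.ncard

/-- A vertex `u` is `k`-satisfactory if for every vertex `v` adjacent to `u`:
either `n_uv(u) ≥ n_uv(v)`, or both `n_uv(u) < k` and `n_uv(v) < k`; and moreover,
if `v` is not a Steiner `k`-centroid, then `n_uv(u) > n_uv(v)` and `n_uv(u) ≥ k`. -/
noncomputable def kSatisfactory {V : Type*} [Fintype V] [DecidableEq V]
    (G : SimpleGraph V) (k : ℕ) (u : V) : Prop :=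
  ∀ v : V, G.Adj u v →
    (nNear G u v ≥ nNear G v u ∨ (nNear G u v < k ∧ nNear G v u < k)) ∧
    (v ∉ steinerKMedian G k → nNear G u v > nNear G v u ∧ k ≤ nNear G u v)

namespace SteinerPf

variable {V : Type*} [Fintype V] [DecidableEq V] {G : SimpleGraph V}

/-- The unique path between two vertices of a tree. -/
noncomputable def tp (hT : G.IsTree) (u v : V) : G.Walk u v :=
  ((hT.isConnected.preconnected u v).some).bypass

lemma tp_isPath (hT : G.IsTree) (u v : V) : (tp hT u v).IsPath :=
  SimpleGraph.Walk.bypass_isPath _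

lemma eq_tp (hT : G.IsTree) {u v : V} (p : G.Walk u v) (hp : p.IsPath) : p = tp hT u v := by
  have h := hT.IsAcyclic.path_unique ⟨p, hp⟩ ⟨tp hT u v, tp_isPath hT u v⟩
  exact congrArg Subtype.val h

lemma tp_length (hT : G.IsTree) (u v : V) : (tp hT u v).length = G.dist u v := by
  refine le_antisymm ?_ (SimpleGraph.dist_le _)
  obtain ⟨p, hp⟩ := (hT.isConnected.preconnected u v).exists_walk_length_eq_dist
  calc (tp hT u v).length = p.bypass.length := by
        rw [eq_tp hT p.bypass (SimpleGraph.Walk.bypass_isPath p)]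
    _ ≤ p.length := SimpleGraph.Walk.length_bypass_le p
    _ = G.dist u v := hp

lemma dist_split (hT : G.IsTree) {u v x : V} (hx : x ∈ (tp hT u v).support) :
    G.dist u v = G.dist u x + G.dist x v := by
  have hspec := ((tp hT u v).take_spec hx).symm
  have h1 : ((tp hT u v).takeUntil x hx) = tp hT u x :=
    eq_tp hT _ ((tp_isPath hT u v).takeUntil hx)
  have h2 : ((tp hT u v).dropUntil x hx) = tp hT x v :=
    eq_tp hT _ ((tp_isPath hT u v).dropUntil hx)
  have := congrArg SimpleGraph.Walk.length hspec
  rw [SimpleGraph.Walk.length_append, h1, h2, tp_length, tp_length, tp_length] at this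
  omega

lemma adj_dist_one {u v : V} (huv : G.Adj u v) : G.dist u v = 1 :=
  (SimpleGraph.dist_eq_one_iff_adj).2 huv

/-- The fundamental dichotomy for an edge `uv` of a tree. -/
lemma side_dichotomy (hT : G.IsTree) {u v : V} (huv : G.Adj u v) (r : V) :
    (G.dist r u < G.dist r v ∧ tp hT v r = SimpleGraph.Walk.cons huv.symm (tp hT u r)) ∨
    (G.dist r v < G.dist r u ∧ tp hT u r = SimpleGraph.Walk.cons huv (tp hT v r)) := by
  by_cases h : u ∈ (tp hT v r).support
  · left
    have hd := dist_split hT h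
    have heq : tp hT v r = SimpleGraph.Walk.cons huv.symm (tp hT u r) := by
      have hspec := ((tp hT v r).take_spec h).symm
      have h1 : ((tp hT v r).takeUntil u h) = tp hT v u :=
        eq_tp hT _ ((tp_isPath hT v r).takeUntil h)
      have h2 : ((tp hT v r).dropUntil u h) = tp hT u r :=
        eq_tp hT _ ((tp_isPath hT v r).dropUntil h)
      have h3 : tp hT v u = SimpleGraph.Walk.cons huv.symm SimpleGraph.Walk.nil := by
        refine (eq_tp hT _ ?_).symm
        simp [SimpleGraph.Walk.cons_isPath_iff, huv.ne']
      rw [h1, h2, h3] at hspec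
      simpa using hspec
    refine ⟨?_, heq⟩
    rw [adj_dist_one huv.symm] at hd
    rw [show G.dist r u = G.dist u r from SimpleGraph.dist_comm,
      show G.dist r v = G.dist v r from SimpleGraph.dist_comm]
    omega
  · right
    have heq : tp hT u r = SimpleGraph.Walk.cons huv (tp hT v r) := by
      refine (eq_tp hT _ ?_).symm
      exact (tp_isPath hT v r).cons h
    have hlen := congrArg SimpleGraph.Walk.length heq
    rw [tp_length, SimpleGraph.Walk.length_cons, tp_length] at hlen
    refine ⟨?_, heq⟩
    rw [show G.dist r u = G.dist u r from SimpleGraph.dist_comm,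
      show G.dist r v = G.dist v r from SimpleGraph.dist_comm]
    omega

lemma dist_ne (hT : G.IsTree) {u v : V} (huv : G.Adj u v) (r : V) :
    G.dist r u ≠ G.dist r v := by
  rcases side_dichotomy hT huv r with ⟨h, _⟩ | ⟨h, _⟩ <;> omega

lemma closer_cons (hT : G.IsTree) {u v : V} (huv : G.Adj u v) {r : V}
    (h : G.dist r u < G.dist r v) :
    tp hT v r = SimpleGraph.Walk.cons huv.symm (tp hT u r) := by
  rcases side_dichotomy hT huv r with ⟨_, h2⟩ | ⟨h1, _⟩
  · exact h2
  · omega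

lemma closer_not_mem (hT : G.IsTree) {u v : V} (huv : G.Adj u v) {r : V}
    (h : G.dist r u < G.dist r v) : v ∉ (tp hT u r).support := by
  intro hv
  have hd := dist_split hT hv
  rw [adj_dist_one huv] at hd
  rw [show G.dist r u = G.dist u r from SimpleGraph.dist_comm,
      show G.dist r v = G.dist v r from SimpleGraph.dist_comm] at h
  omega

/-- The vertex set of the Steiner tree of `insert u R` in a tree. -/
noncomputable def stW (hT : G.IsTree) (u : V) (R : Finset V) : Finset V :=
  insert u (R.biUnion fun r => (tp hT u r).support.toFinset)

lemma mem_stW {hT : G.IsTree} {u x : V} {R : Finset V} :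
    x ∈ stW hT u R ↔ x = u ∨ ∃ r ∈ R, x ∈ (tp hT u r).support := by
  simp [stW]

lemma u_mem_stW (hT : G.IsTree) (u : V) (R : Finset V) : u ∈ stW hT u R :=
  mem_stW.2 (Or.inl rfl)

lemma subset_stW (hT : G.IsTree) (u : V) (R : Finset V) : insert u R ⊆ stW hT u R := by
  intro x hx
  rcases Finset.mem_insert.1 hx with rfl | hx
  · exact u_mem_stW hT _ _
  · exact mem_stW.2 (Or.inr ⟨x, hx, SimpleGraph.Walk.end_mem_support _⟩)

lemma induce_reachable_of_walk {s : Set V} : ∀ {x y : V} (w : G.Walk x y)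
    (_ : ∀ z ∈ w.support, z ∈ s) (hx : x ∈ s) (hy : y ∈ s),
    (G.induce s).Reachable ⟨x, hx⟩ ⟨y, hy⟩ := by
  intro x y w
  induction w with
  | nil => intro _ hx hy; rfl
  | @cons a b c h p ih =>
    intro hw hx hy
    have hb : b ∈ s := hw b (by simp)
    have h1 : (G.induce s).Adj ⟨a, hx⟩ ⟨b, hb⟩ := h
    exact h1.reachable.trans (ih (fun z hz => hw z (by simp [hz])) hb hy)

lemma stW_connected (hT : G.IsTree) (u : V) (R : Finset V) :
    (G.induce ((stW hT u R : Finset V) : Set V)).Connected := by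
  rw [SimpleGraph.connected_iff]
  have hu : u ∈ ((stW hT u R : Finset V) : Set V) := by
    simpa using u_mem_stW hT u R
  constructor
  · intro ⟨x, hx⟩ ⟨y, hy⟩
    have key : ∀ (z : V) (hz : z ∈ ((stW hT u R : Finset V) : Set V)),
        (G.induce ((stW hT u R : Finset V) : Set V)).Reachable ⟨u, hu⟩ ⟨z, hz⟩ := by
      intro z hz
      rcases mem_stW.1 (by simpa using hz) with rfl | ⟨r, hr, hzr⟩
      · rfl
      · refine induce_reachable_of_walk ((tp hT u r).takeUntil z hzr) ?_ hu hz
        intro w hw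
        have : w ∈ (tp hT u r).support :=
          SimpleGraph.Walk.support_takeUntil_subset _ hzr hw
        simp only [Finset.coe_insert, Set.mem_insert_iff, Finset.mem_coe]
        exact_mod_cast (mem_stW.2 (Or.inr ⟨r, hr, this⟩))
    exact ((key x hx).symm).trans (key y hy)
  · exact ⟨⟨u, hu⟩⟩

/-- The inclusion homomorphism from an induced subgraph. -/
def inclHom (s : Set V) : G.induce s →g G where
  toFun := Subtype.val
  map_rel' := fun h => h

lemma tp_support_subset_of_connected (hT : G.IsTree) {s : Set V}
    (hc : (G.induce s).Connected) {x y : V} (hx : x ∈ s) (hy : y ∈ s) :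
    ∀ z ∈ (tp hT x y).support, z ∈ s := by
  obtain ⟨w⟩ := hc.preconnected ⟨x, hx⟩ ⟨y, hy⟩
  have hw : ∀ z ∈ (w.map (inclHom s)).support, z ∈ s := by
    intro z hz
    rw [SimpleGraph.Walk.support_map] at hz
    obtain ⟨⟨z', hz'⟩, _, rfl⟩ := List.mem_map.1 hz
    exact hz'
  intro z hz
  have heq : (w.map (inclHom s)).bypass = tp hT x y :=
    eq_tp hT _ (SimpleGraph.Walk.bypass_isPath _)
  rw [← heq] at hz
  exact hw z (SimpleGraph.Walk.support_bypass_subset _ hz)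

lemma stW_minimal (hT : G.IsTree) {u : V} {R W : Finset V}
    (hW : insert u R ⊆ W) (hc : (G.induce ((W : Finset V) : Set V)).Connected) :
    stW hT u R ⊆ W := by
  intro x hx
  rcases mem_stW.1 hx with rfl | ⟨r, hr, hxr⟩
  · exact hW (Finset.mem_insert_self _ _)
  · have hu : u ∈ ((W : Finset V) : Set V) := by
      simpa using hW (Finset.mem_insert_self u R)
    have hrW : r ∈ ((W : Finset V) : Set V) := by
      simpa using hW (Finset.mem_insert_of_mem hr)
    have := tp_support_subset_of_connected hT hc hu hrW x hxr
    simpa using this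

lemma steinerDist_stW (hT : G.IsTree) (u : V) (R : Finset V) :
    steinerDist G (insert u R) + 1 = (stW hT u R).card := by
  have h1 : 1 ≤ (stW hT u R).card :=
    Finset.card_pos.2 ⟨u, u_mem_stW hT u R⟩
  have hmem : (stW hT u R).card - 1 ∈
      {m : ℕ | ∃ W : Finset V, insert u R ⊆ W ∧ (G.induce (W : Set V)).Connected ∧
        W.card = m + 1} :=
    ⟨stW hT u R, subset_stW hT u R, stW_connected hT u R, by omega⟩
  have hle : steinerDist G (insert u R) ≤ (stW hT u R).card - 1 := Nat.sInf_le hmem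
  have hge : (stW hT u R).card - 1 ≤ steinerDist G (insert u R) := by
    refine le_csInf ⟨_, hmem⟩ ?_
    rintro m ⟨W, hSW, hcW, hcard⟩
    have := Finset.card_le_card (stW_minimal hT hSW hcW)
    omega
  unfold steinerDist at hle hge ⊢
  omega

lemma closer_support_cons (hT : G.IsTree) {u v : V} (huv : G.Adj u v) {r : V}
    (h : G.dist r u < G.dist r v) :
    (tp hT v r).support = v :: (tp hT u r).support := by
  rw [closer_cons hT huv h, SimpleGraph.Walk.support_cons]

lemma stW_subset_of_exists (hT : G.IsTree) {u v : V} (huv : G.Adj u v) {R : Finset V}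
    (h1 : ∃ r ∈ R, G.dist r u < G.dist r v) :
    stW hT u R ⊆ stW hT v R := by
  obtain ⟨r1, hr1, hc1⟩ := h1
  have humem : u ∈ stW hT v R := by
    refine mem_stW.2 (Or.inr ⟨r1, hr1, ?_⟩)
    rw [closer_support_cons hT huv hc1]
    exact List.mem_cons_of_mem _ ((tp hT u r1).start_mem_support)
  intro x hx
  rcases mem_stW.1 hx with rfl | ⟨r, hr, hxr⟩
  · exact humem
  · rcases lt_or_gt_of_ne (dist_ne hT huv r) with hc | hc
    · refine mem_stW.2 (Or.inr ⟨r, hr, ?_⟩)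
      rw [closer_support_cons hT huv hc]
      exact List.mem_cons_of_mem _ hxr
    · have : tp hT u r = SimpleGraph.Walk.cons huv (tp hT v r) :=
        closer_cons hT huv.symm hc
      rw [this, SimpleGraph.Walk.support_cons] at hxr
      rcases List.mem_cons.1 hxr with rfl | hxr
      · exact humem
      · exact mem_stW.2 (Or.inr ⟨r, hr, hxr⟩)

lemma stW_mixed (hT : G.IsTree) {u v : V} (huv : G.Adj u v) {R : Finset V}
    (h1 : ∃ r ∈ R, G.dist r u < G.dist r v) (h2 : ∃ r ∈ R, G.dist r v < G.dist r u) :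
    stW hT u R = stW hT v R :=
  Finset.Subset.antisymm (stW_subset_of_exists hT huv h1)
    (stW_subset_of_exists hT huv.symm h2)

lemma stW_all_closer (hT : G.IsTree) {u v : V} (huv : G.Adj u v) {R : Finset V}
    (hne : R.Nonempty) (h : ∀ r ∈ R, G.dist r u < G.dist r v) :
    stW hT v R = insert v (stW hT u R) ∧ v ∉ stW hT u R := by
  constructor
  · refine Finset.Subset.antisymm ?_ ?_
    · intro x hx
      rcases mem_stW.1 hx with rfl | ⟨r, hr, hxr⟩
      · exact Finset.mem_insert_self _ _
      · rw [closer_support_cons hT huv (h r hr)] at hxr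
        rcases List.mem_cons.1 hxr with rfl | hxr
        · exact Finset.mem_insert_self _ _
        · exact Finset.mem_insert_of_mem (mem_stW.2 (Or.inr ⟨r, hr, hxr⟩))
    · rw [Finset.insert_subset_iff]
      refine ⟨u_mem_stW hT v R, ?_⟩
      obtain ⟨r1, hr1⟩ := hne
      exact stW_subset_of_exists hT huv ⟨r1, hr1, h r1 hr1⟩
  · intro hv
    rcases mem_stW.1 hv with rfl | ⟨r, hr, hvr⟩
    · exact G.loopless.irrefl _ huv
    · exact closer_not_mem hT huv (h r hr) hvr

lemma sd_all_closer (hT : G.IsTree) {u v : V} (huv : G.Adj u v) {R : Finset V}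
    (hne : R.Nonempty) (h : ∀ r ∈ R, G.dist r u < G.dist r v) :
    steinerDist G (insert v R) = steinerDist G (insert u R) + 1 := by
  obtain ⟨heq, hnm⟩ := stW_all_closer hT huv hne h
  have h1 := steinerDist_stW hT u R
  have h2 := steinerDist_stW hT v R
  rw [heq, Finset.card_insert_of_notMem hnm] at h2
  omega

lemma sd_mixed (hT : G.IsTree) {u v : V} (huv : G.Adj u v) {R : Finset V}
    (h1 : ∃ r ∈ R, G.dist r u < G.dist r v) (h2 : ∃ r ∈ R, G.dist r v < G.dist r u) :
    steinerDist G (insert u R) = steinerDist G (insert v R) := by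
  have e1 := steinerDist_stW hT u R
  have e2 := steinerDist_stW hT v R
  rw [stW_mixed hT huv h1 h2] at e1
  omega

section NNear

lemma nNear_card (u v : V) :
    nNear G u v = (Finset.univ.filter fun r => G.dist r u < G.dist r v).card := by
  classical
  have h : {w : V | G.dist w u < G.dist w v} =
      ↑(Finset.univ.filter fun r => G.dist r u < G.dist r v) := by
    ext r; simp
  rw [nNear, h, Set.ncard_coe_finset]

lemma nNear_add (hT : G.IsTree) {u v : V} (huv : G.Adj u v) :
    nNear G u v + nNear G v u = Fintype.card V := by
  classical
  rw [nNear_card, nNear_card]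
  have h : (Finset.univ.filter fun r => G.dist r v < G.dist r u) =
      Finset.univ.filter (fun r => ¬ (G.dist r u < G.dist r v)) := by
    ext r
    have := dist_ne hT huv r
    simp only [Finset.mem_filter, Finset.mem_univ, true_and]
    omega
  rw [h, Finset.card_filter_add_card_filter_not, Finset.card_univ]

lemma self_mem_near {u v : V} (huv : G.Adj u v) :
    u ∈ Finset.univ.filter fun r => G.dist r u < G.dist r v := by
  classical
  simp [SimpleGraph.dist_self, adj_dist_one huv]

lemma one_le_nNear {u v : V} (huv : G.Adj u v) : 1 ≤ nNear G u v := by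
  rw [nNear_card]
  exact Finset.card_pos.2 ⟨u, self_mem_near huv⟩

end NNear

lemma edge_formula (hT : G.IsTree) {u v : V} (huv : G.Adj u v) {k : ℕ} (hk : 2 ≤ k) :
    (steinerKDist G k v : ℤ) - steinerKDist G k u =
      (Nat.choose (nNear G u v - 1) (k - 1) : ℤ) -
        Nat.choose (nNear G v u - 1) (k - 1) := by
  classical
  set t := k - 1 with htdef
  have ht : 1 ≤ t := by omega
  set P := Finset.powersetCard t (Finset.univ : Finset V) with hP
  -- split the sums
  have hsplit : ∀ w z : V, (steinerKDist G k w : ℤ) =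
      (∑ S ∈ P.filter (fun S => w ∉ S ∧ z ∈ S), (steinerDist G (insert w S) : ℤ)) +
      ∑ S ∈ P.filter (fun S => w ∉ S ∧ z ∉ S), (steinerDist G (insert w S) : ℤ) := by
    intro w z
    rw [steinerKDist]
    push_cast
    rw [← Finset.sum_filter_add_sum_filter_not (P.filter (fun S => w ∉ S)) (fun S => z ∈ S)]
    rw [Finset.filter_filter, Finset.filter_filter]
  rw [hsplit v u, hsplit u v]
  -- cancellation of the mixed terms
  have hcancel :
      (∑ S ∈ P.filter (fun S => v ∉ S ∧ u ∈ S), (steinerDist G (insert v S) : ℤ)) =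
      ∑ S ∈ P.filter (fun S => u ∉ S ∧ v ∈ S), (steinerDist G (insert u S) : ℤ) := by
    refine Finset.sum_nbij' (fun S => insert v (S.erase u)) (fun S => insert u (S.erase v))
      ?_ ?_ ?_ ?_ ?_
    · intro S hS
      simp only [hP, Finset.mem_filter, Finset.mem_powersetCard] at hS ⊢
      obtain ⟨⟨_, hcard⟩, hvS, huS⟩ := hS
      have hv' : v ∉ S.erase u := fun h => hvS (Finset.mem_of_mem_erase h)
      refine ⟨⟨Finset.subset_univ _, ?_⟩, ?_, Finset.mem_insert_self _ _⟩
      · rw [Finset.card_insert_of_notMem hv', Finset.card_erase_of_mem huS]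
        omega
      · simp only [Finset.mem_insert]
        push_neg
        exact ⟨huv.ne, fun h => (Finset.notMem_erase u S) h⟩
    · intro S hS
      simp only [hP, Finset.mem_filter, Finset.mem_powersetCard] at hS ⊢
      obtain ⟨⟨_, hcard⟩, huS, hvS⟩ := hS
      have hu' : u ∉ S.erase v := fun h => huS (Finset.mem_of_mem_erase h)
      refine ⟨⟨Finset.subset_univ _, ?_⟩, ?_, Finset.mem_insert_self _ _⟩
      · rw [Finset.card_insert_of_notMem hu', Finset.card_erase_of_mem hvS]
        omega
      · simp only [Finset.mem_insert]
        push_neg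
        exact ⟨huv.ne', fun h => (Finset.notMem_erase v S) h⟩
    · intro S hS
      simp only [hP, Finset.mem_filter, Finset.mem_powersetCard] at hS
      obtain ⟨_, hvS, huS⟩ := hS
      have hv' : v ∉ S.erase u := fun h => hvS (Finset.mem_of_mem_erase h)
      show insert u ((insert v (S.erase u)).erase v) = S
      rw [Finset.erase_insert hv', Finset.insert_erase huS]
    · intro S hS
      simp only [hP, Finset.mem_filter, Finset.mem_powersetCard] at hS
      obtain ⟨_, huS, hvS⟩ := hS
      have hu' : u ∉ S.erase v := fun h => huS (Finset.mem_of_mem_erase h)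
      show insert v ((insert u (S.erase v)).erase u) = S
      rw [Finset.erase_insert hu', Finset.insert_erase hvS]
    · intro S hS
      simp only [hP, Finset.mem_filter, Finset.mem_powersetCard] at hS
      obtain ⟨_, hvS, huS⟩ := hS
      congr 1
      have : insert v S = insert u (insert v (S.erase u)) := by
        ext x
        simp only [Finset.mem_insert, Finset.mem_erase]
        constructor
        · rintro (rfl | hx)
          · right; left; rfl
          · by_cases hxu : x = u
            · left; exact hxu
            · right; right; exact ⟨hxu, hx⟩
        · rintro (rfl | rfl | ⟨_, hx⟩)
          · right; exact huS
          · left; rfl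
          · right; exact hx
      rw [this]
  rw [hcancel]
  ring_nf
  -- now the difference over sets avoiding both
  have hDval : ∀ S ∈ P.filter (fun S => u ∉ S ∧ v ∉ S),
      (steinerDist G (insert v S) : ℤ) - (steinerDist G (insert u S) : ℤ) =
        (if ∀ r ∈ S, G.dist r u < G.dist r v then (1 : ℤ) else 0) -
        (if ∀ r ∈ S, G.dist r v < G.dist r u then (1 : ℤ) else 0) := by
    intro S hS
    simp only [hP, Finset.mem_filter, Finset.mem_powersetCard] at hS
    obtain ⟨⟨_, hcard⟩, huS, hvS⟩ := hS
    have hne : S.Nonempty := Finset.card_pos.1 (by omega)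
    by_cases hall_u : ∀ r ∈ S, G.dist r u < G.dist r v
    · have hnall_v : ¬ ∀ r ∈ S, G.dist r v < G.dist r u := by
        intro hc
        obtain ⟨r, hr⟩ := hne
        have := hall_u r hr
        have := hc r hr
        omega
      rw [if_pos hall_u, if_neg hnall_v, sd_all_closer hT huv hne hall_u]
      push_cast
      ring
    · by_cases hall_v : ∀ r ∈ S, G.dist r v < G.dist r u
      · rw [if_neg hall_u, if_pos hall_v, sd_all_closer hT huv.symm hne hall_v]
        push_cast
        ring
      · rw [if_neg hall_u, if_neg hall_v]
        push_neg at hall_u hall_v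
        obtain ⟨r1, hr1, hc1⟩ := hall_u
        obtain ⟨r2, hr2, hc2⟩ := hall_v
        have hc1' : G.dist r1 v < G.dist r1 u := by
          have := dist_ne hT huv r1
          omega
        have hc2' : G.dist r2 u < G.dist r2 v := by
          have := dist_ne hT huv r2
          omega
        rw [sd_mixed hT huv ⟨r2, hr2, hc2'⟩ ⟨r1, hr1, hc1'⟩]
        ring
  have hDcomm : P.filter (fun S => v ∉ S ∧ u ∉ S) = P.filter (fun S => u ∉ S ∧ v ∉ S) := by
    apply Finset.filter_congr
    intro S _
    exact and_comm
  rw [hDcomm]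
  have hA : P.filter (fun S => (u ∉ S ∧ v ∉ S) ∧ ∀ r ∈ S, G.dist r u < G.dist r v)
      = Finset.powersetCard t ((Finset.univ.filter fun r => G.dist r u < G.dist r v).erase u) := by
    ext S
    simp only [hP, Finset.mem_filter, Finset.mem_powersetCard]
    constructor
    · rintro ⟨⟨_, hcard⟩, ⟨huS, hvS⟩, hall⟩
      refine ⟨?_, hcard⟩
      intro r hr
      rw [Finset.mem_erase, Finset.mem_filter]
      exact ⟨fun h => huS (h ▸ hr), Finset.mem_univ r, hall r hr⟩
    · rintro ⟨hsub, hcard⟩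
      have hmem : ∀ r ∈ S, r ≠ u ∧ G.dist r u < G.dist r v := by
        intro r hr
        have := hsub hr
        rw [Finset.mem_erase, Finset.mem_filter] at this
        exact ⟨this.1, this.2.2⟩
      refine ⟨⟨Finset.subset_univ _, hcard⟩, ⟨?_, ?_⟩, fun r hr => (hmem r hr).2⟩
      · intro h
        exact (hmem u h).1 rfl
      · intro h
        have := (hmem v h).2
        rw [SimpleGraph.dist_self] at this
        omega
  have hB : P.filter (fun S => (u ∉ S ∧ v ∉ S) ∧ ∀ r ∈ S, G.dist r v < G.dist r u)
      = Finset.powersetCard t ((Finset.univ.filter fun r => G.dist r v < G.dist r u).erase v) := by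
    ext S
    simp only [hP, Finset.mem_filter, Finset.mem_powersetCard]
    constructor
    · rintro ⟨⟨_, hcard⟩, ⟨huS, hvS⟩, hall⟩
      refine ⟨?_, hcard⟩
      intro r hr
      rw [Finset.mem_erase, Finset.mem_filter]
      exact ⟨fun h => hvS (h ▸ hr), Finset.mem_univ r, hall r hr⟩
    · rintro ⟨hsub, hcard⟩
      have hmem : ∀ r ∈ S, r ≠ v ∧ G.dist r v < G.dist r u := by
        intro r hr
        have := hsub hr
        rw [Finset.mem_erase, Finset.mem_filter] at this
        exact ⟨this.1, this.2.2⟩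
      refine ⟨⟨Finset.subset_univ _, hcard⟩, ⟨?_, ?_⟩, fun r hr => (hmem r hr).2⟩
      · intro h
        have := (hmem u h).2
        rw [SimpleGraph.dist_self] at this
        omega
      · intro h
        exact (hmem v h).1 rfl
  have key : (∑ S ∈ P.filter (fun S => u ∉ S ∧ v ∉ S), (steinerDist G (insert v S) : ℤ)) -
      (∑ S ∈ P.filter (fun S => u ∉ S ∧ v ∉ S), (steinerDist G (insert u S) : ℤ)) =
      (Nat.choose (nNear G u v - 1) t : ℤ) - Nat.choose (nNear G v u - 1) t := by
    rw [← Finset.sum_sub_distrib, Finset.sum_congr rfl hDval, Finset.sum_sub_distrib]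
    rw [Finset.sum_boole, Finset.sum_boole, Finset.filter_filter, Finset.filter_filter]
    rw [hA, hB, Finset.card_powersetCard, Finset.card_powersetCard]
    rw [Finset.card_erase_of_mem (self_mem_near huv),
      Finset.card_erase_of_mem (self_mem_near huv.symm)]
    rw [nNear_card u v, nNear_card v u]
  linarith [key]

lemma choose_lt_choose_iff {t : ℕ} (ht : 1 ≤ t) {x y : ℕ} :
    Nat.choose x t < Nat.choose y t ↔ x < y ∧ t ≤ y := by
  constructor
  · intro h
    constructor
    · by_contra hxy
      push_neg at hxy
      have := Nat.choose_le_choose t hxy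
      omega
    · by_contra hty
      push_neg at hty
      have := Nat.choose_eq_zero_of_lt hty
      omega
  · rintro ⟨hxy, hty⟩
    by_cases hx : t - 1 ≤ x
    · have h1 : Nat.choose x t < Nat.choose (x + 1) t := by
        have ht' : t = (t - 1) + 1 := by omega
        rw [ht', Nat.choose_succ_succ]
        have := Nat.choose_pos (show t - 1 ≤ x from hx)
        simp only [Nat.succ_eq_add_one] at *
        omega
      have h2 : Nat.choose (x + 1) t ≤ Nat.choose y t :=
        Nat.choose_le_choose t (by omega)
      omega
    · have hx0 : Nat.choose x t = 0 := Nat.choose_eq_zero_of_lt (by omega)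
      have := Nat.choose_pos hty
      omega

lemma dk_lt_iff (hT : G.IsTree) {u v : V} (huv : G.Adj u v) {k : ℕ} (hk : 2 ≤ k) :
    steinerKDist G k u < steinerKDist G k v ↔
      nNear G v u < nNear G u v ∧ k ≤ nNear G u v := by
  have hef := edge_formula hT huv hk
  have ha1 : 1 ≤ nNear G u v := one_le_nNear huv
  have hb1 : 1 ≤ nNear G v u := one_le_nNear huv.symm
  have ht : 1 ≤ k - 1 := by omega
  constructor
  · intro h
    have h' : (steinerKDist G k u : ℤ) < steinerKDist G k v := by exact_mod_cast h
    have hcl : Nat.choose (nNear G v u - 1) (k - 1) < Nat.choose (nNear G u v - 1) (k - 1) := by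
      omega
    rw [choose_lt_choose_iff ht] at hcl
    omega
  · intro ⟨h1, h2⟩
    have hcl : Nat.choose (nNear G v u - 1) (k - 1) < Nat.choose (nNear G u v - 1) (k - 1) := by
      rw [choose_lt_choose_iff ht]
      omega
    have : (steinerKDist G k u : ℤ) < steinerKDist G k v := by omega
    exact_mod_cast this

lemma nest (hT : G.IsTree) {x0 x1 x2 r : V} (h01 : G.Adj x0 x1) (h12 : G.Adj x1 x2)
    (h02 : x0 ≠ x2) (hr : G.dist r x0 < G.dist r x1) : G.dist r x1 < G.dist r x2 := by
  rcases side_dichotomy hT h12 r with ⟨h, _⟩ | ⟨h, heq2⟩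
  · exact h
  · exfalso
    have heq1 : tp hT x1 r = SimpleGraph.Walk.cons h01.symm (tp hT x0 r) :=
      closer_cons hT h01 hr
    have hs := congrArg SimpleGraph.Walk.support (heq1.symm.trans heq2)
    rw [SimpleGraph.Walk.support_cons, SimpleGraph.Walk.support_cons] at hs
    have h2 : (tp hT x0 r).support = (tp hT x2 r).support := by
      injection hs
    rw [SimpleGraph.Walk.support_eq_cons (tp hT x0 r),
      SimpleGraph.Walk.support_eq_cons (tp hT x2 r)] at h2
    injection h2 with h3 _
    exact h02 h3

lemma near_lt (hT : G.IsTree) {x0 x1 x2 : V} (h01 : G.Adj x0 x1) (h12 : G.Adj x1 x2)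
    (h02 : x0 ≠ x2) : nNear G x0 x1 < nNear G x1 x2 := by
  classical
  rw [nNear_card, nNear_card]
  apply Finset.card_lt_card
  have hsub : (Finset.univ.filter fun r => G.dist r x0 < G.dist r x1) ⊆
      (Finset.univ.filter fun r => G.dist r x1 < G.dist r x2) := by
    intro r hr
    rw [Finset.mem_filter] at hr ⊢
    exact ⟨Finset.mem_univ r, nest hT h01 h12 h02 hr.2⟩
  refine (Finset.ssubset_iff_of_subset hsub).2 ⟨x1, self_mem_near h12, ?_⟩
  rw [Finset.mem_filter]
  push_neg
  intro _
  rw [SimpleGraph.dist_self, adj_dist_one h01.symm]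
  omega

lemma conv (hT : G.IsTree) {k : ℕ} (hk : 2 ≤ k) {x0 x1 x2 : V}
    (h01 : G.Adj x0 x1) (h12 : G.Adj x1 x2) (h02 : x0 ≠ x2)
    (h : steinerKDist G k x0 < steinerKDist G k x1) :
    steinerKDist G k x1 < steinerKDist G k x2 := by
  rw [dk_lt_iff hT h01 hk] at h
  rw [dk_lt_iff hT h12 hk]
  have hsum0 := nNear_add hT h01
  have hsum1 := nNear_add hT h12
  have hlt := near_lt hT h01 h12 h02
  omega

lemma walkinc (hT : G.IsTree) {k : ℕ} (hk : 2 ≤ k) :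
    ∀ {c b : V} (p : G.Walk c b), p.IsPath → ∀ x : V, G.Adj x c → x ∉ p.support →
      steinerKDist G k x < steinerKDist G k c → steinerKDist G k x < steinerKDist G k b := by
  intro c b p
  induction p with
  | nil => exact fun _ x _ _ h => h
  | @cons a b' c' h q ih =>
    intro hp x hx hxs hlt
    rw [SimpleGraph.Walk.cons_isPath_iff] at hp
    obtain ⟨hqp, has⟩ := hp
    have hxa : x ≠ b' := by
      intro hxe
      apply hxs
      rw [SimpleGraph.Walk.support_cons]
      exact List.mem_cons_of_mem _ (hxe ▸ q.start_mem_support)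
    have h2 : steinerKDist G k a < steinerKDist G k b' := conv hT hk hx h hxa hlt
    exact lt_trans hlt (ih hqp a h has h2)

end SteinerPf

open SteinerPf in
theorem stmt4 {V : Type*} [Fintype V] [DecidableEq V] (G : SimpleGraph V)
    (hT : G.IsTree) (n k : ℕ) (hn : Fintype.card V = n)
    (hk2 : 2 ≤ k) (hkn : k ≤ n) (v : V) :
    v ∈ steinerKMedian G k ↔ kSatisfactory G k v := by
  subst hn
  simp only [steinerKMedian, Set.mem_setOf_eq, kSatisfactory]
  constructor
  · intro hv w hadj
    have hsum := nNear_add hT hadj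
    have hvw := hv w
    constructor
    · have hnot : ¬ (steinerKDist G k w < steinerKDist G k v) := not_lt.2 hvw
      rw [dk_lt_iff hT hadj.symm hk2] at hnot
      push_neg at hnot
      omega
    · intro hwm
      have hlt : steinerKDist G k v < steinerKDist G k w := by
        rcases lt_or_eq_of_le hvw with h | h
        · exact h
        · exfalso
          apply hwm
          intro z
          exact h ▸ hv z
      rw [dk_lt_iff hT hadj hk2] at hlt
      exact ⟨hlt.1, hlt.2⟩
  · intro hs z
    by_contra hc
    push_neg at hc
    obtain ⟨w, hwuniv, hwmin⟩ :=
      Finset.exists_min_image Finset.univ (steinerKDist G k) ⟨v, Finset.mem_univ v⟩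
    have hwv : steinerKDist G k w < steinerKDist G k v :=
      lt_of_le_of_lt (hwmin z (Finset.mem_univ z)) hc
    have hvw : v ≠ w := by
      rintro rfl
      omega
    obtain ⟨y, hadj, q, hq⟩ := SimpleGraph.Walk.exists_eq_cons_of_ne hvw (tp hT v w)
    have hp := tp_isPath hT v w
    rw [hq, SimpleGraph.Walk.cons_isPath_iff] at hp
    obtain ⟨hqp, hvs⟩ := hp
    obtain ⟨hca, hcb⟩ := hs y hadj
    by_cases hym : y ∈ steinerKMedian G k
    · have h1 : ¬ (steinerKDist G k y < steinerKDist G k v) := by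
        rw [dk_lt_iff hT hadj.symm hk2]
        push_neg
        have hsum := nNear_add hT hadj
        intro h
        omega
      simp only [steinerKMedian, Set.mem_setOf_eq] at hym
      have h2 := hym z
      omega
    · have h3 := hcb hym
      have h4 : steinerKDist G k v < steinerKDist G k y :=
        (dk_lt_iff hT hadj hk2).2 ⟨h3.1, h3.2⟩
      have h5 := walkinc hT hk2 q hqp v hadj hvs h4
      have h6 := hwmin v (Finset.mem_univ v)
      omega
end

section
/- Let n and k be integers with 2 ≤ k ≤ n, and for integers 1 ≤ r ≤ n−1 define F(r) = 1 + (C(n−2, k) − C(n−r, k) − C(r−1, k)) / (C(n−r, k) + (n−r−1)·C(n−2, k−2) + r·C(n−1, k−1) − C(n−1, k)), where C(m, j) denotes the binomial coefficient (taken to be 0 when m < j). Let F* be the maximum of F(r) over integers 1 ≤ r ≤ n−1. Then for every finite tree T on n vertices and all leaves v, w of T, 1/F* ≤ d_k(v)/d_k(w) ≤ F*. -/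
open SimpleGraph Finset

set_option linter.unusedSectionVars false
namespace SteinerAux

variable {V : Type*} [DecidableEq V] {G : SimpleGraph V}

/-- canonical path in a tree -/
noncomputable def tp (hT : G.IsTree) (a b : V) : G.Walk a b :=
  (hT.existsUnique_path a b).choose

lemma tp_isPath (hT : G.IsTree) (a b : V) : (tp hT a b).IsPath :=
  (hT.existsUnique_path a b).choose_spec.1

lemma tp_unique (hT : G.IsTree) {a b : V} (p : G.Walk a b) (hp : p.IsPath) :
    p = tp hT a b :=
  (hT.existsUnique_path a b).choose_spec.2 p hp

@[simp] lemma tp_self (hT : G.IsTree) (a : V) : tp hT a a = Walk.nil :=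
  (tp_unique hT Walk.nil (Walk.IsPath.nil)).symm

lemma tp_adj (hT : G.IsTree) {a b : V} (h : G.Adj a b) :
    tp hT a b = Walk.cons h Walk.nil := by
  refine (tp_unique hT _ ?_).symm
  simp [Walk.isPath_def, h.ne]

lemma tp_takeUntil (hT : G.IsTree) {a b u : V} (h : u ∈ (tp hT a b).support) :
    (tp hT a b).takeUntil u h = tp hT a u :=
  tp_unique hT _ ((tp_isPath hT a b).takeUntil h)

lemma tp_dropUntil (hT : G.IsTree) {a b u : V} (h : u ∈ (tp hT a b).support) :
    (tp hT a b).dropUntil u h = tp hT u b :=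
  tp_unique hT _ ((tp_isPath hT a b).dropUntil h)

lemma tp_split (hT : G.IsTree) {a b u : V} (h : u ∈ (tp hT a b).support) :
    (tp hT a u).append (tp hT u b) = tp hT a b := by
  rw [← tp_takeUntil hT h, ← tp_dropUntil hT h]
  exact Walk.take_spec _ h

lemma tp_reverse (hT : G.IsTree) (a b : V) :
    (tp hT a b).reverse = tp hT b a :=
  tp_unique hT _ ((tp_isPath hT a b).reverse)

lemma mem_tp_reverse (hT : G.IsTree) {a b u : V} :
    u ∈ (tp hT a b).support ↔ u ∈ (tp hT b a).support := by
  rw [← tp_reverse hT a b, Walk.support_reverse, List.mem_reverse]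

/-- Lemma M: for an edge `a ~ b`, each `x` is on exactly one "side". -/
lemma mem_tp_edge (hT : G.IsTree) {a b : V} (h : G.Adj a b) (x : V) :
    b ∈ (tp hT a x).support ↔ a ∉ (tp hT b x).support := by
  constructor
  · intro hb ha
    -- split tp a x at b
    have hsplit := tp_split hT hb
    have hnd := (tp_isPath hT a x).support_nodup
    rw [← hsplit] at hnd
    rw [Walk.support_append] at hnd
    have hd := List.disjoint_of_nodup_append hnd
    have ha1 : a ∈ (tp hT a b).support := Walk.start_mem_support _
    have ha2 : a ∈ (tp hT b x).support.tail := by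
      have hc := (tp hT b x).support_eq_cons
      rw [hc, List.mem_cons] at ha
      exact ha.resolve_left h.ne
    exact hd ha1 ha2
  · intro ha
    have hp : (Walk.cons h (tp hT b x)).IsPath :=
      (tp_isPath hT b x).cons ha
    have := tp_unique hT _ hp
    rw [← this]
    simp
/-- Lemma S: moving the root along an edge doesn't change membership for other vertices. -/
lemma mem_tp_step (hT : G.IsTree) {a a₁ u : V} (h : G.Adj a a₁) (hua : u ≠ a)
    (hua₁ : u ≠ a₁) (x : V) :
    u ∈ (tp hT a x).support ↔ u ∈ (tp hT a₁ x).support := by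
  by_cases hc : a ∈ (tp hT a₁ x).support
  · have hb : a₁ ∉ (tp hT a x).support := by
      intro hb
      exact ((mem_tp_edge hT h x).mp hb) hc
    have hp : (Walk.cons h.symm (tp hT a x)).IsPath := (tp_isPath hT a x).cons hb
    have := tp_unique hT _ hp
    rw [← this, Walk.support_cons, List.mem_cons]
    tauto
  · have hb : a₁ ∈ (tp hT a x).support := (mem_tp_edge hT h x).mpr hc
    have hsplit := tp_split hT hb
    have ha : a ∉ (tp hT a₁ x).support := hc
    have hp : (Walk.cons h (tp hT a₁ x)).IsPath := (tp_isPath hT a₁ x).cons ha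
    have := tp_unique hT _ hp
    rw [← this, Walk.support_cons, List.mem_cons]
    tauto

/-- Lemma C: transporting the root along any walk avoiding `u`. -/
lemma mem_tp_of_walk (hT : G.IsTree) {a b u : V} (q : G.Walk a b)
    (hq : u ∉ q.support) (x : V) :
    u ∈ (tp hT a x).support ↔ u ∈ (tp hT b x).support := by
  induction q with
  | nil => rfl
  | @cons c c₁ b h r ih =>
    rw [Walk.support_cons, List.mem_cons] at hq
    push_neg at hq
    have h1 : u ≠ c := hq.1
    have h2 : u ∉ r.support := hq.2
    have h3 : u ≠ c₁ := fun hu => h2 (hu ▸ r.start_mem_support)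
    rw [mem_tp_step hT h h1 h3 x]
    exact ih h2
lemma leaf_mem_tp (hT : G.IsTree) [Fintype V] [DecidableRel G.Adj] {v z x : V}
    (hv : G.degree v = 1) (hzv : z ≠ v) (hx : v ∈ (tp hT z x).support) : x = v := by
  by_contra hxv
  have hsplit := tp_split hT hx
  have hq1 : ¬ (tp hT z v).reverse.Nil := by
    rw [Walk.nil_iff_length_eq, Walk.length_reverse, ← Walk.nil_iff_length_eq]
    exact fun hnil => hzv (Walk.Nil.eq hnil)
  have hq2 : ¬ (tp hT v x).Nil := fun hnil => hxv (Walk.Nil.eq hnil).symm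
  set n1 := (tp hT z v).reverse.getVert 1 with hn1
  set n2 := (tp hT v x).getVert 1 with hn2
  have ha1 : G.Adj v n1 := Walk.adj_snd hq1
  have ha2 : G.Adj v n2 := Walk.adj_snd hq2
  have hm1 : n1 ∈ (tp hT z v).support := by
    have : n1 ∈ (tp hT z v).reverse.support := by
      apply Walk.mem_support_iff_exists_getVert.mpr
      refine ⟨1, rfl, ?_⟩
      have := Walk.not_nil_iff_lt_length.mp hq1
      omega
    rwa [Walk.support_reverse, List.mem_reverse] at this
  have hm2 : n2 ∈ (tp hT v x).support.tail := by
    have h2 : n2 ∈ (tp hT v x).support := by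
      apply Walk.mem_support_iff_exists_getVert.mpr
      refine ⟨1, rfl, ?_⟩
      have := Walk.not_nil_iff_lt_length.mp hq2
      omega
    rw [(tp hT v x).support_eq_cons, List.mem_cons] at h2
    exact h2.resolve_left ha2.ne'
  have hnd := (tp_isPath hT z x).support_nodup
  rw [← hsplit, Walk.support_append] at hnd
  have hdisj := List.disjoint_of_nodup_append hnd
  have hne : n1 ≠ n2 := fun h => hdisj hm1 (h ▸ hm2)
  have hsub : {n1, n2} ⊆ G.neighborFinset v := by
    intro y hy
    rw [mem_insert, mem_singleton] at hy
    rcases hy with rfl | rfl <;> simp [SimpleGraph.mem_neighborFinset, ha1, ha2]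
  have := Finset.card_le_card hsub
  rw [card_pair hne] at this
  rw [← SimpleGraph.card_neighborFinset_eq_degree] at hv
  omega

variable [Fintype V]

/-- Union of canonical paths from `v` to the members of `insert v S`. -/
noncomputable def hull (hT : G.IsTree) (v : V) (S : Finset V) : Finset V :=
  (insert v S).biUnion (fun x => (tp hT v x).support.toFinset)

lemma mem_hull {hT : G.IsTree} {v u : V} {S : Finset V} :
    u ∈ hull hT v S ↔ ∃ x ∈ insert v S, u ∈ (tp hT v x).support := by
  simp [hull]

lemma self_mem_hull {hT : G.IsTree} {v : V} {S : Finset V} : v ∈ hull hT v S :=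
  mem_hull.mpr ⟨v, mem_insert_self _ _, Walk.start_mem_support _⟩

lemma subset_hull {hT : G.IsTree} {v : V} {S : Finset V} : insert v S ⊆ hull hT v S :=
  fun x hx => mem_hull.mpr ⟨x, hx, Walk.end_mem_support _⟩

lemma tp_support_subset_hull {hT : G.IsTree} {v x : V} {S : Finset V}
    (hx : x ∈ insert v S) : ∀ z ∈ (tp hT v x).support, z ∈ hull hT v S :=
  fun z hz => mem_hull.mpr ⟨x, hx, hz⟩

lemma reachable_induce {W : Finset V} {a b : V} (p : G.Walk a b)
    (hp : ∀ z ∈ p.support, z ∈ W) (ha : a ∈ W) (hb : b ∈ W) :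
    (G.induce (W : Set V)).Reachable ⟨a, ha⟩ ⟨b, hb⟩ := by
  induction p with
  | nil => rfl
  | @cons a c b h r ih =>
    have hc : c ∈ W := hp c (by simp)
    have hadj : (G.induce (W : Set V)).Adj ⟨a, ha⟩ ⟨c, hc⟩ := by
      simpa using h
    exact hadj.reachable.trans (ih (fun z hz => hp z (by simp [hz])) hc hb)

lemma support_subset_of_connected (hT : G.IsTree) {W : Finset V} {a b : V}
    (hc : (G.induce (W : Set V)).Connected) (ha : a ∈ W) (hb : b ∈ W) :
    ∀ z ∈ (tp hT a b).support, z ∈ W := by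
  obtain ⟨q⟩ := hc.preconnected ⟨a, ha⟩ ⟨b, hb⟩
  let q' : G.Walk a b := q.map (SimpleGraph.Embedding.induce (W : Set V)).toHom
  have hq' : ∀ z ∈ q'.support, z ∈ W := by
    intro z hz
    change z ∈ (q.map (SimpleGraph.Embedding.induce (W : Set V)).toHom).support at hz
    rw [Walk.support_map, List.mem_map] at hz
    obtain ⟨y, _, rfl⟩ := hz
    exact y.2
  have : tp hT a b = q'.bypass := (tp_unique hT _ q'.bypass_isPath).symm
  intro z hz
  rw [this] at hz
  exact hq' z (q'.support_bypass_subset hz)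
lemma hull_connected (hT : G.IsTree) (v : V) (S : Finset V) :
    (G.induce ((hull hT v S : Finset V) : Set V)).Connected := by
  rw [SimpleGraph.connected_iff]
  constructor
  · rintro ⟨a, ha⟩ ⟨b, hb⟩
    have key : ∀ (c : V) (hc : c ∈ hull hT v S),
        (G.induce ((hull hT v S : Finset V) : Set V)).Reachable ⟨v, self_mem_hull⟩ ⟨c, hc⟩ := by
      intro c hc
      obtain ⟨x, hx, hcx⟩ := mem_hull.mp hc
      exact reachable_induce ((tp hT v x).takeUntil c hcx)
        (fun z hz => tp_support_subset_hull hx z ((tp hT v x).support_takeUntil_subset hcx hz))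
        self_mem_hull hc
    exact (key a ha).symm.trans (key b hb)
  · exact ⟨⟨v, self_mem_hull⟩⟩

lemma steinerDist_tree (hT : G.IsTree) (v : V) (S : Finset V) :
    steinerDist G (insert v S) = (hull hT v S).card - 1 := by
  rw [steinerDist]
  have hmem : (hull hT v S).card - 1 ∈
      {m : ℕ | ∃ W : Finset V, insert v S ⊆ W ∧ (G.induce (W : Set V)).Connected ∧
        W.card = m + 1} := by
    refine ⟨hull hT v S, subset_hull, hull_connected hT v S, ?_⟩
    have : 1 ≤ (hull hT v S).card := card_pos.mpr ⟨v, self_mem_hull⟩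
    omega
  refine le_antisymm (Nat.sInf_le hmem) (le_csInf ⟨_, hmem⟩ ?_)
  rintro m ⟨W, hSW, hWc, hWcard⟩
  have hsub : hull hT v S ⊆ W := by
    intro u hu
    obtain ⟨x, hx, hux⟩ := mem_hull.mp hu
    exact support_subset_of_connected hT hWc (hSW (mem_insert_self _ _)) (hSW hx) u hux
  have := Finset.card_le_card hsub
  omega
open scoped Classical in
/-- The branch of `u` as seen from root `z`: vertices `x` whose canonical path from `z`
passes through `u`. -/
noncomputable def Bset (hT : G.IsTree) (z u : V) : Finset V :=
  univ.filter (fun x => u ∈ (tp hT z x).support)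

lemma mem_Bset {hT : G.IsTree} {z u x : V} :
    x ∈ Bset hT z u ↔ u ∈ (tp hT z x).support := by
  simp [Bset]

lemma self_mem_Bset {hT : G.IsTree} {z u : V} : u ∈ Bset hT z u :=
  mem_Bset.mpr (Walk.end_mem_support _)

lemma start_mem_Bset_iff {hT : G.IsTree} {z u : V} : z ∈ Bset hT z u ↔ u = z := by
  rw [mem_Bset, tp_self]
  simp [eq_comm]

lemma mem_hull_iff_ne {hT : G.IsTree} {v u : V} {S : Finset V} (hu : u ≠ v) :
    u ∈ hull hT v S ↔ ∃ x ∈ S, x ∈ Bset hT v u := by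
  rw [mem_hull]
  constructor
  · rintro ⟨x, hx, hux⟩
    rcases mem_insert.mp hx with rfl | hxS
    · rw [tp_self] at hux
      simp only [Walk.support_nil, List.mem_singleton] at hux
      exact absurd hux hu
    · exact ⟨x, hxS, mem_Bset.mpr hux⟩
  · rintro ⟨x, hxS, hx⟩
    exact ⟨x, mem_insert_of_mem hxS, mem_Bset.mp hx⟩

lemma steinerKDist_tree (hT : G.IsTree) (k : ℕ) (v : V) :
    steinerKDist G k v = ∑ u ∈ univ.erase v,
      ((Fintype.card V - 1).choose (k-1)
        - (Fintype.card V - 1 - (Bset hT v u).card).choose (k-1)) := by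
  have hfil : (Finset.powersetCard (k - 1) (univ : Finset V)).filter (fun S => v ∉ S)
      = Finset.powersetCard (k - 1) (univ.erase v) := by
    ext S
    simp only [Finset.mem_filter, Finset.mem_powersetCard, Finset.subset_erase]
    tauto
  rw [steinerKDist, hfil]
  have hstep : ∀ S ∈ Finset.powersetCard (k - 1) (univ.erase v),
      steinerDist G (insert v S) = ∑ u ∈ univ.erase v, if u ∈ hull hT v S then 1 else 0 := by
    intro S _
    rw [steinerDist_tree hT v S]
    have h1 : (hull hT v S).erase v = (univ.erase v).filter (fun u => u ∈ hull hT v S) := by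
      ext u
      simp only [Finset.mem_erase, Finset.mem_filter, mem_univ, true_and]
      tauto
    have h2 : (hull hT v S).card - 1 = ((hull hT v S).erase v).card := by
      rw [Finset.card_erase_of_mem self_mem_hull]
    rw [h2, h1, Finset.card_filter]
  rw [Finset.sum_congr rfl hstep, Finset.sum_comm]
  refine Finset.sum_congr rfl ?_
  intro u hu
  have hune : u ≠ v := (Finset.mem_erase.mp hu).1
  have hBsub : Bset hT v u ⊆ univ.erase v := by
    intro x hx
    rw [Finset.mem_erase]
    refine ⟨?_, mem_univ x⟩
    rintro rfl
    exact hune (start_mem_Bset_iff.mp hx)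
  rw [← Finset.card_filter]
  have hcompl : (Finset.powersetCard (k-1) (univ.erase v)).filter
      (fun S => ¬ u ∈ hull hT v S)
      = Finset.powersetCard (k-1) ((univ.erase v) \ Bset hT v u) := by
    ext S
    simp only [Finset.mem_filter, Finset.mem_powersetCard, Finset.subset_sdiff]
    constructor
    · rintro ⟨⟨hSsub, hScard⟩, hnot⟩
      refine ⟨⟨hSsub, ?_⟩, hScard⟩
      rw [Finset.disjoint_left]
      intro x hxS hxB
      exact hnot ((mem_hull_iff_ne hune).mpr ⟨x, hxS, hxB⟩)
    · rintro ⟨⟨hSsub, hdisj⟩, hScard⟩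
      refine ⟨⟨hSsub, hScard⟩, fun hmem => ?_⟩
      obtain ⟨x, hxS, hxB⟩ := (mem_hull_iff_ne hune).mp hmem
      exact (Finset.disjoint_left.mp hdisj hxS) hxB
  have htot := Finset.card_filter_add_card_filter_not
    (s := Finset.powersetCard (k-1) (univ.erase v)) (p := fun S => u ∈ hull hT v S)
  rw [hcompl] at htot
  rw [Finset.card_powersetCard, Finset.card_powersetCard,
    Finset.card_sdiff_of_subset hBsub, Finset.card_erase_of_mem (mem_univ v), Finset.card_univ] at htot
  have hle : (Fintype.card V - 1 - (Bset hT v u).card).choose (k-1)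
      ≤ (Fintype.card V - 1).choose (k-1) :=
    Nat.choose_le_choose _ (by omega)
  omega
/-! ### Arithmetic section -/

def gQ (n k b : ℕ) : ℚ := ((n-1).choose (k-1) : ℚ) - ((n-1-b).choose (k-1) : ℚ)
def fQ (n k x : ℕ) : ℚ := ((n-1-x).choose (k-1) : ℚ) - ((x-1).choose (k-1) : ℚ)
def DrQ (n k r : ℕ) : ℚ := ((n-r).choose k : ℚ)
  + ((n-r-1 : ℕ) : ℚ) * ((n-2).choose (k-2) : ℚ)
  + (r : ℚ) * ((n-1).choose (k-1) : ℚ) - ((n-1).choose k : ℚ)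
def NrQ (n k r : ℕ) : ℚ := ((n-2).choose k : ℚ) - ((n-r).choose k : ℚ)
  - ((r-1).choose k : ℚ)

lemma chQ_mono (j : ℕ) {m m' : ℕ} (h : m ≤ m') : ((m.choose j : ℕ) : ℚ) ≤ (m'.choose j : ℚ) :=
  Nat.cast_le.mpr (Nat.choose_le_choose _ h)

lemma pascalQ (m j : ℕ) (hj : 1 ≤ j) :
    ((m+1).choose j : ℚ) = (m.choose (j-1) : ℚ) + (m.choose j : ℚ) := by
  obtain ⟨j', rfl⟩ : ∃ j', j = j' + 1 := ⟨j - 1, by omega⟩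
  rw [Nat.choose_succ_succ]
  push_cast
  simp

lemma gQ_nonneg (n k b : ℕ) : 0 ≤ gQ n k b := by
  have := chQ_mono (k-1) (Nat.sub_le (n-1) b)
  simp only [gQ]; linarith

lemma gQ_mono (n k : ℕ) {b b' : ℕ} (h : b ≤ b') : gQ n k b ≤ gQ n k b' := by
  have h2 := chQ_mono (k-1) (show n - 1 - b' ≤ n - 1 - b by omega)
  simp only [gQ]; linarith

lemma fQ_anti (n k : ℕ) {x x' : ℕ} (h : x ≤ x') : fQ n k x' ≤ fQ n k x := by
  have h1 := chQ_mono (k-1) (show n - 1 - x' ≤ n - 1 - x by omega)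
  have h2 := chQ_mono (k-1) (show x - 1 ≤ x' - 1 by omega)
  simp only [fQ]; linarith

lemma gQ_one (n k : ℕ) (hn : 2 ≤ n) (hk : 2 ≤ k) : gQ n k 1 = ((n-2).choose (k-2) : ℚ) := by
  have hp := pascalQ (n-2) (k-1) (by omega)
  rw [show (n-2)+1 = n-1 by omega, show k-1-1 = k-2 by omega] at hp
  rw [gQ, show n-1-1 = n-2 by omega, hp]
  ring

lemma gQ_last (n k : ℕ) (hk : 2 ≤ k) : gQ n k (n-1) = ((n-1).choose (k-1) : ℚ) := by
  have h1 : n - 1 - (n-1) = 0 := by omega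
  have h2 : (0 : ℕ).choose (k-1) = 0 := Nat.choose_eq_zero_of_lt (by omega)
  rw [gQ, h1, h2]
  simp

lemma gQ_sub_eq_fQ (n k : ℕ) {x : ℕ} (h1 : 1 ≤ x) (h2 : x ≤ n - 1) (hn : 2 ≤ n) :
    gQ n k (n - x) - gQ n k x = fQ n k x := by
  have h3 : n - 1 - (n - x) = x - 1 := by omega
  simp only [gQ, fQ, h3]
  ring

lemma fQ_one_add_last (n k : ℕ) (hn : 2 ≤ n) (hk : 2 ≤ k) :
    fQ n k 1 + fQ n k (n-1) = 0 := by
  have h0 : (0 : ℕ).choose (k-1) = 0 := Nat.choose_eq_zero_of_lt (by omega)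
  simp only [fQ, show n - 1 - 1 = n - 2 by omega, show n - 1 - (n-1) = 0 by omega,
    show (1:ℕ) - 1 = 0 from rfl, h0]
  push_cast
  ring

lemma Nsum_eq (n k : ℕ) (hk2 : 2 ≤ k) (hkn : k ≤ n) :
    ∀ r, 2 ≤ r → r ≤ n - 1 →
    ∑ i ∈ Finset.Icc 2 (r-1), fQ n k i = NrQ n k r := by
  intro r hr
  induction r, hr using Nat.le_induction with
  | base =>
    intro _
    have he : Finset.Icc 2 (2-1) = (∅ : Finset ℕ) := by decide
    have h2 : (1:ℕ).choose k = 0 := Nat.choose_eq_zero_of_lt (by omega)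
    rw [he]
    simp [NrQ, show (2:ℕ)-1 = 1 from rfl, h2, show n - 2 = n - 2 from rfl]
  | succ r hr ih =>
    intro hrn
    have hrn' : r ≤ n - 1 := by omega
    have h1 : r + 1 - 1 = (r - 1) + 1 := by omega
    rw [h1, Finset.sum_Icc_succ_top (by omega : 2 ≤ r - 1 + 1),
      show r - 1 + 1 = r by omega, ih hrn']
    have p1 := pascalQ (n-r-1) k (by omega)
    rw [show n-r-1+1 = n-r by omega] at p1
    have p2 := pascalQ (r-1) k (by omega)
    rw [show r-1+1 = r by omega] at p2
    simp only [NrQ, fQ, show n - (r+1) = n - r - 1 by omega, show r + 1 - 1 = r by omega,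
      show n - 1 - r = n - r - 1 by omega]
    linarith

lemma Dsum_eq (n k : ℕ) (hk2 : 2 ≤ k) (hkn : k ≤ n) :
    ∀ r, 1 ≤ r → r ≤ n - 1 →
    ∑ i ∈ Finset.Icc 1 (r-1), gQ n k i
      = ((r : ℚ) - 1) * ((n-1).choose (k-1) : ℚ) - ((n-1).choose k : ℚ)
        + ((n-r).choose k : ℚ) := by
  intro r hr
  induction r, hr using Nat.le_induction with
  | base =>
    intro _
    have he : Finset.Icc 1 (1-1) = (∅ : Finset ℕ) := by decide
    rw [he]
    simp
  | succ r hr ih =>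
    intro hrn
    have hrn' : r ≤ n - 1 := by omega
    have h1 : r + 1 - 1 = (r - 1) + 1 := by omega
    rw [h1, Finset.sum_Icc_succ_top (by omega : 1 ≤ r - 1 + 1),
      show r - 1 + 1 = r by omega, ih hrn']
    have p1 := pascalQ (n-r-1) k (by omega)
    rw [show n-r-1+1 = n-r by omega] at p1
    simp only [gQ, show n - (r+1) = n - r - 1 by omega, show n - 1 - r = n - r - 1 by omega]
    push_cast
    linarith
lemma DrQ_decomp (n k : ℕ) (hk2 : 2 ≤ k) (hkn : k ≤ n) {r : ℕ} (hr1 : 1 ≤ r)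
    (hrn : r ≤ n - 1) :
    DrQ n k r = (∑ i ∈ Finset.Icc 1 (r-1), gQ n k i) + ((n-1).choose (k-1) : ℚ)
      + ((n-r-1 : ℕ) : ℚ) * gQ n k 1 := by
  rw [Dsum_eq n k hk2 hkn r hr1 hrn, gQ_one n k (by omega) hk2, DrQ]
  push_cast
  ring

lemma DrQ_pos (n k : ℕ) (hk2 : 2 ≤ k) (hkn : k ≤ n) {r : ℕ} (hr1 : 1 ≤ r)
    (hrn : r ≤ n - 1) : 0 < DrQ n k r := by
  rw [DrQ_decomp n k hk2 hkn hr1 hrn]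
  have h1 : (0:ℚ) ≤ ∑ i ∈ Finset.Icc 1 (r-1), gQ n k i :=
    Finset.sum_nonneg fun i _ => gQ_nonneg n k i
  have h2 : (0:ℚ) < ((n-1).choose (k-1) : ℚ) := by
    have : 0 < (n-1).choose (k-1) := Nat.choose_pos (by omega)
    exact_mod_cast this
  have h3 : (0:ℚ) ≤ ((n-r-1 : ℕ) : ℚ) * gQ n k 1 :=
    mul_nonneg (by positivity) (gQ_nonneg n k 1)
  linarith

lemma arith_main (n k d : ℕ) (a : ℕ → ℕ) (hk2 : 2 ≤ k) (hkn : k ≤ n)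
    (hd1 : 1 ≤ d) (hdn : d ≤ n - 1) (ha1 : a 1 = 1) (had : a d = n - 1)
    (hlow : ∀ i, 1 ≤ i → i ≤ d → i ≤ a i)
    (hmono : ∀ i j, 1 ≤ i → i ≤ j → j ≤ d → a i ≤ a j) :
    ∃ r, 1 ≤ r ∧ r ≤ n - 1 ∧
      0 ≤ NrQ n k r ∧
      (∑ i ∈ Finset.Icc 1 d, (gQ n k (n - a i) - gQ n k (a i))) ≤ NrQ n k r ∧
      0 < DrQ n k r ∧
      DrQ n k r ≤ (∑ i ∈ Finset.Icc 1 d, gQ n k (a i)) + ((n-1-d : ℕ) : ℚ) * gQ n k 1 := by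
  have hn2 : 2 ≤ n := by omega
  have hOK : ∀ i, 1 ≤ i → i ≤ d → 1 ≤ a i ∧ a i ≤ n - 1 := by
    intro i h1 h2
    constructor
    · have := hlow i h1 h2; omega
    · calc a i ≤ a d := hmono i d h1 h2 le_rfl
        _ = n - 1 := had
  have hptwise : ∀ i ∈ Finset.Icc 1 d, gQ n k (n - a i) - gQ n k (a i) = fQ n k (a i) := by
    intro i hi
    rw [Finset.mem_Icc] at hi
    obtain ⟨hi1, hi2⟩ := hOK i hi.1 hi.2
    exact gQ_sub_eq_fQ n k hi1 hi2 hn2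
  rw [Finset.sum_congr rfl hptwise]
  by_cases hd : d = 1
  · -- then n = 2
    subst hd
    have hn : n = 2 := by omega
    refine ⟨1, le_rfl, by omega, ?_, ?_, DrQ_pos n k hk2 hkn le_rfl (by omega), ?_⟩
    · have h2 : (1:ℕ).choose k = 0 := Nat.choose_eq_zero_of_lt (by omega)
      subst hn
      simp [NrQ, h2]
    · have h2 : (1:ℕ).choose k = 0 := Nat.choose_eq_zero_of_lt (by omega)
      have hfa : fQ n k (a 1) = 0 := by
        rw [ha1]
        subst hn
        simp [fQ]
      rw [Finset.Icc_self, Finset.sum_singleton, hfa]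
      subst hn
      simp [NrQ, h2]
    · rw [DrQ_decomp n k hk2 hkn le_rfl (by omega), Finset.Icc_self, Finset.sum_singleton, ha1]
      have hk : k = 2 := by omega
      subst hn
      subst hk
      rw [show Finset.Icc 1 (1-1) = (∅ : Finset ℕ) by decide]
      norm_num [gQ]
  · -- d ≥ 2
    have hd2 : 2 ≤ d := by omega
    set T := (Finset.Icc 2 (d-1)).filter (fun i => 0 < fQ n k (a i)) with hT
    set t := if hne : T.Nonempty then T.max' hne else 1 with ht
    have htmem : 1 ≤ t ∧ t ≤ d - 1 := by
      rw [ht]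
      split
      · rename_i hne
        have h := Finset.mem_Icc.mp (Finset.mem_filter.mp (T.max'_mem hne)).1
        omega
      · omega
    have hposT : ∀ i, 2 ≤ i → i ≤ t → 0 < fQ n k (a i) := by
      intro i h2i hit
      rw [ht] at hit
      by_cases hne : T.Nonempty
      · rw [dif_pos hne] at hit
        have hmax' := Finset.mem_filter.mp (T.max'_mem hne)
        have hmax : (2 ≤ T.max' hne ∧ T.max' hne ≤ d - 1) ∧ 0 < fQ n k (a (T.max' hne)) :=
          ⟨Finset.mem_Icc.mp hmax'.1, hmax'.2⟩
        have hale : a i ≤ a (T.max' hne) := hmono i _ (by omega) hit (by omega)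
        calc (0:ℚ) < fQ n k (a (T.max' hne)) := hmax.2
          _ ≤ fQ n k (a i) := fQ_anti n k hale
      · rw [dif_neg hne] at hit
        omega
    have hnegT : ∀ i, t + 1 ≤ i → i ≤ d - 1 → fQ n k (a i) ≤ 0 := by
      intro i hti hid
      by_contra hpos
      push_neg at hpos
      have hiT : i ∈ T :=
        Finset.mem_filter.mpr ⟨Finset.mem_Icc.mpr ⟨by have := htmem.1; omega, hid⟩, hpos⟩
      have hne : T.Nonempty := ⟨i, hiT⟩
      have := T.le_max' i hiT
      rw [ht, dif_pos hne] at hti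
      omega
    refine ⟨t + 1, by omega, by omega, ?_, ?_, DrQ_pos n k hk2 hkn (by omega) (by omega), ?_⟩
    · -- 0 ≤ NrQ
      rw [← Nsum_eq n k hk2 hkn (t+1) (by omega) (by omega)]
      apply Finset.sum_nonneg
      intro i hi
      rw [Finset.mem_Icc] at hi
      have hia := hposT i hi.1 (by omega)
      have := fQ_anti n k (hlow i (by omega) (by omega))
      linarith
    · -- sum ≤ NrQ
      rw [← Nsum_eq n k hk2 hkn (t+1) (by omega) (by omega)]
      have hsplit1 : Finset.Icc 1 d = insert 1 (insert d (Finset.Icc 2 (d-1))) := by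
        ext i
        simp only [Finset.mem_Icc, Finset.mem_insert]
        omega
      rw [hsplit1, Finset.sum_insert (by simp [Finset.mem_Icc]; omega),
        Finset.sum_insert (by simp [Finset.mem_Icc]; omega)]
      have hends : fQ n k (a 1) + fQ n k (a d) = 0 := by
        rw [ha1, had]
        exact fQ_one_add_last n k hn2 hk2
      have hsplit2 : Finset.Icc 2 (d-1) = Finset.Icc 2 t ∪ Finset.Icc (t+1) (d-1) := by
        ext i
        simp only [Finset.mem_Icc, Finset.mem_union]
        omega
      have hdisj : Disjoint (Finset.Icc 2 t) (Finset.Icc (t+1) (d-1)) := by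
        rw [Finset.disjoint_left]
        intro i hi hi'
        simp only [Finset.mem_Icc] at hi hi'
        omega
      rw [hsplit2, Finset.sum_union hdisj]
      have hb1 : ∑ i ∈ Finset.Icc 2 t, fQ n k (a i) ≤ ∑ i ∈ Finset.Icc 2 t, fQ n k i := by
        apply Finset.sum_le_sum
        intro i hi
        rw [Finset.mem_Icc] at hi
        exact fQ_anti n k (hlow i (by omega) (by omega))
      have hb2 : ∑ i ∈ Finset.Icc (t+1) (d-1), fQ n k (a i) ≤ 0 := by
        apply Finset.sum_nonpos
        intro i hi
        rw [Finset.mem_Icc] at hi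
        exact hnegT i hi.1 hi.2
      have : Finset.Icc 2 (t+1-1) = Finset.Icc 2 t := by norm_num
      rw [this]
      linarith
    · -- DrQ ≤ sum + off
      rw [DrQ_decomp n k hk2 hkn (by omega) (by omega)]
      have hsplit1 : Finset.Icc 1 d = insert d (Finset.Icc 1 (d-1)) := by
        ext i
        simp only [Finset.mem_Icc, Finset.mem_insert]
        omega
      rw [hsplit1, Finset.sum_insert (by simp [Finset.mem_Icc]; omega)]
      have hgd : gQ n k (a d) = ((n-1).choose (k-1) : ℚ) := by
        rw [had]; exact gQ_last n k hk2
      have hsplit2 : Finset.Icc 1 (d-1) = Finset.Icc 1 t ∪ Finset.Icc (t+1) (d-1) := by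
        ext i
        simp only [Finset.mem_Icc, Finset.mem_union]
        have := htmem.2
        omega
      have hdisj : Disjoint (Finset.Icc 1 t) (Finset.Icc (t+1) (d-1)) := by
        rw [Finset.disjoint_left]
        intro i hi hi'
        simp only [Finset.mem_Icc] at hi hi'
        omega
      rw [hsplit2, Finset.sum_union hdisj]
      have hb1 : ∑ i ∈ Finset.Icc 1 t, gQ n k i ≤ ∑ i ∈ Finset.Icc 1 t, gQ n k (a i) := by
        apply Finset.sum_le_sum
        intro i hi
        rw [Finset.mem_Icc] at hi
        exact gQ_mono n k (hlow i hi.1 (by omega))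
      have hb2 : ((d - 1 - t : ℕ) : ℚ) * gQ n k 1 ≤ ∑ i ∈ Finset.Icc (t+1) (d-1), gQ n k (a i) := by
        have hcard : (Finset.Icc (t+1) (d-1)).card = d - 1 - t := by
          rw [Nat.card_Icc]; omega
        calc ((d - 1 - t : ℕ) : ℚ) * gQ n k 1
            = ∑ _i ∈ Finset.Icc (t+1) (d-1), gQ n k 1 := by
              rw [Finset.sum_const, hcard, nsmul_eq_mul]
          _ ≤ ∑ i ∈ Finset.Icc (t+1) (d-1), gQ n k (a i) := by
              apply Finset.sum_le_sum
              intro i hi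
              rw [Finset.mem_Icc] at hi
              exact gQ_mono n k (hOK i (by omega) (by omega)).1
      have hcast : ((n - (t+1) - 1 : ℕ) : ℚ) = ((d - 1 - t : ℕ) : ℚ) + ((n - 1 - d : ℕ) : ℚ) := by
        have h1 : n - (t+1) - 1 = (d - 1 - t) + (n - 1 - d) := by
          have := htmem.2
          omega
        rw [h1]
        push_cast
        ring
      have ht1 : Finset.Icc 1 (t+1-1) = Finset.Icc 1 t := by norm_num
      rw [ht1, hcast, hgd]
      linarith
/-! ### Path indexing -/

lemma getVert_mem_support {a b : V} (p : G.Walk a b) {i : ℕ} (hi : i ≤ p.length) :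
    p.getVert i ∈ p.support :=
  Walk.mem_support_iff_exists_getVert.mpr ⟨i, rfl, hi⟩

lemma getVert_inj {a b : V} (p : G.Walk a b) :
    p.IsPath → ∀ i j, i ≤ p.length → j ≤ p.length → p.getVert i = p.getVert j → i = j := by
  induction p with
  | nil =>
    intro _ i j hi hj _
    simp only [Walk.length_nil, Nat.le_zero] at hi hj
    omega
  | @cons a c b h r ih =>
    intro hp i j hi hj hij
    rw [Walk.length_cons] at hi hj
    have hp' : r.IsPath := hp.of_cons
    have hns : a ∉ r.support := ((Walk.cons_isPath_iff h r).mp hp).2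
    match i, j with
    | 0, 0 => rfl
    | 0, j+1 =>
      exfalso
      rw [Walk.getVert_zero, Walk.getVert_cons_succ] at hij
      exact hns (hij ▸ getVert_mem_support r (show j ≤ r.length by omega))
    | i+1, 0 =>
      exfalso
      rw [Walk.getVert_zero, Walk.getVert_cons_succ] at hij
      exact hns (hij ▸ getVert_mem_support r (show i ≤ r.length by omega))
    | i+1, j+1 =>
      rw [Walk.getVert_cons_succ, Walk.getVert_cons_succ] at hij
      have := ih hp' i j (by omega) (by omega) hij
      omega

lemma length_takeUntil {a b : V} {p : G.Walk a b} (hp : p.IsPath) {i : ℕ} (hi : i ≤ p.length)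
    (h : p.getVert i ∈ p.support) : (p.takeUntil _ h).length = i := by
  have hlen : (p.takeUntil _ h).length + (p.dropUntil _ h).length = p.length := by
    rw [← Walk.length_append, Walk.take_spec]
  have key : ∀ m : ℕ, ((p.takeUntil _ h).append (p.dropUntil _ h)).getVert m = p.getVert m := by
    intro m
    rw [Walk.take_spec]
  have hv : p.getVert (p.takeUntil _ h).length = p.getVert i := by
    conv_lhs => rw [← key (p.takeUntil _ h).length]
    rw [Walk.getVert_append]
    simp
  exact getVert_inj p hp _ i (by omega) hi hv

lemma getVert_takeUntil {a b : V} {p : G.Walk a b} (hp : p.IsPath) {i : ℕ} (hi : i ≤ p.length)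
    (h : p.getVert i ∈ p.support) {l : ℕ} (hl : l ≤ i) :
    (p.takeUntil _ h).getVert l = p.getVert l := by
  have hlt := length_takeUntil hp hi h
  have key : ∀ m : ℕ, ((p.takeUntil _ h).append (p.dropUntil _ h)).getVert m = p.getVert m := by
    intro m
    rw [Walk.take_spec]
  rcases Nat.lt_or_ge l i with hli | hli
  · conv_rhs => rw [← key l]
    rw [Walk.getVert_append, if_pos (by omega)]
  · have hl' : l = i := by omega
    subst hl'
    have h2 := Walk.getVert_length (p.takeUntil _ h)
    rwa [hlt] at h2

lemma mem_takeUntil_iff {a b : V} {p : G.Walk a b} (hp : p.IsPath) {i l : ℕ}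
    (hi : i ≤ p.length) (hl : l ≤ p.length) (h : p.getVert i ∈ p.support) :
    p.getVert l ∈ (p.takeUntil _ h).support ↔ l ≤ i := by
  constructor
  · intro hmem
    obtain ⟨m, hm, hmle⟩ := Walk.mem_support_iff_exists_getVert.mp hmem
    rw [length_takeUntil hp hi h] at hmle
    rw [getVert_takeUntil hp hi h hmle] at hm
    have := getVert_inj p hp m l (by omega) hl hm
    omega
  · intro hle
    refine Walk.mem_support_iff_exists_getVert.mpr ⟨l, ?_, ?_⟩
    · exact getVert_takeUntil hp hi h hle
    · rw [length_takeUntil hp hi h]; exact hle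

lemma getVert_dropUntil {a b : V} {p : G.Walk a b} (hp : p.IsPath) {i : ℕ}
    (hi : i ≤ p.length) (h : p.getVert i ∈ p.support) (m : ℕ) :
    (p.dropUntil _ h).getVert m = p.getVert (i + m) := by
  have key : ∀ m' : ℕ, ((p.takeUntil _ h).append (p.dropUntil _ h)).getVert m' = p.getVert m' := by
    intro m'
    rw [Walk.take_spec]
  conv_rhs => rw [← key (i + m)]
  rw [Walk.getVert_append, length_takeUntil hp hi h, if_neg (by omega)]
  congr 1
  omega

lemma length_dropUntil {a b : V} {p : G.Walk a b} (hp : p.IsPath) {i : ℕ}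
    (hi : i ≤ p.length) (h : p.getVert i ∈ p.support) :
    (p.dropUntil _ h).length = p.length - i := by
  have hlen : (p.takeUntil _ h).length + (p.dropUntil _ h).length = p.length := by
    rw [← Walk.length_append, Walk.take_spec]
  rw [length_takeUntil hp hi h] at hlen
  omega

lemma mem_dropUntil_iff {a b : V} {p : G.Walk a b} (hp : p.IsPath) {i l : ℕ}
    (hi : i ≤ p.length) (hl : l ≤ p.length) (h : p.getVert i ∈ p.support) :
    p.getVert l ∈ (p.dropUntil _ h).support ↔ i ≤ l := by
  constructor
  · intro hmem
    obtain ⟨m, hm, hmle⟩ := Walk.mem_support_iff_exists_getVert.mp hmem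
    rw [length_dropUntil hp hi h] at hmle
    rw [getVert_dropUntil hp hi h m] at hm
    have := getVert_inj p hp (i+m) l (by omega) hl hm
    omega
  · intro hle
    refine Walk.mem_support_iff_exists_getVert.mpr ⟨l - i, ?_, ?_⟩
    · rw [getVert_dropUntil hp hi h]
      congr 1
      omega
    · rw [length_dropUntil hp hi h]; omega

/-! ### Branch sets along the path -/

lemma Bset_eq_of_not_mem_support (hT : G.IsTree) [Fintype V] {v w u : V}
    (hu : u ∉ (tp hT v w).support) : Bset hT v u = Bset hT w u := by
  ext x
  rw [mem_Bset, mem_Bset]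
  exact mem_tp_of_walk hT (tp hT v w) hu x

lemma Bset_subset_of_mem (hT : G.IsTree) [Fintype V] {z u u' : V}
    (h : u' ∈ (tp hT z u).support) : Bset hT z u ⊆ Bset hT z u' := by
  intro x hx
  rw [mem_Bset] at hx ⊢
  rw [← tp_split hT hx]
  exact Walk.subset_support_append_left _ _ h

lemma getVert_mem_tp_from_w (hT : G.IsTree) {v w : V} {j l : ℕ} (hj : j ≤ l)
    (hl : l ≤ (tp hT v w).length) :
    (tp hT v w).getVert l ∈ (tp hT w ((tp hT v w).getVert j)).support := by
  rw [← mem_tp_reverse hT]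
  have hmem_j : (tp hT v w).getVert j ∈ (tp hT v w).support :=
    getVert_mem_support _ (by omega)
  rw [← tp_dropUntil hT hmem_j]
  exact (mem_dropUntil_iff (tp_isPath hT v w) (by omega) hl hmem_j).mpr hj

lemma Bset_getVert_compl (hT : G.IsTree) [Fintype V] {v w : V} {i : ℕ} (hi1 : 1 ≤ i)
    (hid : i ≤ (tp hT v w).length) :
    Bset hT v ((tp hT v w).getVert i) = univ \ Bset hT w ((tp hT v w).getVert (i-1)) := by
  have hpPath := tp_isPath hT v w
  have hmem_i : (tp hT v w).getVert i ∈ (tp hT v w).support := getVert_mem_support _ hid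
  have hmem_im : (tp hT v w).getVert (i-1) ∈ (tp hT v w).support :=
    getVert_mem_support _ (by omega)
  have hadj : G.Adj ((tp hT v w).getVert (i-1)) ((tp hT v w).getVert i) := by
    have := (tp hT v w).adj_getVert_succ (show i - 1 < (tp hT v w).length by omega)
    rwa [show i - 1 + 1 = i by omega] at this
  ext x
  rw [mem_Bset, Finset.mem_sdiff, mem_Bset]
  simp only [mem_univ, true_and]
  have hstep1 : (tp hT v w).getVert i ∈ (tp hT v x).support
      ↔ (tp hT v w).getVert i ∈ (tp hT ((tp hT v w).getVert (i-1)) x).support := by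
    apply mem_tp_of_walk hT ((tp hT v w).takeUntil _ hmem_im)
    intro hmem
    have := (mem_takeUntil_iff hpPath (by omega) hid hmem_im).mp hmem
    omega
  have hstep2 := mem_tp_edge hT hadj x
  have hstep3 : (tp hT v w).getVert (i-1) ∈ (tp hT ((tp hT v w).getVert i) x).support
      ↔ (tp hT v w).getVert (i-1) ∈ (tp hT w x).support := by
    apply mem_tp_of_walk hT ((tp hT v w).dropUntil _ hmem_i)
    intro hmem
    have := (mem_dropUntil_iff hpPath hid (by omega) hmem_i).mp hmem
    omega
  rw [hstep1, hstep2]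
  exact not_congr hstep3

lemma card_Bset_getVert_ge (hT : G.IsTree) [Fintype V] {v w : V} {i : ℕ} (hi1 : 1 ≤ i)
    (hid : i ≤ (tp hT v w).length) :
    i ≤ (Bset hT w ((tp hT v w).getVert (i-1))).card := by
  have hsub : (Finset.range i).image (tp hT v w).getVert
      ⊆ Bset hT w ((tp hT v w).getVert (i-1)) := by
    intro x hx
    rw [Finset.mem_image] at hx
    obtain ⟨j, hj, rfl⟩ := hx
    rw [Finset.mem_range] at hj
    rw [mem_Bset]
    exact getVert_mem_tp_from_w hT (show j ≤ i - 1 by omega) (by omega)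
  have hcard : ((Finset.range i).image (tp hT v w).getVert).card = i := by
    rw [Finset.card_image_of_injOn, Finset.card_range]
    intro x hx y hy hxy
    rw [Finset.coe_range, Set.mem_Iio] at hx hy
    exact getVert_inj _ (tp_isPath hT v w) x y (by omega) (by omega) hxy
  calc i = ((Finset.range i).image (tp hT v w).getVert).card := hcard.symm
    _ ≤ _ := Finset.card_le_card hsub

lemma Bset_getVert_mono (hT : G.IsTree) [Fintype V] {v w : V} {i : ℕ} (hi1 : 1 ≤ i)
    (hid : i + 1 ≤ (tp hT v w).length) :
    Bset hT w ((tp hT v w).getVert (i-1)) ⊆ Bset hT w ((tp hT v w).getVert i) := by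
  apply Bset_subset_of_mem hT
  exact getVert_mem_tp_from_w hT (show i - 1 ≤ i by omega) (by omega)

lemma Bset_leaf_eq (hT : G.IsTree) [Fintype V] [DecidableRel G.Adj] {v z : V}
    (hv : G.degree v = 1) (hzv : z ≠ v) : Bset hT z v = {v} := by
  ext x
  rw [mem_Bset, Finset.mem_singleton]
  constructor
  · exact leaf_mem_tp hT hv hzv
  · rintro rfl
    exact Walk.end_mem_support _
/-! ### Main assembly -/

variable [DecidableRel G.Adj]

lemma dk_pos (hT : G.IsTree) {k : ℕ} (hk2 : 2 ≤ k) (hkn : k ≤ Fintype.card V)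
    (hcard : 2 ≤ Fintype.card V) (v : V) : 0 < steinerKDist G k v := by
  rw [steinerKDist_tree hT k v]
  obtain ⟨u, hu⟩ : (univ.erase v).Nonempty := by
    rw [← Finset.card_pos, Finset.card_erase_of_mem (mem_univ v), Finset.card_univ]
    omega
  have hterm : 0 < (Fintype.card V - 1).choose (k-1)
      - (Fintype.card V - 1 - (Bset hT v u).card).choose (k-1) := by
    have hb : 1 ≤ (Bset hT v u).card := Finset.card_pos.mpr ⟨u, self_mem_Bset⟩
    have h1 : (Fintype.card V - 1 - (Bset hT v u).card).choose (k-1)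
        ≤ (Fintype.card V - 2).choose (k-1) := Nat.choose_le_choose _ (by omega)
    have hp : (Fintype.card V - 1).choose (k-1)
        = (Fintype.card V - 2).choose (k-2) + (Fintype.card V - 2).choose (k-1) := by
      rw [show Fintype.card V - 1 = (Fintype.card V - 2) + 1 by omega,
        show k - 1 = (k-2) + 1 by omega, Nat.choose_succ_succ]
    have hpos : 0 < (Fintype.card V - 2).choose (k-2) := Nat.choose_pos (by omega)
    omega
  calc 0 < (Fintype.card V - 1).choose (k-1)
      - (Fintype.card V - 1 - (Bset hT v u).card).choose (k-1) := hterm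
    _ ≤ _ := Finset.single_le_sum (f := fun u => (Fintype.card V - 1).choose (k-1)
        - (Fintype.card V - 1 - (Bset hT v u).card).choose (k-1))
        (fun _ _ => Nat.zero_le _) hu

lemma ratio_le (hT : G.IsTree) (n k : ℕ) (hn : Fintype.card V = n)
    (hk2 : 2 ≤ k) (hkn : k ≤ n)
    (F : ℕ → ℚ)
    (hF : ∀ r : ℕ, F r = 1 +
      (((n - 2).choose k : ℚ) - ((n - r).choose k : ℚ) - ((r - 1).choose k : ℚ)) /
        (((n - r).choose k : ℚ) + ((n - r - 1 : ℕ) : ℚ) * ((n - 2).choose (k - 2) : ℚ)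
          + (r : ℚ) * ((n - 1).choose (k - 1) : ℚ) - ((n - 1).choose k : ℚ)))
    (Fstar : ℚ) (hFstar : IsGreatest (F '' {r : ℕ | 1 ≤ r ∧ r ≤ n - 1}) Fstar)
    (v w : V) (hv : G.degree v = 1) (hw : G.degree w = 1) (hvw : v ≠ w) :
    (steinerKDist G k v : ℚ) / (steinerKDist G k w : ℚ) ≤ Fstar := by
  subst hn
  set n := Fintype.card V with hncard
  have hn2 : 2 ≤ n := by omega
  set p := tp hT v w with hp
  set d := p.length with hd
  have hpPath : p.IsPath := tp_isPath hT v w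
  have hd1 : 1 ≤ d := by
    rcases Nat.eq_zero_or_pos d with h0 | h
    · exact absurd (Walk.eq_of_length_eq_zero (show p.length = 0 from h0)) hvw
    · omega
  have hdn : d ≤ n - 1 := by
    have h1 : p.support.length = d + 1 := Walk.length_support p
    have h2 : p.support.length ≤ Fintype.card V :=
      List.Nodup.length_le_card hpPath.support_nodup
    omega
  -- the profile of branch sizes along the path, seen from w
  set a : ℕ → ℕ := fun i => (Bset hT w (p.getVert (i-1))).card with ha
  have ha1 : a 1 = 1 := by
    have h0 : p.getVert 0 = v := Walk.getVert_zero p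
    rw [ha]
    simp only [show (1:ℕ) - 1 = 0 from rfl, h0]
    rw [Bset_leaf_eq hT hv (Ne.symm hvw)]
    simp
  have hcompl : ∀ i, 1 ≤ i → i ≤ d →
      (Bset hT v (p.getVert i)).card = n - a i := by
    intro i h1 h2
    rw [ha]
    have := Bset_getVert_compl hT (v := v) (w := w) h1 h2
    rw [this, Finset.card_sdiff_of_subset (Finset.subset_univ _), Finset.card_univ]
  have had : a d = n - 1 := by
    have h1 := hcompl d hd1 le_rfl
    have h2 : p.getVert d = w := Walk.getVert_length p
    rw [h2] at h1
    rw [Bset_leaf_eq hT hw hvw] at h1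
    simp only [Finset.card_singleton] at h1
    have hle : a d ≤ Fintype.card V := Finset.card_le_univ _
    omega
  have hlow : ∀ i, 1 ≤ i → i ≤ d → i ≤ a i := by
    intro i h1 h2
    exact card_Bset_getVert_ge hT h1 h2
  have hstep1 : ∀ j, 1 ≤ j → j + 1 ≤ d → a j ≤ a (j+1) := by
    intro j h1 h2
    rw [ha]
    simp only [show j + 1 - 1 = j by omega]
    exact Finset.card_le_card (Bset_getVert_mono hT (by omega) h2)
  have hmono : ∀ i j, 1 ≤ i → i ≤ j → j ≤ d → a i ≤ a j := by
    intro i j h1 hij hjd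
    induction j with
    | zero => exact absurd (h1.trans hij) (by omega)
    | succ j ih =>
      rcases Nat.lt_or_ge i (j+1) with h | h
      · have hb : a j ≤ a (j+1) := hstep1 j (by omega) (by omega)
        have hc : a i ≤ a j := ih (by omega) (by omega)
        omega
      · exact le_of_eq (congrArg a (by omega))
  obtain ⟨r, hr1, hrn, hN0, hNle, hD0, hDle⟩ :=
    arith_main n k d a hk2 hkn hd1 hdn ha1 had hlow hmono
  -- express the Steiner k-distances
  have hcastv : ∀ z : V, (steinerKDist G k z : ℚ)
      = ∑ u ∈ univ.erase z, gQ n k ((Bset hT z u).card) := by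
    intro z
    rw [steinerKDist_tree hT k z]
    rw [Nat.cast_sum]
    apply Finset.sum_congr rfl
    intro u _
    rw [Nat.cast_sub (Nat.choose_le_choose _ (Nat.sub_le _ _))]
    rfl
  set SP : Finset V := p.support.toFinset with hSP
  have hvSP : v ∈ SP := List.mem_toFinset.mpr (Walk.start_mem_support _)
  have hwSP : w ∈ SP := List.mem_toFinset.mpr (Walk.end_mem_support _)
  have hsplit : ∀ (z : V), z ∈ SP → ∀ (f : V → ℚ),
      ∑ u ∈ univ.erase z, f u
        = (∑ u ∈ SP.erase z, f u) + ∑ u ∈ univ.filter (fun u => u ∉ SP), f u := by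
    intro z hz f
    rw [← Finset.sum_filter_add_sum_filter_not (univ.erase z) (fun u => u ∈ SP) f]
    congr 1
    · apply Finset.sum_congr _ (fun _ _ => rfl)
      ext u
      rw [Finset.mem_filter, Finset.mem_erase, Finset.mem_erase]
      constructor
      · rintro ⟨⟨h1, _⟩, h2⟩
        exact ⟨h1, h2⟩
      · rintro ⟨h1, h2⟩
        exact ⟨⟨h1, Finset.mem_univ u⟩, h2⟩
    · apply Finset.sum_congr _ (fun _ _ => rfl)
      ext u
      rw [Finset.mem_filter, Finset.mem_filter, Finset.mem_erase]
      constructor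
      · rintro ⟨⟨_, _⟩, h2⟩
        exact ⟨Finset.mem_univ u, h2⟩
      · rintro ⟨_, h2⟩
        refine ⟨⟨fun h => h2 (by rw [h]; exact hz), Finset.mem_univ u⟩, h2⟩
  -- off-path parts agree
  have hoff : ∀ u ∈ univ.filter (fun u => u ∉ SP),
      gQ n k ((Bset hT v u).card) = gQ n k ((Bset hT w u).card) := by
    intro u hu
    rw [Finset.mem_filter] at hu
    have : u ∉ p.support := fun h => hu.2 (List.mem_toFinset.mpr h)
    rw [Bset_eq_of_not_mem_support hT this]
  -- path parts as indexed sums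
  have hinj : ∀ x ∈ Finset.Icc 0 d, ∀ y ∈ Finset.Icc 0 d,
      p.getVert x = p.getVert y → x = y := by
    intro x hx y hy hxy
    rw [Finset.mem_Icc] at hx hy
    exact getVert_inj p hpPath x y hx.2 hy.2 hxy
  have himgv : SP.erase v = (Finset.Icc 1 d).image p.getVert := by
    ext u
    simp only [Finset.mem_erase, hSP, List.mem_toFinset, Finset.mem_image, Finset.mem_Icc]
    constructor
    · rintro ⟨hne, hmem⟩
      obtain ⟨m, hm, hmle⟩ := Walk.mem_support_iff_exists_getVert.mp hmem
      refine ⟨m, ⟨?_, hmle⟩, hm⟩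
      rcases Nat.eq_zero_or_pos m with rfl | h
      · rw [Walk.getVert_zero] at hm
        exact absurd hm.symm hne
      · omega
    · rintro ⟨m, ⟨hm1, hm2⟩, rfl⟩
      refine ⟨?_, getVert_mem_support p hm2⟩
      intro hcon
      have h0 : p.getVert m = p.getVert 0 := by rw [hcon, Walk.getVert_zero]
      have := getVert_inj p hpPath m 0 hm2 (by omega) h0
      omega
  have himgw : SP.erase w = (Finset.range d).image p.getVert := by
    ext u
    simp only [Finset.mem_erase, hSP, List.mem_toFinset, Finset.mem_image, Finset.mem_range]
    constructor
    · rintro ⟨hne, hmem⟩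
      obtain ⟨m, hm, hmle⟩ := Walk.mem_support_iff_exists_getVert.mp hmem
      refine ⟨m, ?_, hm⟩
      rcases Nat.lt_or_ge m d with h | h
      · exact h
      · have hmd : m = d := by omega
        rw [hmd, Walk.getVert_length] at hm
        exact absurd hm.symm hne
    · rintro ⟨m, hm, rfl⟩
      refine ⟨?_, getVert_mem_support p (by omega)⟩
      intro hcon
      have h0 : p.getVert m = p.getVert d := by rw [hcon, Walk.getVert_length]
      have := getVert_inj p hpPath m d (by omega) le_rfl h0
      omega
  have hsumv : ∑ u ∈ SP.erase v, gQ n k ((Bset hT v u).card)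
      = ∑ i ∈ Finset.Icc 1 d, gQ n k (n - a i) := by
    rw [himgv, Finset.sum_image (fun x hx y hy h => by
      rw [Finset.mem_coe, Finset.mem_Icc] at hx hy
      exact getVert_inj p hpPath x y (by omega) (by omega) h)]
    apply Finset.sum_congr rfl
    intro i hi
    rw [Finset.mem_Icc] at hi
    rw [hcompl i hi.1 hi.2]
  have hsumw : ∑ u ∈ SP.erase w, gQ n k ((Bset hT w u).card)
      = ∑ i ∈ Finset.Icc 1 d, gQ n k (a i) := by
    rw [himgw, Finset.sum_image (fun x hx y hy h => by
      rw [Finset.mem_coe, Finset.mem_range] at hx hy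
      exact getVert_inj p hpPath x y (by omega) (by omega) h)]
    have hIcc : Finset.Icc 1 d = (Finset.range d).image (· + 1) := by
      ext i
      simp only [Finset.mem_Icc, Finset.mem_range, Finset.mem_image]
      constructor
      · rintro ⟨h1, h2⟩
        exact ⟨i - 1, by omega, by omega⟩
      · rintro ⟨m, hm, rfl⟩
        omega
    rw [hIcc, Finset.sum_image (fun x _ y _ h => by omega)]
    apply Finset.sum_congr rfl
    intro m _
    rw [ha]
    simp
  -- the off-path sum
  set Off : ℚ := ∑ u ∈ univ.filter (fun u => u ∉ SP), gQ n k ((Bset hT v u).card) with hOff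
  have hOffw : ∑ u ∈ univ.filter (fun u => u ∉ SP), gQ n k ((Bset hT w u).card) = Off :=
    (Finset.sum_congr rfl hoff).symm
  have hdkv : (steinerKDist G k v : ℚ) = (∑ i ∈ Finset.Icc 1 d, gQ n k (n - a i)) + Off := by
    rw [hcastv v, hsplit v hvSP, hsumv]
  have hdkw : (steinerKDist G k w : ℚ) = (∑ i ∈ Finset.Icc 1 d, gQ n k (a i)) + Off := by
    rw [hcastv w, hsplit w hwSP, hsumw, hOffw]
  -- lower bound for Off
  have hOfflb : ((n - 1 - d : ℕ) : ℚ) * gQ n k 1 ≤ Off := by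
    have hcardoff : (univ.filter (fun u => u ∉ SP)).card = n - 1 - d := by
      have h1 : (univ.filter (fun u => u ∉ SP)).card = n - SP.card := by
        rw [Finset.filter_not, Finset.filter_mem_eq_inter, Finset.univ_inter,
          Finset.card_sdiff_of_subset (Finset.subset_univ _), Finset.card_univ]
      have h2 : SP.card = d + 1 := by
        rw [hSP, List.toFinset_card_of_nodup hpPath.support_nodup, Walk.length_support]
      omega
    calc ((n - 1 - d : ℕ) : ℚ) * gQ n k 1
        = ∑ _u ∈ univ.filter (fun u => u ∉ SP), gQ n k 1 := by
          rw [Finset.sum_const, hcardoff, nsmul_eq_mul]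
      _ ≤ Off := by
          apply Finset.sum_le_sum
          intro u _
          exact gQ_mono n k (Finset.card_pos.mpr ⟨u, self_mem_Bset⟩)
  -- final inequalities
  have hXY : (steinerKDist G k v : ℚ) - (steinerKDist G k w : ℚ) ≤ NrQ n k r := by
    rw [hdkv, hdkw]
    have : (∑ i ∈ Finset.Icc 1 d, gQ n k (n - a i)) - (∑ i ∈ Finset.Icc 1 d, gQ n k (a i))
        = ∑ i ∈ Finset.Icc 1 d, (gQ n k (n - a i) - gQ n k (a i)) := by
      rw [Finset.sum_sub_distrib]
    linarith [hNle, this]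
  have hwlb : DrQ n k r ≤ (steinerKDist G k w : ℚ) := by
    rw [hdkw]
    linarith
  have hwpos : (0:ℚ) < (steinerKDist G k w : ℚ) := lt_of_lt_of_le hD0 hwlb
  have hstep : (steinerKDist G k v : ℚ) / (steinerKDist G k w : ℚ)
      ≤ 1 + NrQ n k r / DrQ n k r := by
    have h1 : (steinerKDist G k v : ℚ) / (steinerKDist G k w : ℚ)
        ≤ ((steinerKDist G k w : ℚ) + NrQ n k r) / (steinerKDist G k w : ℚ) :=
      (div_le_div_iff_of_pos_right hwpos).mpr (by linarith)
    have h2 : ((steinerKDist G k w : ℚ) + NrQ n k r) / (steinerKDist G k w : ℚ)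
        = 1 + NrQ n k r / (steinerKDist G k w : ℚ) := by
      rw [add_div, div_self (ne_of_gt hwpos)]
    have h3 : NrQ n k r / (steinerKDist G k w : ℚ) ≤ NrQ n k r / DrQ n k r :=
      div_le_div_of_nonneg_left hN0 hD0 hwlb
    linarith
  have hFr : F r = 1 + NrQ n k r / DrQ n k r := by
    rw [hF r, NrQ, DrQ]
  have hFrFs : F r ≤ Fstar := hFstar.2 ⟨r, ⟨hr1, hrn⟩, rfl⟩
  linarith

end SteinerAux


theorem stmt10 {V : Type*} [Fintype V] [DecidableEq V] (G : SimpleGraph V)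
    [DecidableRel G.Adj] (hT : G.IsTree) (n k : ℕ) (hn : Fintype.card V = n)
    (hk2 : 2 ≤ k) (hkn : k ≤ n)
    (F : ℕ → ℚ)
    (hF : ∀ r : ℕ, F r = 1 +
      (((n - 2).choose k : ℚ) - ((n - r).choose k : ℚ) - ((r - 1).choose k : ℚ)) /
        (((n - r).choose k : ℚ) + ((n - r - 1 : ℕ) : ℚ) * ((n - 2).choose (k - 2) : ℚ)
          + (r : ℚ) * ((n - 1).choose (k - 1) : ℚ) - ((n - 1).choose k : ℚ)))
    (Fstar : ℚ) (hFstar : IsGreatest (F '' {r : ℕ | 1 ≤ r ∧ r ≤ n - 1}) Fstar)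
    (v w : V) (hv : G.degree v = 1) (hw : G.degree w = 1) :
    1 / Fstar ≤ (steinerKDist G k v : ℚ) / (steinerKDist G k w : ℚ) ∧
      (steinerKDist G k v : ℚ) / (steinerKDist G k w : ℚ) ≤ Fstar := by
  have hn2 : 2 ≤ n := le_trans hk2 hkn
  have hcard2 : 2 ≤ Fintype.card V := by omega
  have hFn1 : F (n-1) = 1 := by
    rw [hF (n-1)]
    have h1 : n - (n-1) = 1 := by omega
    have h2 : (1:ℕ).choose k = 0 := Nat.choose_eq_zero_of_lt (by omega)
    have h3 : (n-1) - 1 = n - 2 := by omega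
    rw [h1, h3, h2]
    norm_num
  have hFs1 : 1 ≤ Fstar := by
    have := hFstar.2 ⟨n-1, ⟨by omega, le_rfl⟩, rfl⟩
    rwa [hFn1] at this
  have hkv := SteinerAux.dk_pos hT hk2 (by omega) hcard2 v
  have hkw := SteinerAux.dk_pos hT hk2 (by omega) hcard2 w
  have hkvQ : (0:ℚ) < (steinerKDist G k v : ℚ) := by exact_mod_cast hkv
  have hkwQ : (0:ℚ) < (steinerKDist G k w : ℚ) := by exact_mod_cast hkw
  by_cases hvw : v = w
  · subst hvw
    rw [div_self (ne_of_gt hkvQ)]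
    constructor
    · have := one_div_le_one_div_of_le one_pos hFs1
      simpa using this
    · exact hFs1
  · have hub := SteinerAux.ratio_le hT n k hn hk2 hkn F hF Fstar hFstar v w hv hw hvw
    have hlb := SteinerAux.ratio_le hT n k hn hk2 hkn F hF Fstar hFstar w v hw hv (Ne.symm hvw)
    refine ⟨?_, hub⟩
    have hpos : (0:ℚ) < (steinerKDist G k w : ℚ) / (steinerKDist G k v : ℚ) :=
      div_pos hkwQ hkvQ
    have h1 : 1 / Fstar ≤ 1 / ((steinerKDist G k w : ℚ) / (steinerKDist G k v : ℚ)) :=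
      one_div_le_one_div_of_le hpos hlb
    rwa [one_div_div] at h1
end

section
/- Let n, r, k be integers with 1 ≤ r ≤ n−1 and 2 ≤ k ≤ n, and let T be the r-comet on n vertices. Let a be one of the n−r leaves attached to the end vertex of the path. Then d_k(a) = C(n−r, k) + (n−r−1)·C(n−2, k−2) + r·C(n−1, k−1) − C(n−1, k), where C(m, j) denotes the binomial coefficient (taken to be 0 when m < j). -/
/-- The `r`-comet on `n` vertices: vertices `0, 1, …, r-1` form a path (of length `r-1`),
and each of the vertices `r, r+1, …, n-1` is a pendant leaf attached to the end vertex
`r-1` of that path. -/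
def comet (n r : ℕ) : SimpleGraph (Fin n) :=
  SimpleGraph.fromRel (fun i j =>
    (i.val + 1 = j.val ∧ j.val < r) ∨ (i.val = r - 1 ∧ r ≤ j.val))

/-
The Steiner tree of `{a} ∪ S` consists of the leaves in `{a} ∪ S`, the hub `r - 1`, and the path
from the lowest path vertex of `S` up to the hub: the path edge `j — j + 1` separates the comet,
so a connected set containing `{a} ∪ S` must use it as soon as `S` meets `{0, …, j}`. Hence
`d({a} ∪ S) = 1 + |S ∩ leaves| + #{j < r - 1 | S meets {0, …, j}}`. Summing over `S` by double
counting, each leaf other than `a` lies in `C(n-2, k-2)` of the sets, the edge `j — j + 1` is used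
by all but the `C(n-2-j, k-1)` sets avoiding `{0, …, j}`, and the hockey-stick identity sums the
latter to `C(n-1, k) - C(n-r, k)`.
-/

open Finset

section General

variable {V : Type*}

theorem steinerDist_add_one_eq_card [Fintype V] [DecidableEq V] {G : SimpleGraph V}
    {S W : Finset V} (hSW : S ⊆ W) (hW : (G.induce (W : Set V)).Connected)
    (hmin : ∀ W' : Finset V, S ⊆ W' → (G.induce (W' : Set V)).Connected → W ⊆ W') :
    steinerDist G S + 1 = #W := by
  obtain ⟨w⟩ := hW.nonempty
  obtain ⟨m, hm⟩ : ∃ m, #W = m + 1 := Nat.exists_eq_add_one.2 (card_pos.2 ⟨w, w.2⟩)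
  have hleast : IsLeast
      {m : ℕ | ∃ W : Finset V, S ⊆ W ∧ (G.induce (W : Set V)).Connected ∧ #W = m + 1} m :=
    ⟨⟨W, hSW, hW, hm⟩, fun m' ⟨W', hSW', hW', hm'⟩ => by
      have := card_le_card (hmin W' hSW' hW'); omega⟩
  rw [steinerDist, hleast.csInf_eq, hm]

theorem SimpleGraph.Connected.exists_adj_boundary {G : SimpleGraph V} {W s : Set V}
    (hW : (G.induce W).Connected) {x y : V} (hx : x ∈ W) (hy : y ∈ W) (hxs : x ∈ s)
    (hys : y ∉ s) : ∃ u ∈ W, ∃ v ∈ W, G.Adj u v ∧ u ∈ s ∧ v ∉ s := by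
  obtain ⟨p⟩ := hW.preconnected ⟨x, hx⟩ ⟨y, hy⟩
  obtain ⟨d, -, hd, hd'⟩ := p.exists_boundary_dart (Subtype.val ⁻¹' s) hxs hys
  exact ⟨_, d.fst.2, _, d.snd.2, d.adj, hd, hd'⟩

theorem filter_notMem_powersetCard [DecidableEq V] (A : Finset V) (m : ℕ) (a : V) :
    {S ∈ A.powersetCard m | a ∉ S} = (A.erase a).powersetCard m := by
  ext S
  simp only [mem_filter, mem_powersetCard, subset_erase]
  tauto

theorem card_filter_exists_powersetCard [DecidableEq V] (A : Finset V) (m : ℕ)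
    (p : V → Prop) [DecidablePred p] [DecidablePred fun S : Finset V => ∃ x ∈ S, p x] :
    (#{S ∈ A.powersetCard m | ∃ x ∈ S, p x} : ℤ) =
      ((#A).choose m : ℤ) - (#{x ∈ A | ¬p x}).choose m := by
  have hcompl :
      {S ∈ A.powersetCard m | ¬∃ x ∈ S, p x} = {x ∈ A | ¬p x}.powersetCard m := by
    ext S
    simp only [mem_filter, mem_powersetCard, subset_iff]
    grind
  have := card_filter_add_card_filter_not (s := A.powersetCard m) (fun S => ∃ x ∈ S, p x)
  rw [hcompl, card_powersetCard, card_powersetCard] at this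
  omega

theorem sum_card_filter_powersetCard [DecidableEq V] (A : Finset V) {m : ℕ} (hm : 1 ≤ m)
    (p : V → Prop) [DecidablePred p] :
    ∑ S ∈ A.powersetCard m, #{x ∈ S | p x} = #{x ∈ A | p x} * (#A - 1).choose (m - 1) := by
  calc ∑ S ∈ A.powersetCard m, #{x ∈ S | p x}
      = ∑ S ∈ A.powersetCard m, #{x ∈ {x ∈ A | p x} | {x} ⊆ S} := by
        refine sum_congr rfl fun S hS => congrArg card ?_
        ext x
        have hSA := (mem_powersetCard.1 hS).1
        simp only [mem_filter, singleton_subset_iff]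
        grind
    _ = ∑ x ∈ A with p x, #{S ∈ A.powersetCard m | {x} ⊆ S} := by
        exact sum_card_bipartiteAbove_eq_sum_card_bipartiteBelow _
    _ = #{x ∈ A | p x} * (#A - 1).choose (m - 1) := by
        rw [sum_const_nat fun x hx => ?_]
        rw [card_filter_powersetCard_subset _ _ _ (by simpa using (mem_filter.1 hx).1)
          (by simpa using hm), card_singleton]

theorem sum_range_add_choose_int (t s k : ℕ) :
    ∑ j ∈ range s, ((t + j).choose k : ℤ) = (t + s).choose (k + 1) - t.choose (k + 1) := by
  induction s with
  | zero => simp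
  | succ s ih =>
    rw [sum_range_succ, ih, ← add_assoc, Nat.choose_succ_succ', Nat.cast_add]
    ring

end General

section Comet

variable {n r : ℕ}

theorem comet_adj {i j : Fin n} :
    (comet n r).Adj i j ↔ i ≠ j ∧
      ((i.val + 1 = j.val ∧ j.val < r) ∨ (i.val = r - 1 ∧ r ≤ j.val) ∨
       (j.val + 1 = i.val ∧ i.val < r) ∨ (j.val = r - 1 ∧ r ≤ i.val)) := by
  rw [comet, SimpleGraph.fromRel_adj]
  tauto

theorem comet_adj_of_le (hr : 0 < r) {u v : Fin n} (huv : (comet n r).Adj u v)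
    (hu : r ≤ u.val) : v.val = r - 1 := by
  rw [comet_adj] at huv
  omega

theorem comet_adj_of_le_of_lt {u v : Fin n} {j : ℕ} (huv : (comet n r).Adj u v)
    (hu : u.val ≤ j) (hv : j < v.val) (hj : j + 1 < r) : v.val = j + 1 := by
  rw [comet_adj] at huv
  omega

-- The vertex set of the Steiner tree of `T` whenever `T` contains a leaf and some other vertex.
def cometHull (r : ℕ) (T : Finset (Fin n)) : Finset (Fin n) :=
  T ∪ ({i | i.val = r - 1 ∨ (i.val < r ∧ ∃ t ∈ T, t.val ≤ i.val)} : Finset (Fin n))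

theorem mem_cometHull {T : Finset (Fin n)} {i : Fin n} :
    i ∈ cometHull r T ↔
      i ∈ T ∨ i.val = r - 1 ∨ (i.val < r ∧ ∃ t ∈ T, t.val ≤ i.val) := by
  simp [cometHull]

theorem subset_cometHull (T : Finset (Fin n)) : T ⊆ cometHull r T :=
  subset_union_left

theorem mem_cometHull_of_le {T : Finset (Fin n)} {i t : Fin n} (ht : t ∈ T)
    (hti : t.val ≤ i.val) (hi : i.val < r) : i ∈ cometHull r T :=
  mem_cometHull.2 (Or.inr (Or.inr ⟨hi, t, ht, hti⟩))

theorem exists_le_of_mem_cometHull {T : Finset (Fin n)} {i : Fin n} (hi : i ∈ cometHull r T)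
    (hir : i.val < r - 1) : ∃ t ∈ T, t.val ≤ i.val := by
  rcases mem_cometHull.1 hi with hi | hi | ⟨-, hi⟩
  · exact ⟨i, hi, le_rfl⟩
  · omega
  · exact hi

theorem cometHull_connected (hr : 0 < r) (hrn : r ≤ n) (T : Finset (Fin n)) :
    ((comet n r).induce (cometHull r T : Set (Fin n))).Connected := by
  set W := cometHull r T
  let hub : Fin n := ⟨r - 1, by omega⟩
  have hhub : hub ∈ (W : Set (Fin n)) := mem_cometHull.2 (Or.inr (Or.inl rfl))
  have reach_path : ∀ d, ∀ v (hv : v ∈ (W : Set (Fin n))), v.val + d = r - 1 →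
      ((comet n r).induce (W : Set (Fin n))).Reachable ⟨v, hv⟩ ⟨hub, hhub⟩ := by
    intro d
    induction d with
    | zero =>
      intro v hv hvd
      obtain rfl : v = hub := Fin.ext hvd
      rfl
    | succ d ih =>
      intro v hv hvd
      obtain ⟨t, ht, htv⟩ := exists_le_of_mem_cometHull hv (by omega)
      let w : Fin n := ⟨v.val + 1, by omega⟩
      have hw : w ∈ (W : Set (Fin n)) :=
        mem_cometHull_of_le ht (by simp [w]; omega) (by simp [w]; omega)
      have hvw : (comet n r).Adj v w :=
        comet_adj.2 ⟨by simp [Fin.ext_iff, w], by simp [w]; omega⟩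
      exact (SimpleGraph.induce_adj.2 hvw).reachable.trans (ih w hw (by simp [w]; omega))
  have reach : ∀ v, ((comet n r).induce (W : Set (Fin n))).Reachable v ⟨hub, hhub⟩ := by
    rintro ⟨v, hv⟩
    rcases lt_or_ge v.val r with hvr | hvr
    · exact reach_path (r - 1 - v.val) v hv (by omega)
    · have hvh : (comet n r).Adj v hub :=
        comet_adj.2 ⟨by simp [Fin.ext_iff, hub]; omega, by simp [hub]; omega⟩
      exact (SimpleGraph.induce_adj.2 hvh).reachable
  exact (SimpleGraph.connected_iff _).2
    ⟨fun u v => (reach u).trans (reach v).symm, ⟨⟨hub, hhub⟩⟩⟩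

theorem cometHull_subset (hr : 0 < r) {T W : Finset (Fin n)} {ℓ t : Fin n} (hℓ : ℓ ∈ T)
    (hℓr : r ≤ ℓ.val) (ht : t ∈ T) (htℓ : t ≠ ℓ) (hTW : T ⊆ W)
    (hW : ((comet n r).induce (W : Set (Fin n))).Connected) : cometHull r T ⊆ W := by
  intro i hi
  rcases mem_cometHull.1 hi with hi | hi | ⟨hir, s, hs, hsi⟩
  · exact hTW hi
  · obtain ⟨u, -, v, hv, huv, rfl, -⟩ :=
      hW.exists_adj_boundary (hTW hℓ) (hTW ht) (s := {ℓ}) rfl htℓ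
    obtain rfl : v = i := Fin.ext ((comet_adj_of_le hr huv hℓr).trans hi.symm)
    exact hv
  · rcases hsi.eq_or_lt with hsi | hsi
    · obtain rfl : s = i := Fin.ext hsi
      exact hTW hs
    obtain ⟨u, -, v, hv, huv, hu, hv'⟩ := hW.exists_adj_boundary (hTW hs) (hTW hℓ)
      (s := {v | v.val ≤ i.val - 1}) (by simp only [Set.mem_ofPred_eq]; omega)
      (by simp only [Set.mem_ofPred_eq]; omega)
    simp only [Set.mem_ofPred_eq, not_le] at hu hv'
    obtain rfl : v = i := Fin.ext (by have := comet_adj_of_le_of_lt huv hu hv' (by omega); omega)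
    exact hv

theorem card_cometHull (hr : 0 < r) (hrn : r ≤ n) (T : Finset (Fin n)) :
    #(cometHull r T) =
      #{i ∈ T | r ≤ i.val} + 1 + #{j ∈ range (r - 1) | ∃ t ∈ T, t.val ≤ j} := by
  let hub : Fin n := ⟨r - 1, by omega⟩
  let P : Finset (Fin n) := {i | i.val < r - 1 ∧ ∃ t ∈ T, t.val ≤ i.val}
  have hsplit : cometHull r T = {i ∈ T | r ≤ i.val} ∪ insert hub P := by
    ext i
    simp only [mem_cometHull, mem_union, mem_filter, mem_insert, P, hub, Fin.ext_iff, mem_univ,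
      true_and]
    grind
  have hP : #P = #{j ∈ range (r - 1) | ∃ t ∈ T, t.val ≤ j} := by
    rw [← card_map Fin.valEmbedding]
    congr 1
    ext j
    simp only [P, mem_map, mem_filter, mem_univ, true_and, mem_range, Fin.valEmbedding_apply]
    exact ⟨fun ⟨i, hi, hij⟩ => hij ▸ hi, fun hj => ⟨⟨j, by omega⟩, hj, rfl⟩⟩
  rw [hsplit, card_union_of_disjoint, card_insert_of_notMem, hP]
  · ring
  · simp [P, hub]
  · rw [disjoint_left]
    simp only [mem_filter, mem_insert, P, hub, Fin.ext_iff, mem_univ, true_and]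
    omega

theorem steinerDist_comet_insert (hr : 0 < r) {a : Fin n} (ha : r ≤ a.val) {S : Finset (Fin n)}
    (haS : a ∉ S) (hS : S.Nonempty) :
    steinerDist (comet n r) (insert a S) =
      1 + #{i ∈ S | r ≤ i.val} + #{j ∈ range (r - 1) | ∃ s ∈ S, s.val ≤ j} := by
  obtain ⟨t, ht⟩ := hS
  have hrn : r ≤ n := by omega
  have key := steinerDist_add_one_eq_card (subset_cometHull _) (cometHull_connected hr hrn _)
    fun W hTW hW => cometHull_subset hr (mem_insert_self a S) ha (mem_insert_of_mem ht)
      (ne_of_mem_of_not_mem ht haS) hTW hW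
  have hpath : {j ∈ range (r - 1) | ∃ s ∈ insert a S, s.val ≤ j} =
      {j ∈ range (r - 1) | ∃ s ∈ S, s.val ≤ j} :=
    filter_congr fun j hj => by
      simp only [mem_range] at hj
      simp only [exists_mem_insert, or_iff_right_iff_imp]
      omega
  rw [card_cometHull hr hrn, filter_insert, if_pos ha,
    card_insert_of_notMem (by simp [haS]), hpath] at key
  omega

end Comet

section Counting

variable {n : ℕ}

theorem card_filter_le_val_erase {a : Fin n} {t : ℕ} (ht : t ≤ a.val) :
    #{i ∈ univ.erase a | t ≤ i.val} = n - t - 1 := by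
  have hsplit := card_filter_add_card_filter_not (s := univ) fun i : Fin n => i.val < t
  simp only [Fin.card_filter_val_lt, not_lt, card_univ, Fintype.card_fin] at hsplit
  rw [filter_erase, card_erase_of_mem (by simpa using ht)]
  omega

theorem sum_card_filter_le_powersetCard_erase {r m : ℕ} {a : Fin n} (ha : r ≤ a.val)
    (hm : 1 ≤ m) :
    ∑ S ∈ (univ.erase a).powersetCard m, #{i ∈ S | r ≤ i.val} =
      (n - r - 1) * (n - 2).choose (m - 1) := by
  rw [sum_card_filter_powersetCard _ hm, card_filter_le_val_erase ha, card_erase_of_mem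
    (mem_univ a), card_univ, Fintype.card_fin]
  rfl

theorem sum_card_filter_exists_le_powersetCard_erase {r : ℕ} (hr : 0 < r) {a : Fin n}
    (ha : r ≤ a.val) (m : ℕ) :
    (∑ S ∈ (univ.erase a).powersetCard m,
        #{j ∈ range (r - 1) | ∃ s ∈ S, s.val ≤ j} : ℤ) =
      (r - 1 : ℕ) * ((n - 1).choose m : ℤ) -
        ((n - 1).choose (m + 1) - (n - r).choose (m + 1)) := by
  -- `n - 2 - j` is written as `(n - r) + (r - 2 - j)` for `sum_range_reflect` below
  have hcount : ∀ j ∈ range (r - 1),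
      (#{S ∈ (univ.erase a).powersetCard m | ∃ s ∈ S, s.val ≤ j} : ℤ) =
        (n - 1).choose m - ((n - r) + (r - 1 - 1 - j)).choose m := by
    intro j hj
    rw [mem_range] at hj
    have hnot : {i ∈ univ.erase a | ¬i.val ≤ j} = {i ∈ univ.erase a | j + 1 ≤ i.val} :=
      filter_congr fun i _ => by omega
    rw [card_filter_exists_powersetCard _ m fun s : Fin n => s.val ≤ j, hnot,
      card_filter_le_val_erase (by omega), card_erase_of_mem (mem_univ a), card_univ,
      Fintype.card_fin]
    congr 3
    omega
  have hhockey := sum_range_add_choose_int (n - r) (r - 1) m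
  rw [show n - r + (r - 1) = n - 1 by omega] at hhockey
  have hswap :
      ∑ S ∈ (univ.erase a).powersetCard m, #{j ∈ range (r - 1) | ∃ s ∈ S, s.val ≤ j} =
      ∑ j ∈ range (r - 1), #{S ∈ (univ.erase a).powersetCard m | ∃ s ∈ S, s.val ≤ j} :=
    sum_card_bipartiteAbove_eq_sum_card_bipartiteBelow _
  rw [← Nat.cast_sum, hswap, Nat.cast_sum, sum_congr rfl hcount, sum_sub_distrib,
    sum_const, card_range, sum_range_reflect (fun j => ((n - r + j).choose m : ℤ)), hhockey]
  simp

end Counting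

theorem stmt11_general (n r k : ℕ) (hr1 : 1 ≤ r) (hk2 : 2 ≤ k)
    (a : Fin n) (ha : r ≤ a.val) :
    (steinerKDist (comet n r) k a : ℤ) =
      ((n - r).choose k : ℤ) + ((n - r - 1 : ℕ) : ℤ) * ((n - 2).choose (k - 2) : ℤ)
        + (r : ℤ) * ((n - 1).choose (k - 1) : ℤ) - ((n - 1).choose k : ℤ) := by
  have hdist : ∀ S ∈ (univ.erase a).powersetCard (k - 1), steinerDist (comet n r) (insert a S) =
      1 + #{i ∈ S | r ≤ i.val} + #{j ∈ range (r - 1) | ∃ s ∈ S, s.val ≤ j} := by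
    intro S hS
    obtain ⟨hSa, hSk⟩ := mem_powersetCard.1 hS
    exact steinerDist_comet_insert hr1 ha (subset_erase.1 hSa).2 (card_pos.1 (by omega))
  have hleaves := sum_card_filter_le_powersetCard_erase ha (m := k - 1) (by omega)
  have hpath := sum_card_filter_exists_le_powersetCard_erase hr1 ha (k - 1)
  rw [show k - 1 + 1 = k by omega] at hpath
  rw [show k - 1 - 1 = k - 2 by omega] at hleaves
  rw [steinerKDist, filter_notMem_powersetCard, sum_congr rfl hdist, sum_add_distrib,
    sum_add_distrib, hleaves]
  push_cast
  rw [hpath, sum_const, card_powersetCard, card_erase_of_mem (mem_univ a), card_univ,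
    Fintype.card_fin, nsmul_one, Nat.cast_sub hr1]
  ring

theorem stmt11 (n r k : ℕ) (hr1 : 1 ≤ r) (hrn : r ≤ n - 1) (hk2 : 2 ≤ k) (hkn : k ≤ n)
    (a : Fin n) (ha : r ≤ a.val) :
    (steinerKDist (comet n r) k a : ℤ) =
      ((n - r).choose k : ℤ) + ((n - r - 1 : ℕ) : ℤ) * ((n - 2).choose (k - 2) : ℤ)
        + (r : ℤ) * ((n - 1).choose (k - 1) : ℤ) - ((n - 1).choose k : ℤ) :=
  stmt11_general n r k hr1 hk2 a ha
end

section
/- Let T be a finite tree, let 2 ≤ k ≤ |V(T)|, let v be a Steiner k-centroid of T and w a leaf of T with vw ∈ E(T). Suppose P_1 and P_2 are two branches at v not containing w which are paths, say P_1 is the path v = v_0, v_1, …, v_a and P_2 is the path v = v_0, r_1, …, r_b, with 1 ≤ a ≤ b (so |V(P_1)| ≤ |V(P_2)|). Let T' be the tree obtained from T by deleting the edge v_{a−1}v_a and adding the edge v_a r_b. Then d_k^T(v) ≤ d_k^{T'}(v). -/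
/-- A Steiner `k`-centroid: a vertex minimizing the Steiner `k`-distance. -/
noncomputable def IsSteinerKCentroid {V : Type*} [Fintype V] [DecidableEq V]
    (G : SimpleGraph V) (k : ℕ) (u : V) : Prop :=
  ∀ w : V, steinerKDist G k u ≤ steinerKDist G k w

set_option linter.unusedVariables false
set_option linter.unusedSectionVars false
namespace SteinerAux

variable {V : Type*} [Fintype V] [DecidableEq V]

/-- extract a path inside `W` from induced connectivity -/
lemma exists_path_of_induce_connected {H : SimpleGraph V} {W : Finset V}
    (hc : (H.induce (W : Set V)).Connected) {x y : V} (hx : x ∈ W) (hy : y ∈ W) :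
    ∃ wk : H.Walk x y, wk.IsPath ∧ ∀ z ∈ wk.support, z ∈ W := by
  obtain ⟨w0⟩ := hc ⟨x, hx⟩ ⟨y, hy⟩
  let w1 : H.Walk x y := w0.map (SimpleGraph.Embedding.induce (W : Set V)).toHom
  refine ⟨w1.bypass, w1.bypass_isPath, fun z hz => ?_⟩
  have hz' : z ∈ w1.support := w1.support_bypass_subset hz
  rw [show w1.support = _ from SimpleGraph.Walk.support_map _ _] at hz'
  obtain ⟨⟨z', hz'W⟩, _, rfl⟩ := List.mem_map.mp hz'
  exact hz'W

/-- build induced connectivity from walks to a basepoint -/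
lemma induce_connected_of_walks {H : SimpleGraph V} {W : Finset V} {v : V} (hv : v ∈ W)
    (h : ∀ u ∈ W, ∃ wk : H.Walk v u, ∀ z ∈ wk.support, z ∈ W) :
    (H.induce (W : Set V)).Connected := by
  apply SimpleGraph.induce_connected_of_patches v hv
  intro u hu
  obtain ⟨wk, hwk⟩ := h u hu
  refine ⟨{z | z ∈ wk.support}, fun z hz => hwk z hz, wk.start_mem_support,
    wk.end_mem_support, ?_⟩
  exact wk.connected_induce_support.preconnected _ _

/-- chain walks along a path given by a function -/
lemma exists_chainWalk {H : SimpleGraph V} {r : ℕ → V} {c : ℕ}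
    (hadj : ∀ i < c, H.Adj (r i) (r (i + 1))) :
    ∀ j, j ≤ c → ∃ w : H.Walk (r 0) (r j), w.support = (List.range (j + 1)).map r := by
  intro j
  induction j with
  | zero => exact fun _ => ⟨SimpleGraph.Walk.nil, by simp [List.range_succ]⟩
  | succ j ih =>
    intro hj
    obtain ⟨w, hw⟩ := ih (by omega)
    refine ⟨w.concat (hadj j (by omega)), ?_⟩
    rw [SimpleGraph.Walk.support_concat, hw]
    rw [show j + 1 + 1 = (j+1) + 1 from rfl, List.range_succ (n := j+1), List.map_append]
    simp

lemma chain_support_nodup {r : ℕ → V} {c j : ℕ} (hinj : Set.InjOn r (Set.Iic c))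
    (hj : j ≤ c) : ((List.range (j + 1)).map r).Nodup := by
  refine List.Nodup.map_on ?_ List.nodup_range
  intro x hx y hy hxy
  rw [List.mem_range] at hx hy
  exact hinj (by simp only [Set.mem_Iic]; omega) (by simp only [Set.mem_Iic]; omega) hxy

lemma mem_chain_support {r : ℕ → V} {j : ℕ} {z : V} :
    z ∈ (List.range (j + 1)).map r ↔ ∃ i, i ≤ j ∧ r i = z := by
  simp only [List.mem_map, List.mem_range]
  constructor
  · rintro ⟨i, hi, rfl⟩; exact ⟨i, by omega, rfl⟩
  · rintro ⟨i, hi, rfl⟩; exact ⟨i, by omega, rfl⟩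




variable {V : Type*} [Fintype V] [DecidableEq V]

lemma tree_path_unique {H : SimpleGraph V} (hH : H.IsTree) {x y : V}
    (P Q : H.Walk x y) (hP : P.IsPath) (hQ : Q.IsPath) : P = Q :=
  congrArg Subtype.val (hH.IsAcyclic.path_unique ⟨P, hP⟩ ⟨Q, hQ⟩)

variable {H : SimpleGraph V} {v : V} {r : ℕ → V} {c : ℕ}

lemma exists_chainPath (hadj : ∀ i < c, H.Adj (r i) (r (i + 1)))
    (hinj : Set.InjOn r (Set.Iic c)) (j : ℕ) (hj : j ≤ c) :
    ∃ w : H.Walk (r 0) (r j), w.IsPath ∧ w.support = (List.range (j + 1)).map r := by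
  obtain ⟨w, hw⟩ := exists_chainWalk hadj j hj
  exact ⟨w, SimpleGraph.Walk.IsPath.mk' (hw ▸ chain_support_nodup hinj hj), hw⟩

lemma r_ne_v (hr0 : r 0 = v) (hinj : Set.InjOn r (Set.Iic c)) {j : ℕ} (hj1 : 1 ≤ j)
    (hjc : j ≤ c) : r j ≠ v := by
  intro h
  have : j = 0 := hinj (by simp only [Set.mem_Iic]; omega) (by simp only [Set.mem_Iic]; omega)
    (by rw [h, hr0])
  omega

lemma branch_hit (hH : H.IsTree) (hr0 : r 0 = v)
    (hadj : ∀ i < c, H.Adj (r i) (r (i + 1))) (hinj : Set.InjOn r (Set.Iic c))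
    (hbr : {u : V | (H.deleteEdges {s(v, r 1)}).Reachable u (r 1)} = r '' Set.Icc 1 c)
    {u : V} (P : H.Walk v u) (hP : P.IsPath) {i : ℕ} (hi1 : 1 ≤ i) (hic : i ≤ c)
    (hmem : r i ∈ P.support) : ∃ s, i ≤ s ∧ s ≤ c ∧ u = r s := by
  have hrne : ∀ j, 1 ≤ j → j ≤ c → r j ≠ v := fun j hj1 hjc => r_ne_v hr0 hinj hj1 hjc
  -- u ≠ v
  have huv : u ≠ v := by
    rintro rfl
    rw [SimpleGraph.Walk.isPath_iff_eq_nil] at hP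
    subst hP
    simp only [SimpleGraph.Walk.support_nil, List.mem_singleton] at hmem
    exact hrne i hi1 hic hmem
  -- the suffix of P from r i avoids v
  set Q := P.dropUntil (r i) hmem with hQ
  have hvQ : v ∉ Q.support := by
    have hnodup := hP.support_nodup
    rw [← SimpleGraph.Walk.take_spec P hmem, SimpleGraph.Walk.support_append] at hnodup
    have hdisj := (List.nodup_append.mp hnodup).2.2
    have hvtake : v ∈ (P.takeUntil (r i) hmem).support :=
      SimpleGraph.Walk.start_mem_support _
    have hnt : v ∉ Q.support.tail := fun h => hdisj v hvtake v h rfl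
    intro hvs
    rw [SimpleGraph.Walk.support_eq_cons] at hvs
    rcases List.mem_cons.mp hvs with h | h
    · exact hrne i hi1 hic h.symm
    · exact hnt h
  -- transfer Q to the deleted graph
  have hedges : ∀ e ∈ Q.edges, e ∈ (H.deleteEdges {s(v, r 1)}).edgeSet := by
    intro e he
    rw [SimpleGraph.edgeSet_deleteEdges]
    refine ⟨Q.edges_subset_edgeSet he, ?_⟩
    intro hes
    rw [Set.mem_singleton_iff] at hes
    subst hes
    exact hvQ (Q.fst_mem_support_of_mem_edges he)
  have hreach1 : (H.deleteEdges {s(v, r 1)}).Reachable u (r i) :=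
    ⟨(Q.transfer _ hedges).reverse⟩
  -- chain from r 1 to r i in deleted graph
  have hadj' : ∀ t < i - 1, (H.deleteEdges {s(v, r 1)}).Adj (r (1 + t)) (r (1 + t + 1)) := by
    intro t ht
    rw [SimpleGraph.deleteEdges_adj]
    refine ⟨hadj (1 + t) (by omega), ?_⟩
    intro hes
    rw [Set.mem_singleton_iff, Sym2.eq_iff] at hes
    rcases hes with ⟨h1, _⟩ | ⟨_, h2⟩
    · exact hrne (1 + t) (by omega) (by omega) h1
    · exact hrne (1 + t + 1) (by omega) (by omega) h2
  obtain ⟨Cw, hCw⟩ := exists_chainWalk (r := fun t => r (1 + t)) (c := i - 1)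
    hadj' (i - 1) le_rfl
  have hreach2 : (H.deleteEdges {s(v, r 1)}).Reachable (r 1) (r i) := by
    have h1 : (1 : ℕ) + 0 = 1 := rfl
    have h2 : 1 + (i - 1) = i := by omega
    exact ⟨Cw.copy (by rw [h1]) (by rw [h2])⟩
  have hu : u ∈ {u : V | (H.deleteEdges {s(v, r 1)}).Reachable u (r 1)} :=
    hreach1.trans hreach2.symm
  rw [hbr] at hu
  obtain ⟨s, hs, hsu⟩ := hu
  rw [Set.mem_Icc] at hs
  refine ⟨s, ?_, hs.2, hsu.symm⟩
  by_contra hsi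
  push_neg at hsi
  -- unique path: P equals the chain to r s
  obtain ⟨C, hCpath, hCsupp⟩ := exists_chainPath hadj hinj s hs.2
  have hPC : P = C.copy hr0 hsu := tree_path_unique hH _ _ hP (by
    rw [SimpleGraph.Walk.isPath_copy]; exact hCpath)
  rw [hPC] at hmem
  rw [SimpleGraph.Walk.support_copy, hCsupp] at hmem
  obtain ⟨t, hts, hti⟩ := mem_chain_support.mp hmem
  have : t = i := hinj (by simp only [Set.mem_Iic]; omega) (by simp only [Set.mem_Iic]; omega) hti
  omega

lemma chain_subset (hH : H.IsTree) (hr0 : r 0 = v)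
    (hadj : ∀ i < c, H.Adj (r i) (r (i + 1))) (hinj : Set.InjOn r (Set.Iic c))
    {W : Finset V} (hconn : (H.induce (W : Set V)).Connected)
    (hv : v ∈ W) (hrc : r c ∈ W) : ∀ i ≤ c, r i ∈ W := by
  obtain ⟨P, hPpath, hPW⟩ := exists_path_of_induce_connected hconn hv hrc
  obtain ⟨C, hCpath, hCsupp⟩ := exists_chainPath hadj hinj c le_rfl
  have hPC : P = C.copy hr0 rfl := tree_path_unique hH _ _ hPpath (by
    rw [SimpleGraph.Walk.isPath_copy]; exact hCpath)
  intro i hi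
  apply hPW
  rw [hPC, SimpleGraph.Walk.support_copy, hCsupp]
  exact mem_chain_support.mpr ⟨i, hi, rfl⟩

lemma prune (hH : H.IsTree) (hr0 : r 0 = v)
    (hadj : ∀ i < c, H.Adj (r i) (r (i + 1))) (hinj : Set.InjOn r (Set.Iic c))
    (hbr : {u : V | (H.deleteEdges {s(v, r 1)}).Reachable u (r 1)} = r '' Set.Icc 1 c)
    {W : Finset V} (hconn : (H.induce (W : Set V)).Connected) (hv : v ∈ W)
    {j : ℕ} (hj1 : 1 ≤ j) (hjc : j ≤ c) :
    (H.induce ((W \ (Finset.Icc j c).image r : Finset V) : Set V)).Connected := by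
  have hvW' : v ∈ W \ (Finset.Icc j c).image r := by
    rw [Finset.mem_sdiff]
    refine ⟨hv, ?_⟩
    intro hvi
    obtain ⟨i, hi, hri⟩ := Finset.mem_image.mp hvi
    rw [Finset.mem_Icc] at hi
    exact r_ne_v hr0 hinj (by omega : 1 ≤ i) (by omega : i ≤ c) hri
  apply induce_connected_of_walks hvW'
  intro u hu
  obtain ⟨huW, huR⟩ := Finset.mem_sdiff.mp hu
  obtain ⟨P, hPpath, hPW⟩ := exists_path_of_induce_connected hconn hv huW
  refine ⟨P, fun z hz => Finset.mem_sdiff.mpr ⟨hPW z hz, ?_⟩⟩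
  intro hzR
  obtain ⟨i, hiIcc, hri⟩ := Finset.mem_image.mp hzR
  rw [Finset.mem_Icc] at hiIcc
  subst hri
  obtain ⟨s, his, hsc, hus⟩ := branch_hit hH hr0 hadj hinj hbr P hPpath
    (by omega : 1 ≤ i) hiIcc.2 hz
  exact huR (Finset.mem_image.mpr ⟨s, Finset.mem_Icc.mpr ⟨by omega, hsc⟩, hus ▸ rfl⟩)

noncomputable def mIdx (r : ℕ → V) (c : ℕ) (v : V) (S : Finset V) : ℕ :=
  ((Finset.range c).filter (fun i => r i ∈ insert v S)).sup id

lemma mIdx_mem {r : ℕ → V} {c : ℕ} {v : V} (hr0 : r 0 = v) (hc : 1 ≤ c) (S : Finset V) :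
    mIdx r c v S ∈ (Finset.range c).filter (fun i => r i ∈ insert v S) := by
  have hne : ((Finset.range c).filter (fun i => r i ∈ insert v S)).Nonempty :=
    ⟨0, Finset.mem_filter.mpr ⟨Finset.mem_range.mpr (by omega),
      by rw [hr0]; exact Finset.mem_insert_self _ _⟩⟩
  obtain ⟨b, hb, hsup⟩ := Finset.exists_mem_eq_sup _ hne id
  rw [mIdx, hsup]
  exact hb

lemma mIdx_lt {r : ℕ → V} {c : ℕ} {v : V} (hr0 : r 0 = v) (hc : 1 ≤ c) (S : Finset V) :
    mIdx r c v S < c :=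
  Finset.mem_range.mp (Finset.mem_filter.mp (mIdx_mem hr0 hc S)).1

lemma r_mIdx_mem {r : ℕ → V} {c : ℕ} {v : V} (hr0 : r 0 = v) (hc : 1 ≤ c) (S : Finset V) :
    r (mIdx r c v S) ∈ insert v S :=
  (Finset.mem_filter.mp (mIdx_mem hr0 hc S)).2

lemma le_mIdx {r : ℕ → V} {c : ℕ} {v : V} {S : Finset V} {i : ℕ} (hic : i < c)
    (hi : r i ∈ insert v S) : i ≤ mIdx r c v S :=
  Finset.le_sup (f := id) (Finset.mem_filter.mpr ⟨Finset.mem_range.mpr hic, hi⟩)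

lemma steinerSet_nonempty (H : SimpleGraph V) (hconn : H.Connected) (S : Finset V) :
    {m : ℕ | ∃ W : Finset V, S ⊆ W ∧ (H.induce (W : Set V)).Connected ∧
      W.card = m + 1}.Nonempty := by
  have hV : Nonempty V := hconn.nonempty
  have hpos : 1 ≤ Fintype.card V := Fintype.card_pos
  refine ⟨Fintype.card V - 1, Finset.univ, Finset.subset_univ _, ?_, ?_⟩
  · rw [Finset.coe_univ]
    exact ((SimpleGraph.induceUnivIso H).connected_iff).mpr hconn
  · rw [Finset.card_univ]; omega

lemma steinerDist_spec {H : SimpleGraph V} (hconn : H.Connected) (S : Finset V) :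
    ∃ W : Finset V, S ⊆ W ∧ (H.induce (W : Set V)).Connected ∧
      W.card = steinerDist H S + 1 :=
  Nat.sInf_mem (steinerSet_nonempty H hconn S)

lemma steinerDist_le {H : SimpleGraph V} {S W : Finset V} (h1 : S ⊆ W)
    (h2 : (H.induce (W : Set V)).Connected) (h3 : W.Nonempty) :
    steinerDist H S ≤ W.card - 1 := by
  have hpos := Finset.card_pos.mpr h3
  exact Nat.sInf_le ⟨W, h1, h2, by omega⟩

lemma key {H : SimpleGraph V} {v : V} {r : ℕ → V} {c : ℕ}
    (hH : H.IsTree) (hr0 : r 0 = v) (hc : 1 ≤ c)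
    (hadj : ∀ i < c, H.Adj (r i) (r (i + 1))) (hinj : Set.InjOn r (Set.Iic c))
    (hbr : {u : V | (H.deleteEdges {s(v, r 1)}).Reachable u (r 1)} = r '' Set.Icc 1 c)
    (S : Finset V) (hrcS : r c ∉ S) :
    steinerDist H (insert v (insert (r c) S)) =
      steinerDist H (insert v S) + (c - mIdx r c v S) := by
  set m := mIdx r c v S with hm
  have hmc : m < c := mIdx_lt hr0 hc S
  have hrm : r m ∈ insert v S := r_mIdx_mem hr0 hc S
  apply le_antisymm
  · obtain ⟨W₀, hW₀sub, hW₀conn, hW₀card⟩ := steinerDist_spec hH.isConnected (insert v S)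
    set W := W₀ ∪ (Finset.Icc (m + 1) c).image r with hW
    have hvW₀ : v ∈ W₀ := hW₀sub (Finset.mem_insert_self _ _)
    have hrmW₀ : r m ∈ W₀ := hW₀sub hrm
    have hconnW : (H.induce (W : Set V)).Connected := by
      apply induce_connected_of_walks (v := v) (Finset.mem_union_left _ hvW₀)
      intro u hu
      rcases Finset.mem_union.mp hu with h | h
      · obtain ⟨P, _, hPW⟩ := exists_path_of_induce_connected hW₀conn hvW₀ h
        exact ⟨P, fun z hz => Finset.mem_union_left _ (hPW z hz)⟩
      · obtain ⟨i, hiIcc, hri⟩ := Finset.mem_image.mp h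
        subst hri
        rw [Finset.mem_Icc] at hiIcc
        obtain ⟨P, _, hPW⟩ := exists_path_of_induce_connected hW₀conn hvW₀ hrmW₀
        have hadj2 : ∀ t < i - m, H.Adj (r (m + t)) (r (m + t + 1)) :=
          fun t ht => hadj _ (by omega)
        obtain ⟨Cw, hCw⟩ := exists_chainWalk (r := fun t => r (m + t)) hadj2 (i - m) le_rfl
        refine ⟨P.append (Cw.copy (by rw [Nat.add_zero])
          (by rw [show m + (i - m) = i by omega])), ?_⟩
        intro z hz
        rw [SimpleGraph.Walk.mem_support_append_iff] at hz
        rcases hz with hz | hz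
        · exact Finset.mem_union_left _ (hPW z hz)
        · rw [SimpleGraph.Walk.support_copy, hCw] at hz
          obtain ⟨t, htle, hrt⟩ := mem_chain_support.mp hz
          rcases Nat.eq_zero_or_pos t with rfl | htpos
          · rw [Nat.add_zero] at hrt
            exact Finset.mem_union_left _ (hrt ▸ hrmW₀)
          · refine Finset.mem_union_right _ (Finset.mem_image.mpr
              ⟨m + t, Finset.mem_Icc.mpr ⟨by omega, by omega⟩, hrt⟩)
    have hsubW : insert v (insert (r c) S) ⊆ W := by
      refine Finset.insert_subset (Finset.mem_union_left _ hvW₀) (Finset.insert_subset ?_ ?_)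
      · exact Finset.mem_union_right _ (Finset.mem_image.mpr
          ⟨c, Finset.mem_Icc.mpr ⟨by omega, le_rfl⟩, rfl⟩)
      · exact fun x hx => Finset.mem_union_left _ (hW₀sub (Finset.mem_insert_of_mem hx))
    have hle := steinerDist_le hsubW hconnW ⟨v, Finset.mem_union_left _ hvW₀⟩
    have hup : W.card ≤ (steinerDist H (insert v S) + 1) + (c - m) := by
      refine le_trans (Finset.card_union_le _ _) ?_
      have h1 := Finset.card_image_le (s := Finset.Icc (m + 1) c) (f := r)
      have h2 : (Finset.Icc (m + 1) c).card = c - m := by rw [Nat.card_Icc]; omega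
      omega
    have hWpos : 1 ≤ W.card := Finset.card_pos.mpr ⟨v, Finset.mem_union_left _ hvW₀⟩
    omega
  · apply le_csInf (steinerSet_nonempty H hH.isConnected _)
    rintro n ⟨W, hsub, hconn, hcard⟩
    have hvW : v ∈ W := hsub (Finset.mem_insert_self _ _)
    have hrcW : r c ∈ W := hsub (Finset.mem_insert_of_mem (Finset.mem_insert_self _ _))
    have hchain : ∀ i ≤ c, r i ∈ W := chain_subset hH hr0 hadj hinj hconn hvW hrcW
    set R := (Finset.Icc (m + 1) c).image r with hR
    have hconn' := prune hH hr0 hadj hinj hbr hconn hvW (j := m + 1)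
      (by omega) (by omega)
    have hRW : R ⊆ W := by
      intro z hz
      obtain ⟨i, hi, hri⟩ := Finset.mem_image.mp hz
      rw [Finset.mem_Icc] at hi
      exact hri ▸ hchain i hi.2
    have hnotR : ∀ x, x ∈ insert v S → x ∉ R := by
      intro x hx hxR
      obtain ⟨i, hi, hri⟩ := Finset.mem_image.mp hxR
      rw [Finset.mem_Icc] at hi
      rcases Nat.lt_or_ge i c with hic | hic
      · have := le_mIdx hic (hri ▸ hx)
        omega
      · have hieq : i = c := by omega
        subst hieq
        rcases Finset.mem_insert.mp (hri ▸ hx) with h | h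
        · exact r_ne_v hr0 hinj (by omega) le_rfl h
        · exact hrcS h
    have hcardR : R.card = c - m := by
      rw [hR, Finset.card_image_of_injOn (hinj.mono (by
        intro x hx
        rw [Finset.coe_Icc, Set.mem_Icc] at hx
        rw [Set.mem_Iic]
        omega))]
      rw [Nat.card_Icc]; omega
    have hsub' : insert v S ⊆ W \ R := by
      intro x hx
      exact Finset.mem_sdiff.mpr ⟨hsub (by
        rcases Finset.mem_insert.mp hx with h | h
        · exact h ▸ Finset.mem_insert_self _ _
        · exact Finset.mem_insert_of_mem (Finset.mem_insert_of_mem h)), hnotR x hx⟩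
    have hvWR : v ∈ W \ R := hsub' (Finset.mem_insert_self _ _)
    have hcard' : (W \ R).card = n + 1 - (c - m) := by
      rw [Finset.card_sdiff_of_subset hRW, hcard, hcardR]
    have hle := steinerDist_le hsub' hconn' ⟨v, hvWR⟩
    have hlt : R.card < W.card := Finset.card_lt_card ⟨hRW, fun h =>
      hnotR v (Finset.mem_insert_self _ _) (h hvW)⟩
    have hpos : 1 ≤ (W \ R).card := Finset.card_pos.mpr ⟨v, hvWR⟩
    omega

lemma induce_eq_of_agree {H₁ H₂ : SimpleGraph V} {x : V}
    (hagree : ∀ y z : V, y ≠ x → z ≠ x → (H₁.Adj y z ↔ H₂.Adj y z))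
    {W : Finset V} (hxW : x ∉ W) : H₁.induce (W : Set V) = H₂.induce (W : Set V) := by
  ext ⟨y, hy⟩ ⟨z, hz⟩
  simp only [SimpleGraph.comap_adj, Function.Embedding.coe_subtype]
  exact hagree y z (fun h => hxW (h ▸ hy)) (fun h => hxW (h ▸ hz))

lemma steinerDist_le_of_agree {H₁ H₂ : SimpleGraph V} {x v₀ : V}
    (hconn₁ : H₁.Connected)
    (hagree : ∀ y z : V, y ≠ x → z ≠ x → (H₁.Adj y z ↔ H₂.Adj y z))
    (hprune₁ : ∀ W : Finset V, v₀ ∈ W → (H₁.induce (W : Set V)).Connected →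
      (H₁.induce ((W.erase x : Finset V) : Set V)).Connected)
    {S : Finset V} (hv₀ : v₀ ∈ S) (hx : x ∉ S) :
    steinerDist H₂ S ≤ steinerDist H₁ S := by
  obtain ⟨W, hsub, hconn, hcard⟩ := steinerDist_spec hconn₁ S
  by_cases hxW : x ∈ W
  · set W' := W.erase x with hW'
    have hconn' := hprune₁ W (hsub hv₀) hconn
    have hsub' : S ⊆ W' := fun z hz =>
      Finset.mem_erase.mpr ⟨fun h => hx (h ▸ hz), hsub hz⟩
    have heq : H₁.induce (W' : Set V) = H₂.induce (W' : Set V) :=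
      induce_eq_of_agree hagree (Finset.notMem_erase _ _)
    have hle := steinerDist_le hsub' (heq ▸ hconn') ⟨v₀, hsub' hv₀⟩
    have hcW' : W'.card = W.card - 1 := Finset.card_erase_of_mem hxW
    have hpos : 1 ≤ W'.card := Finset.card_pos.mpr ⟨v₀, hsub' hv₀⟩
    omega
  · have heq : H₁.induce (W : Set V) = H₂.induce (W : Set V) :=
      induce_eq_of_agree hagree hxW
    have hle := steinerDist_le hsub (heq ▸ hconn) ⟨v₀, hsub hv₀⟩
    omega

lemma c_sub_mIdx_eq_card {v : V} {r : ℕ → V} {c : ℕ} (hr0 : r 0 = v) (hc : 1 ≤ c)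
    (hinj : Set.InjOn r (Set.Iic c)) (S : Finset V) :
    c - mIdx r c v S = ((Finset.range c).filter
      (fun t => ∀ i ∈ Finset.Ioo t c, r i ∉ S)).card := by
  set m := mIdx r c v S with hm
  have hmc : m < c := mIdx_lt hr0 hc S
  have hrm : r m ∈ insert v S := r_mIdx_mem hr0 hc S
  have hfeq : (Finset.range c).filter (fun t => ∀ i ∈ Finset.Ioo t c, r i ∉ S)
      = Finset.Ico m c := by
    ext t
    simp only [Finset.mem_filter, Finset.mem_range, Finset.mem_Ico, Finset.mem_Ioo]
    constructor
    · rintro ⟨htc, hC⟩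
      refine ⟨?_, htc⟩
      by_contra htm
      push_neg at htm
      have hmpos : 1 ≤ m := by omega
      have hrmv : r m ≠ v := r_ne_v hr0 hinj hmpos (by omega)
      rcases Finset.mem_insert.mp hrm with h | h
      · exact hrmv h
      · exact hC m ⟨by omega, hmc⟩ h
    · rintro ⟨hmt, htc⟩
      refine ⟨htc, fun i hi hriS => ?_⟩
      have : i ≤ m := le_mIdx (by omega) (Finset.mem_insert_of_mem hriS)
      omega
  rw [hfeq, Nat.card_Ico]

lemma sum_key {v : V} (U : Finset V) {r : ℕ → V} {c : ℕ}
    (hr0 : r 0 = v) (hc : 1 ≤ c) (hinj : Set.InjOn r (Set.Iic c))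
    (hmem : ∀ i, 1 ≤ i → i < c → r i ∈ U) (k' : ℕ) :
    ∑ S₀ ∈ Finset.powersetCard k' U, (c - mIdx r c v S₀)
      = ∑ t ∈ Finset.range c, (U.card - (c - 1 - t)).choose k' := by
  have h1 : ∀ S₀ ∈ Finset.powersetCard k' U, c - mIdx r c v S₀
      = ((Finset.range c).filter (fun t => ∀ i ∈ Finset.Ioo t c, r i ∉ S₀)).card :=
    fun S₀ _ => c_sub_mIdx_eq_card hr0 hc hinj S₀
  rw [Finset.sum_congr rfl h1]
  have h2 : ∀ S₀ ∈ Finset.powersetCard k' U,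
      ((Finset.range c).filter (fun t => ∀ i ∈ Finset.Ioo t c, r i ∉ S₀)).card
      = ∑ t ∈ Finset.range c, if (∀ i ∈ Finset.Ioo t c, r i ∉ S₀) then 1 else 0 :=
    fun S₀ _ => Finset.card_filter _ _
  rw [Finset.sum_congr rfl h2, Finset.sum_comm]
  refine Finset.sum_congr rfl ?_
  intro t ht
  rw [Finset.mem_range] at ht
  have hswap : ∑ S₀ ∈ Finset.powersetCard k' U,
      (if (∀ i ∈ Finset.Ioo t c, r i ∉ S₀) then 1 else 0)
      = ((Finset.powersetCard k' U).filter
          (fun S₀ => ∀ i ∈ Finset.Ioo t c, r i ∉ S₀)).card :=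
    (Finset.card_filter _ _).symm
  rw [hswap]
  set R := (Finset.Ioo t c).image r with hRdef
  have hRU : R ⊆ U := by
    intro z hz
    obtain ⟨i, hi, hri⟩ := Finset.mem_image.mp hz
    rw [Finset.mem_Ioo] at hi
    exact hri ▸ hmem i (by omega) hi.2
  have hfilter : (Finset.powersetCard k' U).filter
      (fun S₀ => ∀ i ∈ Finset.Ioo t c, r i ∉ S₀)
      = Finset.powersetCard k' (U \ R) := by
    ext S₀
    simp only [Finset.mem_filter, Finset.mem_powersetCard]
    constructor
    · rintro ⟨⟨hsubU, hcard⟩, hC⟩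
      refine ⟨fun z hz => Finset.mem_sdiff.mpr ⟨hsubU hz, fun hzR => ?_⟩, hcard⟩
      obtain ⟨i, hi, hri⟩ := Finset.mem_image.mp hzR
      exact hC i hi (hri ▸ hz)
    · rintro ⟨hsub, hcard⟩
      refine ⟨⟨fun z hz => (Finset.mem_sdiff.mp (hsub hz)).1, hcard⟩, ?_⟩
      intro i hi hriS
      exact (Finset.mem_sdiff.mp (hsub hriS)).2 (Finset.mem_image.mpr ⟨i, hi, rfl⟩)
  rw [hfilter, Finset.card_powersetCard]
  have hcardR : R.card = c - 1 - t := by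
    rw [hRdef, Finset.card_image_of_injOn (hinj.mono (by
      intro x hx
      rw [Finset.coe_Ioo, Set.mem_Ioo] at hx
      rw [Set.mem_Iic]
      omega))]
    rw [Nat.card_Ioo]; omega
  rw [Finset.card_sdiff_of_subset hRU, hcardR]

lemma chain_reach_del {H : SimpleGraph V} {v : V} {r : ℕ → V} {c : ℕ}
    (hr0 : r 0 = v) (hadj : ∀ i < c, H.Adj (r i) (r (i + 1)))
    (hinj : Set.InjOn r (Set.Iic c)) {i : ℕ} (hi1 : 1 ≤ i) (hic : i ≤ c) :
    (H.deleteEdges {s(v, r 1)}).Reachable (r 1) (r i) := by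
  have hadj' : ∀ t < i - 1, (H.deleteEdges {s(v, r 1)}).Adj (r (1 + t)) (r (1 + t + 1)) := by
    intro t ht
    rw [SimpleGraph.deleteEdges_adj]
    refine ⟨hadj (1 + t) (by omega), ?_⟩
    intro hes
    rw [Set.mem_singleton_iff, Sym2.eq_iff] at hes
    rcases hes with ⟨h1, _⟩ | ⟨_, h2⟩
    · exact r_ne_v hr0 hinj (by omega : 1 ≤ 1 + t) (by omega) h1
    · exact r_ne_v hr0 hinj (by omega : 1 ≤ 1 + t + 1) (by omega) h2
  obtain ⟨Cw, hCw⟩ := exists_chainWalk (r := fun t => r (1 + t)) (c := i - 1)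
    hadj' (i - 1) le_rfl
  exact ⟨Cw.copy (by norm_num) (by rw [show 1 + (i - 1) = i by omega])⟩

lemma reach_subset_of_closed {H : SimpleGraph V} {S : Set V} {x₀ : V} (hx₀ : x₀ ∈ S)
    (hcl : ∀ x ∈ S, ∀ y, H.Adj x y → y ∈ S) : ∀ u, H.Reachable u x₀ → u ∈ S := by
  have hgen : ∀ (y z : V) (w : H.Walk y z), y ∈ S → z ∈ S := by
    intro y z w
    induction w with
    | nil => exact id
    | cons h w ih => exact fun hy => ih (hcl _ hy _ h)
  intro u hr
  obtain ⟨w⟩ := hr.symm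
  exact hgen _ _ w hx₀

end SteinerAux

/-- The tree `T` has `v` as a Steiner `k`-centroid and a leaf `w` adjacent to `v`.
`P₁ : v = p 0, p 1, …, p a` and `P₂ : v = q 0, q 1, …, q b` are two distinct branches at `v`
not containing `w`, each of which is a path (the branch condition states that the connected
component of `p 1` (resp. `q 1`) in `T` with the edge from `v` deleted is exactly the rest of
the path).  `T'` is obtained from `T` by deleting the edge `p (a-1) p a` and adding the edge
`p a q b` (a leaf-transfer from `P₁` to `P₂`).  Then `d_k^T(v) ≤ d_k^{T'}(v)`. -/
theorem stmt13 {V : Type*} [Fintype V] [DecidableEq V] (G : SimpleGraph V)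
    [DecidableRel G.Adj] (hT : G.IsTree) (k : ℕ)
    (hk2 : 2 ≤ k) (hkn : k ≤ Fintype.card V)
    (v w : V) (hv : IsSteinerKCentroid G k v) (hw : G.degree w = 1) (hvw : G.Adj v w)
    (a b : ℕ) (ha : 1 ≤ a) (hab : a ≤ b)
    (p q : ℕ → V) (hp0 : p 0 = v) (hq0 : q 0 = v)
    (hpadj : ∀ i < a, G.Adj (p i) (p (i + 1)))
    (hqadj : ∀ i < b, G.Adj (q i) (q (i + 1)))
    (hpinj : Set.InjOn p (Set.Iic a)) (hqinj : Set.InjOn q (Set.Iic b))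
    (hpbranch : {u : V | (G.deleteEdges {s(v, p 1)}).Reachable u (p 1)}
      = p '' Set.Icc 1 a)
    (hqbranch : {u : V | (G.deleteEdges {s(v, q 1)}).Reachable u (q 1)}
      = q '' Set.Icc 1 b)
    (hdistinct : p 1 ≠ q 1)
    (hwp : w ∉ p '' Set.Icc 1 a) (hwq : w ∉ q '' Set.Icc 1 b) :
    steinerKDist G k v ≤
      steinerKDist
        ((G.deleteEdges {s(p (a - 1), p a)}) ⊔ SimpleGraph.fromEdgeSet {s(p a, q b)})
        k v := by
  classical
  open SteinerAux in
  set G' := (G.deleteEdges {s(p (a - 1), p a)}) ⊔ SimpleGraph.fromEdgeSet {s(p a, q b)}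
    with hG'def
  have hb1 : 1 ≤ b := le_trans ha hab
  have hpne : ∀ i, 1 ≤ i → i ≤ a → p i ≠ v := fun i h1 h2 => r_ne_v hp0 hpinj h1 h2
  have hqne : ∀ j, 1 ≤ j → j ≤ b → q j ≠ v := fun j h1 h2 => r_ne_v hq0 hqinj h1 h2
  have hpav : p a ≠ v := hpne a ha le_rfl
  -- the two branches are disjoint
  have hdisj : ∀ i j, 1 ≤ i → i ≤ a → 1 ≤ j → j ≤ b → p i ≠ q j := by
    intro i j hi1 hia hj1 hjb heq
    obtain ⟨C, hCpath, hCsupp⟩ := exists_chainPath hpadj hpinj i hia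
    obtain ⟨D, hDpath, hDsupp⟩ := exists_chainPath hqadj hqinj j hjb
    have hCD : C = D.copy (hq0.trans hp0.symm) heq.symm :=
      tree_path_unique hT _ _ hCpath (by rw [SimpleGraph.Walk.isPath_copy]; exact hDpath)
    have hmapeq : (List.range (i + 1)).map p = (List.range (j + 1)).map q := by
      rw [← hCsupp, hCD, SimpleGraph.Walk.support_copy, hDsupp]
    have hget := congrArg (fun l => l[1]?) hmapeq
    simp only [List.getElem?_map] at hget
    rw [List.getElem?_range (by omega : 1 < i + 1),
      List.getElem?_range (by omega : 1 < j + 1)] at hget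
    simp only [Option.map_some] at hget
    exact hdistinct (Option.some.inj hget)
  have hpaqb : p a ≠ q b := hdisj a b ha le_rfl hb1 le_rfl
  -- the only neighbour of `p a` in `G` is `p (a-1)`
  have h_pa_nbr : ∀ x, G.Adj (p a) x → x = p (a - 1) := by
    intro x hx
    obtain ⟨Ca, hCapath, hCasupp⟩ := exists_chainPath hpadj hpinj a le_rfl
    by_cases hxs : ∃ s, s ≤ a ∧ p s = x
    · obtain ⟨s, hsa, rfl⟩ := hxs
      rcases Nat.lt_or_ge s (a - 1) with hslt | hsge
      · -- build an alternative path from v to p a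
        obtain ⟨Cs, hCspath, hCssupp⟩ := exists_chainPath hpadj hpinj s (by omega)
        have hpamem : p a ∉ Cs.support := by
          rw [hCssupp]
          intro hmem
          obtain ⟨t, hts, htp⟩ := mem_chain_support.mp hmem
          have : t = a := hpinj (by simp only [Set.mem_Iic]; omega)
            (Set.mem_Iic.mpr le_rfl) htp
          omega
        have hQpath : (Cs.concat hx.symm).IsPath := by
          rw [SimpleGraph.Walk.isPath_def, SimpleGraph.Walk.support_concat,
            List.nodup_append]
          exact ⟨hCspath.support_nodup, List.nodup_singleton _,
            fun y hy z hz hyz => hpamem (by rw [List.mem_singleton] at hz; rw [← hz, ← hyz]; exact hy)⟩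
        have hQC : Cs.concat hx.symm = Ca :=
          tree_path_unique hT _ _ hQpath hCapath
        have hlen := congrArg (fun (w : G.Walk (p 0) (p a)) => w.support.length) hQC
        simp only [SimpleGraph.Walk.support_concat, List.concat_eq_append,
          List.length_append, hCssupp, hCasupp, List.length_map,
          List.length_range, List.length_singleton] at hlen
        omega
      · rcases Nat.lt_or_ge s a with hsa' | hsa'
        · have : s = a - 1 := by omega
          rw [this]
        · have : s = a := by omega
          subst this
          exact absurd rfl hx.ne
    · push_neg at hxs
      exfalso
      have hpamem : x ∉ Ca.support := by
        rw [hCasupp]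
        intro hmem
        obtain ⟨t, hts, htp⟩ := mem_chain_support.mp hmem
        exact hxs t hts htp
      have hQpath : (Ca.concat hx).IsPath := by
        rw [SimpleGraph.Walk.isPath_def, SimpleGraph.Walk.support_concat,
          List.nodup_append]
        exact ⟨hCapath.support_nodup, List.nodup_singleton _,
          fun y hy z hz hyz => hpamem (by rw [List.mem_singleton] at hz; rw [← hz, ← hyz]; exact hy)⟩
      have hp1mem : p 1 ∈ (Ca.concat hx).support := by
        rw [SimpleGraph.Walk.support_concat]
        exact List.mem_append.mpr (Or.inl (by
          rw [hCasupp]; exact mem_chain_support.mpr ⟨1, by omega, rfl⟩))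
      obtain ⟨s, hs1, hs2, hxs'⟩ := branch_hit hT hp0 hpadj hpinj hpbranch
        ((Ca.concat hx).copy hp0 rfl) (by rw [SimpleGraph.Walk.isPath_copy]; exact hQpath)
        le_rfl ha (by rw [SimpleGraph.Walk.support_copy]; exact hp1mem)
      exact hxs s hs2 hxs'.symm
  -- adjacency in G'
  have hG'adj : ∀ x y, G'.Adj x y ↔
      ((G.Adj x y ∧ s(x, y) ≠ s(p (a - 1), p a)) ∨ s(x, y) = s(p a, q b)) := by
    intro x y
    rw [hG'def]
    simp only [SimpleGraph.sup_adj, SimpleGraph.deleteEdges_adj,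
      SimpleGraph.fromEdgeSet_adj, Set.mem_singleton_iff]
    constructor
    · rintro (⟨h1, h2⟩ | ⟨h1, _⟩)
      · exact Or.inl ⟨h1, h2⟩
      · exact Or.inr h1
    · rintro (⟨h1, h2⟩ | h1)
      · exact Or.inl ⟨h1, h2⟩
      · refine Or.inr ⟨h1, ?_⟩
        rw [Sym2.eq_iff] at h1
        rcases h1 with ⟨rfl, rfl⟩ | ⟨rfl, rfl⟩
        · exact hpaqb
        · exact fun h => hpaqb h.symm
  -- the only neighbour of `p a` in `G'` is `q b`
  have hpa_nbr' : ∀ x, G'.Adj (p a) x → x = q b := by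
    intro x hx
    rcases (hG'adj _ _).mp hx with ⟨h1, h2⟩ | h1
    · exfalso
      have := h_pa_nbr x h1
      subst this
      exact h2 (Sym2.eq_swap)
    · rw [Sym2.eq_iff] at h1
      rcases h1 with ⟨-, rfl⟩ | ⟨h2, -⟩
      · rfl
      · exact absurd h2 hpaqb
  -- G' is connected
  have hG'reach : ∀ u, u ≠ p a → G'.Reachable v u := by
    intro u hu
    obtain ⟨P0⟩ := hT.isConnected v u
    set P := P0.bypass with hP
    have hPpath : P.IsPath := P0.bypass_isPath
    have hpaP : p a ∉ P.support := by
      intro h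
      obtain ⟨s, hs1, hs2, hus⟩ := branch_hit hT hp0 hpadj hpinj hpbranch
        P hPpath ha le_rfl h
      have : s = a := by omega
      exact hu (by rw [hus, this])
    have hedges : ∀ e ∈ P.edges, e ∈ G'.edgeSet := by
      intro e he
      induction e with
      | h x y =>
        rw [SimpleGraph.mem_edgeSet, hG'adj]
        have hadjxy : G.Adj x y := SimpleGraph.Walk.edges_subset_edgeSet P he
        refine Or.inl ⟨hadjxy, ?_⟩
        intro hs
        rw [Sym2.eq_iff] at hs
        rcases hs with ⟨-, rfl⟩ | ⟨rfl, -⟩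
        · exact hpaP (P.snd_mem_support_of_mem_edges he)
        · exact hpaP (P.fst_mem_support_of_mem_edges he)
    exact ⟨P.transfer G' hedges⟩
  have hG'conn : G'.Connected := by
    rw [SimpleGraph.connected_iff_exists_forall_reachable]
    refine ⟨v, fun u => ?_⟩
    by_cases hu : u = p a
    · subst hu
      refine (hG'reach (q b) (fun h => hpaqb h.symm)).trans ?_
      refine SimpleGraph.Adj.reachable ?_
      have : G'.Adj (p a) (q b) := (hG'adj _ _).mpr (Or.inr rfl)
      exact this.symm
    · exact hG'reach u hu
  -- G' is acyclic
  have hG'ac : G'.IsAcyclic := by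
    intro x cyc hcyc
    by_cases hpa : p a ∈ cyc.support
    · have hcyc' := hcyc.rotate hpa
      cases hceq : cyc.rotate (p a) hpa with
      | nil =>
        rw [hceq] at hcyc'
        exact hcyc'.ne_nil rfl
      | cons hadj1 w =>
        rw [hceq] at hcyc'
        rename_i y
        have hy : y = q b := hpa_nbr' _ hadj1
        subst hy
        have hwrev_ne : p a ≠ q b := hpaqb
        obtain ⟨z, hz, w', hw'⟩ := SimpleGraph.Walk.exists_eq_cons_of_ne hwrev_ne w.reverse
        have hzqb : z = q b := hpa_nbr' _ hz
        subst hzqb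
        have hmem : s(p a, q b) ∈ w.edges := by
          have : s(p a, q b) ∈ w.reverse.edges := by
            rw [hw', SimpleGraph.Walk.edges_cons]
            exact List.mem_cons_self
          rwa [SimpleGraph.Walk.edges_reverse, List.mem_reverse] at this
        have hnodup := hcyc'.isCircuit.isTrail.edges_nodup
        rw [SimpleGraph.Walk.edges_cons] at hnodup
        exact (List.nodup_cons.mp hnodup).1 hmem
    · have hedges : ∀ e ∈ cyc.edges, e ∈ G.edgeSet := by
        intro e he
        induction e with
        | h x' y' =>
          rw [SimpleGraph.mem_edgeSet]
          have hadjxy : G'.Adj x' y' := SimpleGraph.Walk.edges_subset_edgeSet cyc he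
          rcases (hG'adj _ _).mp hadjxy with ⟨h1, -⟩ | h1
          · exact h1
          · exfalso
            rw [Sym2.eq_iff] at h1
            rcases h1 with ⟨rfl, -⟩ | ⟨-, rfl⟩
            · exact hpa (cyc.fst_mem_support_of_mem_edges he)
            · exact hpa (cyc.snd_mem_support_of_mem_edges he)
      exact hT.IsAcyclic (cyc.transfer G hedges) (hcyc.transfer hedges)
  have hG'tree : G'.IsTree := ⟨hG'conn, hG'ac⟩
  -- the new chain r' in G'
  set r' : ℕ → V := fun i => if i ≤ b then q i else p a with hr'def
  have hr'0 : r' 0 = v := by simp [hr'def, hq0]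
  have hr'b1 : r' (b + 1) = p a := by simp [hr'def]
  have hr'q : ∀ i, i ≤ b → r' i = q i := fun i hi => by simp [hr'def, hi]
  have hr'1 : r' 1 = q 1 := hr'q 1 hb1
  have hr'adj : ∀ i < b + 1, G'.Adj (r' i) (r' (i + 1)) := by
    intro i hi
    rcases Nat.lt_or_ge i b with hib | hib
    · rw [hr'q i (by omega), hr'q (i + 1) (by omega)]
      refine (hG'adj _ _).mpr (Or.inl ⟨hqadj i hib, ?_⟩)
      intro hs
      rw [Sym2.eq_iff] at hs
      rcases hs with ⟨-, h2⟩ | ⟨h2, -⟩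
      · exact hdisj a (i + 1) ha le_rfl (by omega) (by omega) h2.symm
      · rcases Nat.eq_zero_or_pos i with rfl | hipos
        · exact hpav (h2 ▸ hq0)
        · exact hdisj a i ha le_rfl (by omega) (by omega) h2.symm
    · have hieq : i = b := by omega
      rw [hieq, hr'q b le_rfl, hr'b1]
      refine (hG'adj _ _).mpr (Or.inr Sym2.eq_swap)
  have hr'inj : Set.InjOn r' (Set.Iic (b + 1)) := by
    intro x hx y hy hxy
    rw [Set.mem_Iic] at hx hy
    by_cases hxb : x ≤ b <;> by_cases hyb : y ≤ b
    · rw [hr'q x hxb, hr'q y hyb] at hxy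
      exact hqinj (Set.mem_Iic.mpr hxb) (Set.mem_Iic.mpr hyb) hxy
    · exfalso
      rw [hr'q x hxb, show y = b + 1 by omega, hr'b1] at hxy
      rcases Nat.eq_zero_or_pos x with rfl | hxpos
      · exact hpav (hxy ▸ hq0)
      · exact hdisj a x ha le_rfl (by omega) (by omega) hxy.symm
    · exfalso
      rw [hr'q y hyb, show x = b + 1 by omega, hr'b1] at hxy
      rcases Nat.eq_zero_or_pos y with rfl | hypos
      · exact hpav (hxy.symm ▸ hq0)
      · exact hdisj a y ha le_rfl (by omega) (by omega) hxy
    · omega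
  have hr'ne : ∀ j, 1 ≤ j → j ≤ b + 1 → r' j ≠ v := fun j h1 h2 => r_ne_v hr'0 hr'inj h1 h2
  -- branch condition for r' in G'
  have hr'br : {u : V | (G'.deleteEdges {s(v, r' 1)}).Reachable u (r' 1)}
      = r' '' Set.Icc 1 (b + 1) := by
    apply Set.eq_of_subset_of_subset
    · intro u hu
      refine reach_subset_of_closed (H := G'.deleteEdges {s(v, r' 1)})
        (S := r' '' Set.Icc 1 (b + 1)) ⟨1, Set.mem_Icc.mpr ⟨le_rfl, by omega⟩, rfl⟩
        ?_ u hu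
      rintro x ⟨i, hi, rfl⟩ y hxy
      rw [Set.mem_Icc] at hi
      rw [SimpleGraph.deleteEdges_adj, Set.mem_singleton_iff] at hxy
      obtain ⟨hxy1, hxy2⟩ := hxy
      rcases Nat.lt_or_ge i (b + 1) with hib | hib
      · -- r' i = q i
        rw [hr'q i (by omega)] at hxy1 hxy2
        rcases (hG'adj _ _).mp hxy1 with ⟨h1, h2⟩ | h1
        · -- a G-edge from q i : stays in the q-branch
          have hyq : y ∈ q '' Set.Icc 1 b := by
            rw [← hqbranch]
            have hQreach : (G.deleteEdges {s(v, q 1)}).Reachable (q 1) (q i) :=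
              chain_reach_del hq0 hqadj hqinj (by omega) (by omega)
            have hAdj : (G.deleteEdges {s(v, q 1)}).Adj y (q i) := by
              rw [SimpleGraph.deleteEdges_adj, Set.mem_singleton_iff]
              refine ⟨h1.symm, ?_⟩
              rw [Sym2.eq_swap (a := y)]
              rw [hr'1] at hxy2
              exact hxy2
            exact hAdj.reachable.trans hQreach.symm
          obtain ⟨j, hj, rfl⟩ := hyq
          rw [Set.mem_Icc] at hj
          exact ⟨j, Set.mem_Icc.mpr ⟨hj.1, by omega⟩, hr'q j hj.2⟩
        · rw [Sym2.eq_iff] at h1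
          rcases h1 with ⟨h2, rfl⟩ | ⟨-, rfl⟩
          · exact absurd h2.symm (hdisj a i ha le_rfl (by omega) (by omega))
          · exact ⟨b + 1, Set.mem_Icc.mpr ⟨by omega, le_rfl⟩, hr'b1⟩
      · -- r' i = p a
        have hieq : i = b + 1 := by omega
        subst hieq
        rw [hr'b1] at hxy1
        have := hpa_nbr' y hxy1
        subst this
        exact ⟨b, Set.mem_Icc.mpr ⟨by omega, by omega⟩, hr'q b le_rfl⟩
    · rintro u ⟨i, hi, rfl⟩
      rw [Set.mem_Icc] at hi
      exact Set.mem_setOf_eq ▸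
        (chain_reach_del hr'0 hr'adj hr'inj hi.1 (by omega)).symm
  -- pruning the leaf p a
  have hpruneG : ∀ W : Finset V, v ∈ W → (G.induce (W : Set V)).Connected →
      (G.induce ((W.erase (p a) : Finset V) : Set V)).Connected := by
    intro W hvW hconn
    have := prune hT hp0 hpadj hpinj hpbranch hconn hvW (j := a) ha le_rfl
    rwa [Finset.Icc_self, Finset.image_singleton, ← Finset.erase_eq] at this
  have hpruneG' : ∀ W : Finset V, v ∈ W → (G'.induce (W : Set V)).Connected →
      (G'.induce ((W.erase (p a) : Finset V) : Set V)).Connected := by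
    intro W hvW hconn
    have := prune hG'tree hr'0 hr'adj hr'inj hr'br hconn hvW (j := b + 1)
      (by omega) le_rfl
    rwa [Finset.Icc_self, Finset.image_singleton, hr'b1, ← Finset.erase_eq] at this
  have hagree : ∀ y z : V, y ≠ p a → z ≠ p a → (G.Adj y z ↔ G'.Adj y z) := by
    intro y z hy hz
    rw [hG'adj]
    constructor
    · intro h
      refine Or.inl ⟨h, fun hs => ?_⟩
      rw [Sym2.eq_iff] at hs
      rcases hs with ⟨-, h2⟩ | ⟨h2, -⟩
      · exact hz h2
      · exact hy h2
    · rintro (⟨h, -⟩ | hs)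
      · exact h
      · exfalso
        rw [Sym2.eq_iff] at hs
        rcases hs with ⟨h2, -⟩ | ⟨-, h2⟩
        · exact hy h2
        · exact hz h2
  have hEQ : ∀ S : Finset V, v ∈ S → p a ∉ S → steinerDist G S = steinerDist G' S := by
    intro S hvS hpaS
    refine le_antisymm ?_ ?_
    · exact steinerDist_le_of_agree hG'conn (fun y z hy hz => (hagree y z hy hz).symm)
        hpruneG' hvS hpaS
    · exact steinerDist_le_of_agree hT.isConnected hagree hpruneG hvS hpaS
  -- the universe for the smaller sets
  set U : Finset V := (Finset.univ.erase v).erase (p a) with hUdef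
  have hUv : v ∉ U := fun h => (Finset.mem_erase.mp (Finset.mem_erase.mp h).2).1 rfl
  have hUpa : p a ∉ U := fun h => (Finset.mem_erase.mp h).1 rfl
  have hmemU : ∀ x, x ≠ v → x ≠ p a → x ∈ U := fun x h1 h2 =>
    Finset.mem_erase.mpr ⟨h2, Finset.mem_erase.mpr ⟨h1, Finset.mem_univ _⟩⟩
  have hmemp : ∀ i, 1 ≤ i → i < a → p i ∈ U := by
    intro i h1 h2
    refine hmemU _ (hpne i h1 (by omega)) ?_
    intro h
    have : i = a := hpinj (Set.mem_Iic.mpr (by omega)) (Set.mem_Iic.mpr le_rfl) h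
    omega
  have hmemr' : ∀ i, 1 ≤ i → i < b + 1 → r' i ∈ U := by
    intro i h1 h2
    rw [hr'q i (by omega)]
    exact hmemU _ (hqne i h1 (by omega))
      (fun h => hdisj a i ha le_rfl (by omega) (by omega) h.symm)
  -- the main computation
  rw [steinerKDist, steinerKDist]
  rw [← Finset.sum_filter_add_sum_filter_not
      ((Finset.powersetCard (k - 1) (Finset.univ : Finset V)).filter (fun S => v ∉ S))
      (fun S => p a ∈ S) (fun S => steinerDist G (insert v S)),
    ← Finset.sum_filter_add_sum_filter_not
      ((Finset.powersetCard (k - 1) (Finset.univ : Finset V)).filter (fun S => v ∉ S))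
      (fun S => p a ∈ S) (fun S => steinerDist G' (insert v S))]
  have h1 : ∑ S ∈ (((Finset.powersetCard (k - 1) (Finset.univ : Finset V)).filter
        (fun S => v ∉ S)).filter (fun S => p a ∈ S)), steinerDist G (insert v S)
      = ∑ S₀ ∈ Finset.powersetCard (k - 2) U,
          (steinerDist G (insert v S₀) + (a - mIdx p a v S₀)) := by
    refine Finset.sum_bij' (fun S _ => S.erase (p a)) (fun S₀ _ => insert (p a) S₀)
      ?_ ?_ ?_ ?_ ?_
    · intro S hS
      rw [Finset.mem_filter] at hS
      obtain ⟨hS1, hpaS⟩ := hS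
      rw [Finset.mem_filter, Finset.mem_powersetCard] at hS1
      obtain ⟨⟨-, hcard⟩, hvS⟩ := hS1
      rw [Finset.mem_powersetCard]
      constructor
      · intro z hz
        rw [Finset.mem_erase] at hz
        exact hmemU z (fun h => hvS (h ▸ hz.2)) hz.1
      · rw [Finset.card_erase_of_mem hpaS, hcard]
        omega
    · intro S₀ hS₀
      rw [Finset.mem_powersetCard] at hS₀
      obtain ⟨hsub, hcard⟩ := hS₀
      have hpaS₀ : p a ∉ S₀ := fun h => hUpa (hsub h)
      rw [Finset.mem_filter, Finset.mem_filter, Finset.mem_powersetCard]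
      refine ⟨⟨⟨Finset.subset_univ _, ?_⟩, ?_⟩, Finset.mem_insert_self _ _⟩
      · rw [Finset.card_insert_of_notMem hpaS₀, hcard]
        omega
      · intro hvmem
        rcases Finset.mem_insert.mp hvmem with h | h
        · exact hpav h.symm
        · exact hUv (hsub h)
    · intro S hS
      rw [Finset.mem_filter] at hS
      exact Finset.insert_erase hS.2
    · intro S₀ hS₀
      rw [Finset.mem_powersetCard] at hS₀
      exact Finset.erase_insert (fun h => hUpa (hS₀.1 h))
    · intro S hS
      rw [Finset.mem_filter] at hS
      have hkey := key hT hp0 ha hpadj hpinj hpbranch (S.erase (p a))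
        (Finset.notMem_erase _ _)
      rw [Finset.insert_erase hS.2] at hkey
      exact hkey
  have h2 : ∑ S ∈ (((Finset.powersetCard (k - 1) (Finset.univ : Finset V)).filter
        (fun S => v ∉ S)).filter (fun S => p a ∈ S)), steinerDist G' (insert v S)
      = ∑ S₀ ∈ Finset.powersetCard (k - 2) U,
          (steinerDist G' (insert v S₀) + (b + 1 - mIdx r' (b + 1) v S₀)) := by
    refine Finset.sum_bij' (fun S _ => S.erase (p a)) (fun S₀ _ => insert (p a) S₀)
      ?_ ?_ ?_ ?_ ?_
    · intro S hS
      rw [Finset.mem_filter] at hS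
      obtain ⟨hS1, hpaS⟩ := hS
      rw [Finset.mem_filter, Finset.mem_powersetCard] at hS1
      obtain ⟨⟨-, hcard⟩, hvS⟩ := hS1
      rw [Finset.mem_powersetCard]
      constructor
      · intro z hz
        rw [Finset.mem_erase] at hz
        exact hmemU z (fun h => hvS (h ▸ hz.2)) hz.1
      · rw [Finset.card_erase_of_mem hpaS, hcard]
        omega
    · intro S₀ hS₀
      rw [Finset.mem_powersetCard] at hS₀
      obtain ⟨hsub, hcard⟩ := hS₀
      have hpaS₀ : p a ∉ S₀ := fun h => hUpa (hsub h)
      rw [Finset.mem_filter, Finset.mem_filter, Finset.mem_powersetCard]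
      refine ⟨⟨⟨Finset.subset_univ _, ?_⟩, ?_⟩, Finset.mem_insert_self _ _⟩
      · rw [Finset.card_insert_of_notMem hpaS₀, hcard]
        omega
      · intro hvmem
        rcases Finset.mem_insert.mp hvmem with h | h
        · exact hpav h.symm
        · exact hUv (hsub h)
    · intro S hS
      rw [Finset.mem_filter] at hS
      exact Finset.insert_erase hS.2
    · intro S₀ hS₀
      rw [Finset.mem_powersetCard] at hS₀
      exact Finset.erase_insert (fun h => hUpa (hS₀.1 h))
    · intro S hS
      rw [Finset.mem_filter] at hS
      have hkey := key hG'tree hr'0 (by omega : 1 ≤ b + 1) hr'adj hr'inj hr'br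
        (S.erase (p a)) (by rw [hr'b1]; exact Finset.notMem_erase _ _)
      rw [hr'b1, Finset.insert_erase hS.2] at hkey
      exact hkey
  rw [h1, h2, Finset.sum_add_distrib, Finset.sum_add_distrib]
  have he1 : ∑ S₀ ∈ Finset.powersetCard (k - 2) U, steinerDist G (insert v S₀)
      = ∑ S₀ ∈ Finset.powersetCard (k - 2) U, steinerDist G' (insert v S₀) := by
    refine Finset.sum_congr rfl ?_
    intro S₀ hS₀
    rw [Finset.mem_powersetCard] at hS₀
    refine hEQ _ (Finset.mem_insert_self _ _) ?_
    intro h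
    rcases Finset.mem_insert.mp h with h | h
    · exact hpav h
    · exact hUpa (hS₀.1 h)
  have he2 : ∑ S ∈ (((Finset.powersetCard (k - 1) (Finset.univ : Finset V)).filter
        (fun S => v ∉ S)).filter (fun S => ¬p a ∈ S)), steinerDist G (insert v S)
      = ∑ S ∈ (((Finset.powersetCard (k - 1) (Finset.univ : Finset V)).filter
        (fun S => v ∉ S)).filter (fun S => ¬p a ∈ S)), steinerDist G' (insert v S) := by
    refine Finset.sum_congr rfl ?_
    intro S hS
    rw [Finset.mem_filter] at hS
    obtain ⟨hS1, hpaS⟩ := hS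
    rw [Finset.mem_filter] at hS1
    refine hEQ _ (Finset.mem_insert_self _ _) ?_
    intro h
    rcases Finset.mem_insert.mp h with h | h
    · exact hpav h
    · exact hpaS h
  rw [he1, he2]
  have hcount : ∑ S₀ ∈ Finset.powersetCard (k - 2) U, (a - mIdx p a v S₀)
      ≤ ∑ S₀ ∈ Finset.powersetCard (k - 2) U, (b + 1 - mIdx r' (b + 1) v S₀) := by
    rw [sum_key U hp0 ha hpinj hmemp (k - 2),
      sum_key U hr'0 (by omega : 1 ≤ b + 1) hr'inj hmemr' (k - 2)]
    rw [Finset.sum_range_reflect (fun s => (U.card - s).choose (k - 2)) a,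
      Finset.sum_range_reflect (fun s => (U.card - s).choose (k - 2)) (b + 1)]
    exact Finset.sum_le_sum_of_subset (Finset.range_subset_range.mpr (by omega))
  exact Nat.add_le_add (Nat.add_le_add le_rfl hcount) le_rfl
end

section
/- Let a, b ≥ 0 be integers, let P be a path on a + b + 1 vertices, and let v be the vertex of P at distance a from one end and distance b from the other end. Then for any integer k with 2 ≤ k ≤ a + b + 1, d_k(v) = (k−1)·C(a+b+1, k) − (k−1)·C(b+1, k) − (k−1)·C(a+1, k) − C(a+b, k) + b·C(b, k−1) + a·C(a, k−1), where C(m, j) denotes the binomial coefficient (taken to be 0 when m < j). -/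
open Finset SimpleGraph

lemma induce_adj' {n : ℕ} {W : Set (Fin n)} {x y : W} :
    ((SimpleGraph.pathGraph n).induce W).Adj x y ↔
      ((x:Fin n):ℕ) + 1 = ((y:Fin n):ℕ) ∨ ((y:Fin n):ℕ) + 1 = ((x:Fin n):ℕ) := by
  simp [SimpleGraph.induce, SimpleGraph.comap, SimpleGraph.pathGraph_adj]

lemma walk_hits {n : ℕ} {W : Set (Fin n)} (l : ℕ) :
    ∀ {x y : W} (p : ((SimpleGraph.pathGraph n).induce W).Walk x y),
      ((x:Fin n):ℕ) ≤ l → l ≤ ((y:Fin n):ℕ) → ∃ z ∈ p.support, ((z:Fin n):ℕ) = l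
  | x, _, .nil, hx, hy => ⟨x, by simp, by omega⟩
  | x, y, .cons (v := u) h p, hx, hy => by
    rcases Nat.eq_or_lt_of_le hx with he | hlt
    · exact ⟨x, by simp, he⟩
    · rw [induce_adj'] at h
      obtain ⟨z, hz, hzl⟩ := walk_hits l p (by omega) hy
      exact ⟨z, by simp [hz], hzl⟩

lemma icc_connected {n : ℕ} (x y : Fin n) (hxy : x ≤ y) :
    ((SimpleGraph.pathGraph n).induce
      ((Finset.Icc x y : Finset (Fin n)) : Set (Fin n))).Connected := by
  set W : Set (Fin n) := ((Finset.Icc x y : Finset (Fin n)) : Set (Fin n)) with hW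
  have hxW : x ∈ W := by simp [hW, Finset.mem_Icc, hxy]
  have key : ∀ d : ℕ, ∀ u : W, ((u:Fin n):ℕ) = (x:ℕ) + d →
      ((SimpleGraph.pathGraph n).induce W).Reachable ⟨x, hxW⟩ u := by
    intro d
    induction d with
    | zero =>
      intro u hu
      have : (⟨x, hxW⟩ : W) = u := by
        apply Subtype.ext; apply Fin.ext
        show (x:ℕ) = ((u:Fin n):ℕ); omega
      rw [this]
    | succ d ih =>
      intro u hu
      have hu' : ((u:Fin n):ℕ) - 1 < n := by omega
      have humem : (u:Fin n) ∈ Finset.Icc x y := by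
        have := u.property; simpa [hW] using this
      rw [Finset.mem_Icc] at humem
      have hmem : (⟨((u:Fin n):ℕ) - 1, hu'⟩ : Fin n) ∈ W := by
        simp only [hW, Finset.coe_Icc, Set.mem_Icc]
        constructor
        · show (x:ℕ) ≤ _; simp; omega
        · have : ((u:Fin n):ℕ) ≤ (y:ℕ) := humem.2
          show (_ : ℕ) ≤ (y:ℕ); simp; omega
      set u' : W := ⟨⟨((u:Fin n):ℕ) - 1, hu'⟩, hmem⟩ with hu'def
      have hval : ((u':Fin n):ℕ) = ((u:Fin n):ℕ) - 1 := rfl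
      have hreach := ih u' (by omega)
      refine hreach.trans (SimpleGraph.Adj.reachable ?_)
      rw [induce_adj']
      left; omega
  rw [SimpleGraph.connected_iff]
  refine ⟨?_, ⟨⟨x, hxW⟩⟩⟩
  intro u w
  have hu := key (((u:Fin n):ℕ) - (x:ℕ)) u (by
      have := u.property; simp only [hW, Finset.coe_Icc, Set.mem_Icc] at this
      have : (x:ℕ) ≤ ((u:Fin n):ℕ) := this.1
      omega)
  have hw := key (((w:Fin n):ℕ) - (x:ℕ)) w (by
      have := w.property; simp only [hW, Finset.coe_Icc, Set.mem_Icc] at this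
      have : (x:ℕ) ≤ ((w:Fin n):ℕ) := this.1
      omega)
  exact hu.symm.trans hw

lemma steinerDist_path {n : ℕ} (T : Finset (Fin n)) (hT : T.Nonempty) :
    steinerDist (SimpleGraph.pathGraph n) T = ((T.max' hT : Fin n) : ℕ) - ((T.min' hT : Fin n) : ℕ) := by
  set x := T.min' hT
  set y := T.max' hT
  have hxy : x ≤ y := Finset.min'_le T y (T.max'_mem hT)
  have hmem : ((y:ℕ) - (x:ℕ)) ∈ {m : ℕ | ∃ W : Finset (Fin n), T ⊆ W ∧
      ((SimpleGraph.pathGraph n).induce (W : Set (Fin n))).Connected ∧ W.card = m + 1} := by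
    refine ⟨Finset.Icc x y, ?_, icc_connected x y hxy, ?_⟩
    · intro t ht
      exact Finset.mem_Icc.2 ⟨Finset.min'_le T t ht, Finset.le_max' T t ht⟩
    · rw [Fin.card_Icc]; omega
  apply le_antisymm
  · exact Nat.sInf_le hmem
  · apply le_csInf ⟨_, hmem⟩
    rintro m ⟨W, hsub, hconn, hcard⟩
    have hIcc : Finset.Icc x y ⊆ W := by
      intro l hl
      rw [Finset.mem_Icc] at hl
      have hxW : x ∈ (W : Set (Fin n)) := hsub (T.min'_mem hT)
      have hyW : y ∈ (W : Set (Fin n)) := hsub (T.max'_mem hT)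
      obtain ⟨p⟩ := hconn.preconnected ⟨x, hxW⟩ ⟨y, hyW⟩
      obtain ⟨z, _, hz⟩ := walk_hits (l:ℕ) p hl.1 hl.2
      have : (z : Fin n) = l := Fin.ext hz
      have hzW : (z : Fin n) ∈ (W : Set (Fin n)) := z.property
      rw [this] at hzW
      exact_mod_cast hzW
    have := Finset.card_le_card hIcc
    rw [Fin.card_Icc, hcard] at this
    omega

lemma hs (r : ℕ) : ∀ m : ℕ, ∑ i ∈ Finset.range m, (i.choose r : ℤ) = (m.choose (r+1) : ℤ)
  | 0 => by simp
  | m+1 => by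
    rw [Finset.sum_range_succ, hs r m, Nat.choose_succ_succ' m r]
    push_cast; ring

lemma keyid (m k : ℕ) (hk : 1 ≤ k) :
    ((k:ℤ) - 1) * ((m+1).choose k : ℤ) = (m:ℤ) * (m.choose (k-1) : ℤ) - (m.choose k : ℤ) := by
  have h1 := Nat.add_one_mul_choose_eq m (k-1)
  rw [Nat.sub_add_cancel hk] at h1
  have h2 : (m+1).choose k = m.choose (k-1) + m.choose k := by
    have := Nat.choose_succ_succ' m (k-1)
    rwa [Nat.sub_add_cancel hk] at this
  have h1' : ((m:ℤ)+1) * (m.choose (k-1) : ℤ) = ((m+1).choose k : ℤ) * k := by exact_mod_cast h1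
  have h2' : (((m+1).choose k : ℕ) : ℤ) = (m.choose (k-1) : ℤ) + (m.choose k : ℤ) := by
    exact_mod_cast h2
  linear_combination -h1' - h2'

lemma pcard_filter_subset {α : Type*} [DecidableEq α] (r : ℕ) (B A : Finset α) :
    (Finset.powersetCard r B).filter (fun S => S ⊆ A) = Finset.powersetCard r (B ∩ A) := by
  ext S
  simp only [Finset.mem_filter, Finset.mem_powersetCard, Finset.subset_inter_iff]
  tauto

/-- On the path with `a + b + 1` vertices, the Steiner `k`-distance of the vertex at
distance `a` from one end and `b` from the other. -/
theorem stmt14 (a b k : ℕ) (hk2 : 2 ≤ k) (hkn : k ≤ a + b + 1) :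
    (steinerKDist (SimpleGraph.pathGraph (a + b + 1)) k ⟨a, by omega⟩ : ℤ) =
      ((k : ℤ) - 1) * ((a + b + 1).choose k : ℤ)
        - ((k : ℤ) - 1) * ((b + 1).choose k : ℤ)
        - ((k : ℤ) - 1) * ((a + 1).choose k : ℤ)
        - ((a + b).choose k : ℤ)
        + (b : ℤ) * (b.choose (k - 1) : ℤ)
        + (a : ℤ) * (a.choose (k - 1) : ℤ) := by
  classical
  have hk1 : 1 ≤ k := by omega
  have hk1' : k - 1 + 1 = k := by omega
  set v : Fin (a + b + 1) := ⟨a, by omega⟩ with hv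
  set D := (Finset.powersetCard (k - 1) (Finset.univ : Finset (Fin (a + b + 1)))).filter
      (fun S => v ∉ S) with hDdef
  have hD : D = Finset.powersetCard (k - 1) ((Finset.univ : Finset (Fin (a + b + 1))).erase v) := by
    ext S
    simp only [hDdef, Finset.mem_filter, Finset.mem_powersetCard, Finset.subset_erase,
      Finset.subset_univ, true_and]
    tauto
  set g : ℕ → ℕ := fun i => if a ≤ i then i.choose (k - 1) else (a + b - 1 - i).choose (k - 1)
    with hg
  -- the per-set minimum/maximum notation
  have hmin_le_a : ∀ S : Finset (Fin (a+b+1)),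
      (((insert v S).min' (Finset.insert_nonempty v S) : Fin (a+b+1)) : ℕ) ≤ a := by
    intro S
    have := Finset.min'_le (insert v S) v (Finset.mem_insert_self v S)
    exact this
  have ha_le_max : ∀ S : Finset (Fin (a+b+1)),
      a ≤ (((insert v S).max' (Finset.insert_nonempty v S) : Fin (a+b+1)) : ℕ) := by
    intro S
    have := Finset.le_max' (insert v S) v (Finset.mem_insert_self v S)
    exact this
  set P : Finset (Fin (a+b+1)) → ℕ → Prop := fun S i =>
    (((insert v S).min' (Finset.insert_nonempty v S) : Fin (a+b+1)) : ℕ) ≤ i ∧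
    i < (((insert v S).max' (Finset.insert_nonempty v S) : Fin (a+b+1)) : ℕ) with hPdef
  -- counting lemma
  have hcount : ∀ i ∈ Finset.range (a + b),
      (D.filter (fun S => P S i)).card = (a + b).choose (k - 1) - g i := by
    intro i hi
    rw [Finset.mem_range] at hi
    have htot := Finset.card_filter_add_card_filter_not (s := D) (p := fun S => P S i)
    have hDcard : D.card = (a + b).choose (k - 1) := by
      rw [hD, Finset.card_powersetCard, Finset.card_erase_of_mem (Finset.mem_univ v),
        Finset.card_univ, Fintype.card_fin]
      norm_num
    have hneg : (D.filter (fun S => ¬ P S i)).card = g i := by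
      by_cases hai : a ≤ i
      · -- ¬ P S i ↔ S ⊆ Iic ⟨i, _⟩
        have hfil : D.filter (fun S => ¬ P S i)
            = D.filter (fun S => S ⊆ Finset.Iic (⟨i, by omega⟩ : Fin (a+b+1))) := by
          apply Finset.filter_congr
          intro S hS
          simp only [hPdef, not_and, not_lt, eq_iff_iff]
          constructor
          · intro hnp s hs
            have hM := hnp (le_trans (hmin_le_a S) hai)
            have hsM := Finset.le_max' (insert v S) s (Finset.mem_insert_of_mem hs)
            rw [Finset.mem_Iic]
            exact le_trans hsM (by exact hM)
          · intro hsub _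
            have : insert v S ⊆ Finset.Iic (⟨i, by omega⟩ : Fin (a+b+1)) := by
              rw [Finset.insert_subset_iff]
              exact ⟨Finset.mem_Iic.2 (by exact hai), hsub⟩
            have := Finset.max'_le (insert v S) (Finset.insert_nonempty v S) _
              (fun y hy => Finset.mem_Iic.1 (this hy))
            exact this
        rw [hfil, hD, pcard_filter_subset]
        have hinter : ((Finset.univ : Finset (Fin (a+b+1))).erase v) ∩
            Finset.Iic (⟨i, by omega⟩ : Fin (a+b+1))
            = (Finset.Iic (⟨i, by omega⟩ : Fin (a+b+1))).erase v := by
          rw [Finset.erase_inter, Finset.univ_inter]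
        rw [hinter, Finset.card_powersetCard,
          Finset.card_erase_of_mem (Finset.mem_Iic.2 (by exact hai)), Fin.card_Iic]
        simp [hg, hai]
      · -- i < a : ¬ P S i ↔ S ⊆ Ioi ⟨i, _⟩
        push_neg at hai
        have hfil : D.filter (fun S => ¬ P S i)
            = D.filter (fun S => S ⊆ Finset.Ioi (⟨i, by omega⟩ : Fin (a+b+1))) := by
          apply Finset.filter_congr
          intro S hS
          simp only [hPdef, not_and, not_lt, eq_iff_iff]
          constructor
          · intro hnp s hs
            have him : i < (((insert v S).min' (Finset.insert_nonempty v S) : Fin (a+b+1)) : ℕ) := by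
              by_contra hc
              push_neg at hc
              have := hnp hc
              have := ha_le_max S
              omega
            have hms := Finset.min'_le (insert v S) s (Finset.mem_insert_of_mem hs)
            rw [Finset.mem_Ioi]
            exact lt_of_lt_of_le (show (⟨i, by omega⟩ : Fin (a+b+1)) < _ from him) hms
          · intro hsub hmi
            exfalso
            have : insert v S ⊆ Finset.Ioi (⟨i, by omega⟩ : Fin (a+b+1)) := by
              rw [Finset.insert_subset_iff]
              exact ⟨Finset.mem_Ioi.2 (by exact hai), hsub⟩
            have hlt := Finset.lt_min'_iff (insert v S) (Finset.insert_nonempty v S)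
              (x := (⟨i, by omega⟩ : Fin (a+b+1)))
            have : (⟨i, by omega⟩ : Fin (a+b+1)) < (insert v S).min' (Finset.insert_nonempty v S) :=
              hlt.2 (fun y hy => Finset.mem_Ioi.1 (this hy))
            have : i < (((insert v S).min' (Finset.insert_nonempty v S) : Fin (a+b+1)) : ℕ) := this
            omega
        rw [hfil, hD, pcard_filter_subset]
        have hinter : ((Finset.univ : Finset (Fin (a+b+1))).erase v) ∩
            Finset.Ioi (⟨i, by omega⟩ : Fin (a+b+1))
            = (Finset.Ioi (⟨i, by omega⟩ : Fin (a+b+1))).erase v := by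
          rw [Finset.erase_inter, Finset.univ_inter]
        rw [hinter, Finset.card_powersetCard,
          Finset.card_erase_of_mem (Finset.mem_Ioi.2 (by exact hai)), Fin.card_Ioi]
        have : a + b + 1 - 1 - i - 1 = a + b - 1 - i := by omega
        rw [this]
        simp [hg, hai, Nat.not_le.2 hai]
    omega
  have hterm : ∀ S ∈ D, steinerDist (SimpleGraph.pathGraph (a+b+1)) (insert v S)
      = ∑ i ∈ Finset.range (a + b), if P S i then 1 else 0 := by
    intro S hS
    rw [steinerDist_path _ (Finset.insert_nonempty v S), ← Finset.card_filter]
    have hM : (((insert v S).max' (Finset.insert_nonempty v S) : Fin (a+b+1)) : ℕ) ≤ a + b := by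
      have := ((insert v S).max' (Finset.insert_nonempty v S)).isLt
      omega
    have : (Finset.range (a + b)).filter (fun i => P S i)
        = Finset.Ico (((insert v S).min' (Finset.insert_nonempty v S) : Fin (a+b+1)) : ℕ)
            (((insert v S).max' (Finset.insert_nonempty v S) : Fin (a+b+1)) : ℕ) := by
      ext i
      simp only [Finset.mem_filter, Finset.mem_range, Finset.mem_Ico, hPdef]
      omega
    rw [this, Nat.card_Ico]
  have hsum : steinerKDist (SimpleGraph.pathGraph (a+b+1)) k v
      = ∑ i ∈ Finset.range (a + b), ((a + b).choose (k - 1) - g i) := by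
    rw [steinerKDist, ← hDdef, Finset.sum_congr rfl hterm, Finset.sum_comm]
    refine Finset.sum_congr rfl ?_
    intro i hi
    rw [← Finset.card_filter]
    exact hcount i hi
  have hg_le : ∀ i ∈ Finset.range (a + b), g i ≤ (a + b).choose (k - 1) := by
    intro i hi
    rw [Finset.mem_range] at hi
    simp only [hg]
    split <;> exact Nat.choose_le_choose _ (by omega)
  have hcast : ((steinerKDist (SimpleGraph.pathGraph (a+b+1)) k v : ℕ) : ℤ)
      = ∑ i ∈ Finset.range (a + b), (((a + b).choose (k - 1) : ℤ) - (g i : ℤ)) := by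
    rw [hsum, Nat.cast_sum]
    exact Finset.sum_congr rfl fun i hi => Nat.cast_sub (hg_le i hi)
  rw [hcast, Finset.sum_sub_distrib, Finset.sum_const, Finset.card_range]
  -- split the g-sum
  have hsplit : ∑ i ∈ Finset.range (a + b), (g i : ℤ)
      = (∑ i ∈ Finset.range a, ((a + b - 1 - i).choose (k - 1) : ℤ))
        + ∑ i ∈ Finset.Ico a (a + b), ((i.choose (k - 1) : ℤ)) := by
    rw [Finset.range_eq_Ico, ← Finset.sum_Ico_consecutive _ (Nat.zero_le a) (by omega : a ≤ a + b),
      ← Finset.range_eq_Ico]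
    congr 1
    · refine Finset.sum_congr rfl fun i hi => ?_
      rw [Finset.mem_range] at hi
      simp only [hg]
      rw [if_neg (by omega)]
    · refine Finset.sum_congr rfl fun i hi => ?_
      rw [Finset.mem_Ico] at hi
      simp only [hg]
      rw [if_pos (by omega)]
  have hIco : ∑ i ∈ Finset.Ico a (a + b), ((i.choose (k - 1) : ℤ))
      = ((a + b).choose k : ℤ) - (a.choose k : ℤ) := by
    rw [Finset.sum_Ico_eq_sub _ (by omega : a ≤ a + b), hs, hs, hk1']
  have hrefl : ∑ i ∈ Finset.range a, ((a + b - 1 - i).choose (k - 1) : ℤ)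
      = ((a + b).choose k : ℤ) - (b.choose k : ℤ) := by
    have h1 : ∑ i ∈ Finset.range a, ((a + b - 1 - i).choose (k - 1) : ℤ)
        = ∑ i ∈ Finset.range a, (((b + i).choose (k - 1) : ℤ)) := by
      rw [← Finset.sum_range_reflect (fun j => (((b + j).choose (k - 1) : ℕ) : ℤ)) a]
      refine Finset.sum_congr rfl fun i hi => ?_
      rw [Finset.mem_range] at hi
      congr 2
      omega
    have h2 : ∑ i ∈ Finset.Ico b (b + a), ((i.choose (k - 1) : ℕ) : ℤ)
        = ∑ i ∈ Finset.range a, (((b + i).choose (k - 1) : ℕ) : ℤ) := by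
      rw [Finset.sum_Ico_eq_sum_range]
      simp
    rw [h1, ← h2, Finset.sum_Ico_eq_sub _ (by omega : b ≤ b + a), hs, hs, hk1',
      Nat.add_comm b a]
  rw [hsplit, hrefl, hIco, nsmul_eq_mul]
  have K1 := keyid (a + b) k hk1
  have K2 := keyid a k hk1
  have K3 := keyid b k hk1
  push_cast at K1 K2 K3 ⊢
  linarith
end

section
/- Let T be a finite tree on n vertices, let 2 ≤ k ≤ n, and let v be a Steiner k-centroid of T. Then n/k ≤ SW_k(T)/d_k(v) ≤ (n−1)/(k−1); equivalently, n·d_k(v) ≤ k·SW_k(T) and (k−1)·SW_k(T) ≤ (n−1)·d_k(v). -/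
set_option linter.unusedSectionVars false

/-- The Steiner `k`-Wiener index: the sum of the Steiner distances of all `k`-element
sets of vertices. -/
noncomputable def steinerWiener {V : Type*} [Fintype V] [DecidableEq V]
    (G : SimpleGraph V) (k : ℕ) : ℕ :=
  ∑ S ∈ Finset.powersetCard k (Finset.univ : Finset V), steinerDist G S

namespace Stmt19Aux

open Finset

variable {V : Type*} [Fintype V] [DecidableEq V] {G : SimpleGraph V}

/-- The unique path from `c` to `v` in a tree. -/
noncomputable def pth (hT : G.IsTree) (c v : V) : G.Walk c v :=
  (hT.existsUnique_path c v).choose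

lemma eq_pth (hT : G.IsTree) {c v : V} {q : G.Walk c v} (h : q.IsPath) : q = pth hT c v :=
  (hT.existsUnique_path c v).choose_spec.2 q h

/-- The minimal connected set of vertices containing `v` and all of `C`. -/
noncomputable def hull (hT : G.IsTree) (v : V) (C : Finset V) : Finset V :=
  insert v (C.biUnion fun c => (pth hT c v).support.toFinset)

lemma mem_hull (hT : G.IsTree) (v : V) (C : Finset V) (w : V) :
    w ∈ hull hT v C ↔ w = v ∨ ∃ c ∈ C, w ∈ (pth hT c v).support := by
  simp [hull]

lemma v_mem_hull (hT : G.IsTree) (v : V) (C : Finset V) : v ∈ hull hT v C :=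
  mem_insert_self _ _

lemma subset_hull (hT : G.IsTree) (v : V) (C : Finset V) : insert v C ⊆ hull hT v C := by
  intro x hx
  rcases mem_insert.mp hx with h | h
  · exact h ▸ v_mem_hull hT v C
  · exact (mem_hull hT v C x).mpr (Or.inr ⟨x, h, SimpleGraph.Walk.start_mem_support _⟩)

lemma hull_connected (hT : G.IsTree) (v : V) (C : Finset V) :
    (G.induce ((hull hT v C : Finset V) : Set V)).Connected := by
  apply SimpleGraph.induce_connected_of_patches v (by exact_mod_cast v_mem_hull hT v C)
  intro w hw
  rcases (mem_hull hT v C w).mp (by exact_mod_cast hw) with h | ⟨c, hc, hwc⟩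
  · subst h
    exact ⟨{w}, by
      simpa using (by exact_mod_cast v_mem_hull hT w C : w ∈ ((hull hT w C : Finset V) : Set V)),
      rfl, rfl, SimpleGraph.Reachable.refl _⟩
  · refine ⟨{x | x ∈ (pth hT c v).support}, ?_, (pth hT c v).end_mem_support, hwc, ?_⟩
    · intro x hx
      exact_mod_cast (mem_hull hT v C x).mpr (Or.inr ⟨c, hc, hx⟩)
    · exact ((pth hT c v).connected_induce_support).preconnected _ _

lemma path_support_subset (hT : G.IsTree) {c v : V} {W : Finset V}
    (hc : c ∈ W) (hvW : v ∈ W) (hconn : (G.induce (W : Set V)).Connected) :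
    ∀ x ∈ (pth hT c v).support, x ∈ W := by
  have hr : (G.induce (W : Set V)).Reachable ⟨c, by exact_mod_cast hc⟩ ⟨v, by exact_mod_cast hvW⟩ :=
    hconn.preconnected _ _
  obtain ⟨q0⟩ := hr
  let hom : G.induce (W : Set V) →g G := ⟨Subtype.val, fun h => h⟩
  let q : G.Walk c v := q0.map hom
  have hsupp : ∀ x ∈ q.support, x ∈ W := by
    intro x hx
    rw [SimpleGraph.Walk.support_map] at hx
    obtain ⟨a, _, rfl⟩ := List.mem_map.mp hx
    exact_mod_cast a.2
  have hq : (q.toPath : G.Walk c v) = pth hT c v := eq_pth hT q.toPath.2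
  intro x hx
  exact hsupp x (q.support_toPath_subset (hq ▸ hx))

lemma hull_min (hT : G.IsTree) {v : V} {C W : Finset V} (hW : insert v C ⊆ W)
    (hconn : (G.induce (W : Set V)).Connected) : hull hT v C ⊆ W := by
  intro w hw
  rcases (mem_hull hT v C w).mp hw with h | ⟨c, hc, hwc⟩
  · exact h ▸ hW (mem_insert_self _ _)
  · exact path_support_subset hT (hW (mem_insert_of_mem hc)) (hW (mem_insert_self _ _)) hconn w hwc

lemma steinerDist_le_hull (hT : G.IsTree) {v : V} {A C : Finset V} (hA : A ⊆ insert v C) :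
    steinerDist G A ≤ (hull hT v C).card - 1 := by
  apply Nat.sInf_le
  refine ⟨hull hT v C, hA.trans (subset_hull hT v C), hull_connected hT v C, ?_⟩
  have : 0 < (hull hT v C).card := card_pos.mpr ⟨v, v_mem_hull hT v C⟩
  omega

lemma steinerDist_insert (hT : G.IsTree) (v : V) (C : Finset V) :
    steinerDist G (insert v C) = (hull hT v C).card - 1 := by
  refine le_antisymm (steinerDist_le_hull hT subset_rfl) ?_
  have hne : {m : ℕ | ∃ W : Finset V, insert v C ⊆ W ∧ (G.induce (W : Set V)).Connected ∧
      W.card = m + 1}.Nonempty := by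
    refine ⟨(hull hT v C).card - 1, hull hT v C, subset_hull hT v C, hull_connected hT v C, ?_⟩
    have : 0 < (hull hT v C).card := card_pos.mpr ⟨v, v_mem_hull hT v C⟩
    omega
  obtain ⟨W, hsub, hconn, hcard⟩ := Nat.sInf_mem hne
  have := card_le_card (hull_min hT hsub hconn)
  rw [hcard] at this
  exact Nat.sub_le_of_le_add (by simpa [steinerDist] using this)

lemma steinerDist_insert_card (hT : G.IsTree) (v : V) (C : Finset V) :
    steinerDist G (insert v C) = ((hull hT v C).erase v).card := by
  rw [steinerDist_insert hT v C, card_erase_of_mem (v_mem_hull hT v C)]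

/-- Key per-set inequality: `(|A|−1)·d(A) ≤ Σ_{x∈A} d((A\x)∪{v})` in a tree. -/
lemma key_ineq (hT : G.IsTree) (v : V) {A : Finset V} (hv : v ∉ A) :
    (A.card - 1) * steinerDist G A ≤ ∑ x ∈ A, steinerDist G (insert v (A.erase x)) := by
  classical
  set T : Finset V := (hull hT v A).erase v with hT_def
  set S : V → Finset V := fun x => (hull hT v (A.erase x)).erase v with hS_def
  -- reduce to counting
  have hd : steinerDist G A ≤ T.card := by
    rw [hT_def, card_erase_of_mem (v_mem_hull hT v A)]
    exact steinerDist_le_hull hT (subset_insert _ _)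
  have hterm : ∀ x, steinerDist G (insert v (A.erase x)) = (S x).card := fun x =>
    steinerDist_insert_card hT v (A.erase x)
  -- choice of a witness vertex for each w ∈ T
  have hex : ∀ w : V, ∃ c, w ∈ T → c ∈ A ∧ w ∈ (pth hT c v).support := by
    intro w
    by_cases hw : w ∈ T
    · have hw' := (mem_hull hT v A w).mp (mem_of_mem_erase hw)
      have hwv : w ≠ v := ne_of_mem_erase hw
      rcases hw' with h | ⟨c, hc, hwc⟩
      · exact absurd h hwv
      · exact ⟨c, fun _ => ⟨hc, hwc⟩⟩
    · exact ⟨v, fun h => absurd h hw⟩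
  choose cw hcw using hex
  -- double counting via an injection of sigma finsets
  have hcount : (T.sigma fun w => A.erase (cw w)).card ≤ (A.sigma S).card := by
    apply card_le_card_of_injOn (fun p => ⟨p.2, p.1⟩)
    · rintro ⟨w, x⟩ hp
      simp only [mem_coe, mem_sigma] at hp ⊢
      obtain ⟨hwT, hx⟩ := hp
      refine ⟨mem_of_mem_erase hx, ?_⟩
      obtain ⟨hcwA, hwsupp⟩ := hcw w hwT
      refine mem_erase.mpr ⟨ne_of_mem_erase hwT, ?_⟩
      refine (mem_hull hT v (A.erase x) w).mpr (Or.inr ⟨cw w, ?_, hwsupp⟩)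
      exact mem_erase.mpr ⟨(ne_of_mem_erase hx).symm, hcwA⟩
    · rintro ⟨w, x⟩ _ ⟨w', x'⟩ _ h
      simp only [Sigma.ext_iff, heq_eq_eq] at h ⊢
      exact ⟨h.2, h.1⟩
  have hcards : (T.sigma fun w => A.erase (cw w)).card = T.card * (A.card - 1) := by
    rw [card_sigma]
    have : ∀ w ∈ T, (A.erase (cw w)).card = A.card - 1 := fun w hw =>
      card_erase_of_mem (hcw w hw).1
    rw [sum_congr rfl this, sum_const, smul_eq_mul]
  have hcardt : (A.sigma S).card = ∑ x ∈ A, (S x).card := card_sigma _ _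
  calc (A.card - 1) * steinerDist G A ≤ (A.card - 1) * T.card :=
        Nat.mul_le_mul_left _ hd
    _ = T.card * (A.card - 1) := Nat.mul_comm _ _
    _ ≤ ∑ x ∈ A, (S x).card := by rw [← hcards, ← hcardt]; exact hcount
    _ = ∑ x ∈ A, steinerDist G (insert v (A.erase x)) := by
        exact sum_congr rfl fun x _ => (hterm x).symm

end Stmt19Aux

section Sums

open Finset

variable {V : Type*} [Fintype V] [DecidableEq V] (G : SimpleGraph V)

lemma sum_steinerKDist (k : ℕ) (hk : 1 ≤ k) :
    ∑ w : V, steinerKDist G k w = k * steinerWiener G k := by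
  classical
  unfold steinerKDist steinerWiener
  rw [Finset.sum_sigma' univ
    (fun w => (Finset.powersetCard (k - 1) (univ : Finset V)).filter (fun S => w ∉ S))
    (fun w S => steinerDist G (insert w S))]
  rw [Finset.mul_sum]
  have : ∀ A ∈ Finset.powersetCard k (univ : Finset V),
      k * steinerDist G A = ∑ _x ∈ A, steinerDist G A := by
    intro A hA
    rw [sum_const, smul_eq_mul, (mem_powersetCard.mp hA).2]
  rw [sum_congr rfl this,
    Finset.sum_sigma' (Finset.powersetCard k (univ : Finset V)) (fun A => A)
      (fun A _ => steinerDist G A)]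
  apply Finset.sum_nbij' (fun p => (⟨insert p.1 p.2, p.1⟩ : Σ _ : Finset V, V))
    (fun q => (⟨q.2, q.1.erase q.2⟩ : Σ _ : V, Finset V))
  · rintro ⟨w, S⟩ hp
    rw [mem_sigma, mem_filter, mem_powersetCard] at hp
    rw [mem_sigma, mem_powersetCard]
    refine ⟨⟨subset_univ _, ?_⟩, mem_insert_self _ _⟩
    rw [card_insert_of_notMem hp.2.2, hp.2.1.2]
    omega
  · rintro ⟨A, w⟩ hq
    rw [mem_sigma, mem_powersetCard] at hq
    rw [mem_sigma, mem_filter, mem_powersetCard]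
    refine ⟨mem_univ _, ⟨subset_univ _, ?_⟩, notMem_erase _ _⟩
    rw [card_erase_of_mem hq.2, hq.1.2]
  · rintro ⟨w, S⟩ hp
    rw [mem_sigma, mem_filter] at hp
    rw [erase_insert hp.2.2]
  · rintro ⟨A, w⟩ hq
    rw [mem_sigma] at hq
    simp only [Sigma.ext_iff, heq_eq_eq]
    exact ⟨insert_erase hq.2, trivial⟩
  · rintro ⟨w, S⟩ _
    rfl

lemma steinerWiener_split (k : ℕ) (hk : 1 ≤ k) (v : V) :
    steinerWiener G k = steinerKDist G k v +
      ∑ A ∈ (Finset.powersetCard k (univ : Finset V)).filter (fun A => v ∉ A),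
        steinerDist G A := by
  classical
  unfold steinerWiener steinerKDist
  rw [← Finset.sum_filter_add_sum_filter_not (Finset.powersetCard k (univ : Finset V))
    (fun A => v ∈ A)]
  congr 1
  apply Finset.sum_nbij' (fun A => A.erase v) (fun S => insert v S)
  · intro A hA
    rw [mem_filter, mem_powersetCard] at hA
    rw [mem_filter, mem_powersetCard]
    refine ⟨⟨subset_univ _, ?_⟩, notMem_erase _ _⟩
    rw [card_erase_of_mem hA.2, hA.1.2]
  · intro S hS
    rw [mem_filter, mem_powersetCard] at hS
    rw [mem_filter, mem_powersetCard]
    refine ⟨⟨subset_univ _, ?_⟩, mem_insert_self _ _⟩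
    rw [card_insert_of_notMem hS.2, hS.1.2]
    omega
  · intro A hA
    rw [mem_filter] at hA
    exact insert_erase hA.2
  · intro S hS
    rw [mem_filter] at hS
    exact erase_insert hS.2
  · intro A hA
    rw [mem_filter] at hA
    rw [insert_erase hA.2]

lemma sum_over_missing (k : ℕ) (hk : 1 ≤ k) (v : V) :
    ∑ A ∈ (Finset.powersetCard k (univ : Finset V)).filter (fun A => v ∉ A),
      ∑ x ∈ A, steinerDist G (insert v (A.erase x)) =
    (Fintype.card V - k) * steinerKDist G k v := by
  classical
  rw [Finset.sum_sigma' ((Finset.powersetCard k (univ : Finset V)).filter (fun A => v ∉ A))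
    (fun A => A) (fun A x => steinerDist G (insert v (A.erase x)))]
  unfold steinerKDist
  rw [Finset.mul_sum]
  have : ∀ S ∈ (Finset.powersetCard (k - 1) (univ : Finset V)).filter (fun S => v ∉ S),
      (Fintype.card V - k) * steinerDist G (insert v S) =
        ∑ _x ∈ univ \ insert v S, steinerDist G (insert v S) := by
    intro S hS
    rw [mem_filter, mem_powersetCard] at hS
    rw [sum_const, smul_eq_mul, card_sdiff_of_subset (subset_univ _), card_univ,
      card_insert_of_notMem hS.2, hS.1.2]
    congr 1
    omega
  rw [sum_congr rfl this,
    Finset.sum_sigma' ((Finset.powersetCard (k - 1) (univ : Finset V)).filter (fun S => v ∉ S))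
      (fun S => univ \ insert v S) (fun S _ => steinerDist G (insert v S))]
  apply Finset.sum_nbij' (fun p => (⟨p.1.erase p.2, p.2⟩ : Σ _ : Finset V, V))
    (fun q => (⟨insert q.2 q.1, q.2⟩ : Σ _ : Finset V, V))
  · rintro ⟨A, x⟩ hp
    rw [mem_sigma, mem_filter, mem_powersetCard] at hp
    rw [mem_sigma, mem_filter, mem_powersetCard]
    obtain ⟨⟨⟨_, hAcard⟩, hvA⟩, hxA⟩ := hp
    refine ⟨⟨⟨subset_univ _, ?_⟩, fun hc => hvA (mem_of_mem_erase hc)⟩, ?_⟩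
    · rw [card_erase_of_mem hxA, hAcard]
    · rw [mem_sdiff]
      refine ⟨mem_univ _, fun hc => ?_⟩
      rcases mem_insert.mp hc with h | h
      · exact hvA (h ▸ hxA)
      · exact notMem_erase _ _ h
  · rintro ⟨S, x⟩ hq
    rw [mem_sigma, mem_filter, mem_powersetCard] at hq
    rw [mem_sigma, mem_filter, mem_powersetCard]
    obtain ⟨⟨⟨_, hScard⟩, hvS⟩, hx⟩ := hq
    rw [mem_sdiff, mem_insert] at hx
    push_neg at hx
    obtain ⟨_, hxv, hxS⟩ := hx
    refine ⟨⟨⟨subset_univ _, ?_⟩, ?_⟩, mem_insert_self _ _⟩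
    · rw [card_insert_of_notMem hxS, hScard]; omega
    · rw [mem_insert]
      push_neg
      exact ⟨fun h => hxv h.symm, hvS⟩
  · rintro ⟨A, x⟩ hp
    rw [mem_sigma] at hp
    simp only [Sigma.ext_iff, heq_eq_eq]
    exact ⟨insert_erase hp.2, trivial⟩
  · rintro ⟨S, x⟩ hq
    rw [mem_sigma, mem_sdiff, mem_insert] at hq
    push_neg at hq
    simp only [Sigma.ext_iff, heq_eq_eq]
    exact ⟨erase_insert hq.2.2.2, trivial⟩
  · rintro ⟨A, x⟩ _
    rfl

end Sums

/-- For a Steiner `k`-centroid `v` of a tree on `n` vertices: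
`n/k ≤ SW_k(T)/d_k(v) ≤ (n−1)/(k−1)`, stated in the equivalent product form
`n·d_k(v) ≤ k·SW_k(T)` and `(k−1)·SW_k(T) ≤ (n−1)·d_k(v)`. -/
theorem stmt19 {V : Type*} [Fintype V] [DecidableEq V] (G : SimpleGraph V)
    (hT : G.IsTree) (n k : ℕ) (hn : Fintype.card V = n)
    (hk2 : 2 ≤ k) (hkn : k ≤ n)
    (v : V) (hv : IsSteinerKCentroid G k v) :
    n * steinerKDist G k v ≤ k * steinerWiener G k ∧
      (k - 1) * steinerWiener G k ≤ (n - 1) * steinerKDist G k v := by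
  classical
  have hk1 : 1 ≤ k := by omega
  constructor
  · -- lower bound: from the centroid property and double counting
    rw [← sum_steinerKDist G k hk1]
    have h := Finset.card_nsmul_le_sum Finset.univ (fun w => steinerKDist G k w)
      (steinerKDist G k v) (fun w _ => hv w)
    rw [Finset.card_univ, hn, smul_eq_mul] at h
    exact h
  · -- upper bound: holds for any vertex of a tree
    rw [steinerWiener_split G k hk1 v, Nat.mul_add]
    have hstep : (k - 1) * ∑ A ∈ (Finset.powersetCard k (Finset.univ : Finset V)).filter
        (fun A => v ∉ A), steinerDist G A ≤ (n - k) * steinerKDist G k v := by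
      rw [Finset.mul_sum, ← hn, ← sum_over_missing G k hk1 v]
      apply Finset.sum_le_sum
      intro A hA
      rw [Finset.mem_filter, Finset.mem_powersetCard] at hA
      have := Stmt19Aux.key_ineq hT v hA.2
      rwa [hA.1.2] at this
    calc (k - 1) * steinerKDist G k v + (k - 1) * ∑ A ∈ (Finset.powersetCard k
          (Finset.univ : Finset V)).filter (fun A => v ∉ A), steinerDist G A
        ≤ (k - 1) * steinerKDist G k v + (n - k) * steinerKDist G k v :=
          Nat.add_le_add_left hstep _
      _ = (n - 1) * steinerKDist G k v := by
          rw [← Nat.add_mul]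
          congr 1
          omega
end
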